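/- arXiv:2511.02679 — 5 statements merged into one kernel-verified Lean document; each statement's English description precedes it below -/
import Mathlib

section
/- There exists a universal constant C > 1 with the following property. Let ρ ∈ C_0^∞(ℝ) and f ∈ C^∞(ℝ), and assume there exist r ∈ ℕ and points a₀ = −∞ < a₁ < … < a_{r−1} < a_r = +∞ such that for every j ∈ {1, …, r}, either f''(t) ≥ 0 for all t ∈ (a_{j−1}, a_j) or f''(t) ≤ 0 for all t ∈ (a_{j−1}, a_j). Then for every φ ∈ C_b^∞(ℝ) and every ε > 0, ∫_ℝ φ'(f(t)) ρ(t) dt ≤ C r ε^{−1} ‖φ‖_∞ ‖ρ'‖_{L¹(ℝ)} + ‖φ'‖_∞ ∫_ℝ 1_{{|f'| ≤ 2ε}}(t) |ρ(t)| dt. -/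
open MeasureTheory

noncomputable section

/-- The class `C_b^∞(ℝ)` of bounded smooth functions on `ℝ`
with bounded derivatives of every order. -/
def CbSmooth (φ : ℝ → ℝ) : Prop :=
  ContDiff ℝ (⊤ : ℕ∞) φ ∧ ∀ k : ℕ, ∃ M : ℝ, ∀ t : ℝ, |iteratedDeriv k φ t| ≤ M

/-- The sup norm `‖φ‖_∞ = sup_t |φ(t)|`. -/
def supNorm (φ : ℝ → ℝ) : ℝ := ⨆ t : ℝ, |φ t|

/-! ### Auxiliary material -/

open Set

/-- A fixed smooth cutoff: `0` on `[-1,1]`, `1` outside `(-2,2)`, values in `[0,1]`. -/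
def keyChi : ℝ → ℝ := fun u => Real.smoothTransition (u - 1) + Real.smoothTransition (-u - 1)

lemma keyChi_contDiff : ContDiff ℝ (⊤ : ℕ∞) keyChi := by
  apply ContDiff.add
  · exact Real.smoothTransition.contDiff.comp
      ((contDiff_id.sub contDiff_const : ContDiff ℝ (⊤ : ℕ∞) fun u : ℝ => u - 1))
  · exact Real.smoothTransition.contDiff.comp
      (((contDiff_id.neg).sub contDiff_const : ContDiff ℝ (⊤ : ℕ∞) fun u : ℝ => -u - 1))

lemma keyChi_nonneg (u : ℝ) : 0 ≤ keyChi u :=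
  add_nonneg (Real.smoothTransition.nonneg _) (Real.smoothTransition.nonneg _)

lemma keyChi_le_one (u : ℝ) : keyChi u ≤ 1 := by
  unfold keyChi
  rcases le_total u (-1) with h | h
  · have h1 : Real.smoothTransition (u - 1) = 0 :=
      Real.smoothTransition.zero_of_nonpos (by linarith)
    have h2 := Real.smoothTransition.le_one (-u - 1)
    linarith
  · have h1 : Real.smoothTransition (-u - 1) = 0 :=
      Real.smoothTransition.zero_of_nonpos (by linarith)
    have h2 := Real.smoothTransition.le_one (u - 1)
    linarith

lemma keyChi_eq_zero {u : ℝ} (h : |u| ≤ 1) : keyChi u = 0 := by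
  rw [abs_le] at h
  unfold keyChi
  rw [Real.smoothTransition.zero_of_nonpos (by linarith),
    Real.smoothTransition.zero_of_nonpos (by linarith), add_zero]

lemma keyChi_eq_one {u : ℝ} (h : 2 ≤ |u|) : keyChi u = 1 := by
  unfold keyChi
  rcases le_or_gt 2 u with h1 | h1
  · rw [Real.smoothTransition.one_of_one_le (by linarith),
      Real.smoothTransition.zero_of_nonpos (by linarith), add_zero]
  · have h2 : u ≤ -2 := by
      rcases abs_cases u with ⟨he, h0⟩ | ⟨he, h0⟩ <;> rw [he] at h <;> linarith
    rw [Real.smoothTransition.zero_of_nonpos (by linarith),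
      Real.smoothTransition.one_of_one_le (by linarith), zero_add]

lemma keyChi_deriv_eq_zero {u : ℝ} (h : 2 < |u|) : deriv keyChi u = 0 := by
  have hop : IsOpen {v : ℝ | 2 < |v|} := isOpen_lt continuous_const continuous_abs
  have heq : keyChi =ᶠ[nhds u] fun _ => (1 : ℝ) := by
    filter_upwards [hop.mem_nhds h] with v hv
    exact keyChi_eq_one (le_of_lt hv)
  rw [heq.deriv_eq, deriv_const]

lemma keyChi_deriv_bound : ∃ M : ℝ, 0 ≤ M ∧ ∀ u : ℝ, |deriv keyChi u| ≤ M := by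
  have hcont : Continuous (deriv keyChi) := keyChi_contDiff.continuous_deriv (by exact_mod_cast le_top)
  obtain ⟨M, hM⟩ := (isCompact_Icc (a := (-2 : ℝ)) (b := 2)).exists_bound_of_continuousOn
    hcont.continuousOn
  refine ⟨max M 0, le_max_right _ _, fun u => ?_⟩
  rcases le_or_gt |u| 2 with h | h
  · have := hM u (abs_le.mp h)
    rw [Real.norm_eq_abs] at this
    exact this.trans (le_max_left _ _)
  · rw [keyChi_deriv_eq_zero h, abs_zero]
    exact le_max_right _ _

/-- Integration by parts on the line for compactly supported `C¹` functions. -/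
lemma key_ibp (P : ℝ → ℝ) (h1 : Differentiable ℝ P) (h2 : Continuous (deriv P))
    (h3 : HasCompactSupport P) : ∫ t : ℝ, deriv P t = 0 := by
  have hint : Integrable (deriv P) := h2.integrable_of_hasCompactSupport h3.deriv
  have htend := intervalIntegral_tendsto_integral (μ := volume) hint
    (Filter.tendsto_neg_atTop_atBot.comp tendsto_natCast_atTop_atTop)
    (tendsto_natCast_atTop_atTop (R := ℝ))
  obtain ⟨R, hR⟩ := h3.isBounded.subset_closedBall 0
  have hzero : ∀ x : ℝ, R < |x| → P x = 0 := by
    intro x hx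
    apply image_eq_zero_of_notMem_tsupport
    intro hmem
    have := hR hmem
    rw [Metric.mem_closedBall, Real.dist_eq, sub_zero] at this
    linarith
  have hval : ∀ᶠ n : ℕ in Filter.atTop, (∫ x in (-(n : ℝ))..(n : ℝ), deriv P x) = 0 := by
    filter_upwards [Filter.eventually_ge_atTop (⌈R⌉₊ + 1)] with n hn
    have hnR : R < (n : ℝ) := by
      have h1 : R ≤ (⌈R⌉₊ : ℝ) := Nat.le_ceil R
      have h2 : ((⌈R⌉₊ + 1 : ℕ) : ℝ) ≤ (n : ℝ) := Nat.cast_le.mpr hn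
      push_cast at h2
      linarith
    rw [intervalIntegral.integral_deriv_eq_sub (fun x _ => h1 x)
      (h2.intervalIntegrable _ _)]
    rw [hzero n (by rw [abs_of_nonneg (Nat.cast_nonneg n)]; exact hnR),
      hzero (-(n : ℝ)) (by rw [abs_neg, abs_of_nonneg (Nat.cast_nonneg n)]; exact hnR), sub_zero]
  have : Filter.Tendsto (fun n : ℕ => ∫ x in (-(n : ℝ))..(n : ℝ), deriv P x)
      Filter.atTop (nhds 0) := by
    rw [Filter.tendsto_congr' hval]
    exact tendsto_const_nhds
  exact tendsto_nhds_unique htend this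

/-- A compactly supported `C¹` function is bounded by the `L¹` norm of its derivative. -/
lemma key_sup_bound (ρ : ℝ → ℝ) (h1 : Differentiable ℝ ρ) (h2 : Continuous (deriv ρ))
    (h3 : HasCompactSupport ρ) (t : ℝ) : |ρ t| ≤ ∫ s : ℝ, |deriv ρ s| := by
  have hint : Integrable (deriv ρ) := h2.integrable_of_hasCompactSupport h3.deriv
  obtain ⟨R, hR⟩ := h3.isBounded.subset_closedBall 0
  set c : ℝ := min (-(|R| + 1)) t with hc
  have hct : c ≤ t := min_le_right _ _
  have hcz : ρ c = 0 := by
    apply image_eq_zero_of_notMem_tsupport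
    intro hmem
    have h1 := hR hmem
    rw [Metric.mem_closedBall, Real.dist_eq, sub_zero] at h1
    have h2 : c ≤ -(|R| + 1) := min_le_left _ _
    have h3 : R ≤ |R| := le_abs_self R
    have h5 := abs_le.mp h1
    linarith [h5.1, h5.2]
  have hftc : ∫ s in c..t, deriv ρ s = ρ t - ρ c :=
    intervalIntegral.integral_deriv_eq_sub (fun x _ => h1 x) (h2.intervalIntegrable _ _)
  have h5 : |ρ t| = |∫ s in c..t, deriv ρ s| := by rw [hftc, hcz, sub_zero]
  rw [h5]
  calc |∫ s in c..t, deriv ρ s| ≤ ∫ s in c..t, |deriv ρ s| :=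
        intervalIntegral.abs_integral_le_integral_abs hct
    _ = ∫ s in Set.Ioc c t, |deriv ρ s| := intervalIntegral.integral_of_le hct
    _ ≤ ∫ s : ℝ, |deriv ρ s| :=
        setIntegral_le_integral hint.abs (Filter.Eventually.of_forall fun s => abs_nonneg _)

lemma key_meas (A B : EReal) :
    MeasurableSet {t : ℝ | A < (t : EReal) ∧ (t : EReal) < B} := by
  have h1 : Measurable (fun t : ℝ => (t : EReal)) := continuous_coe_real_ereal.measurable
  exact (h1 measurableSet_Ioi).inter (h1 measurableSet_Iio)

/-- Exhaustion of an interval with `EReal` endpoints by closed-open bounded intervals. -/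
lemma key_exhaust (A B : EReal) (hAB : A < B) :
    ∃ x y : ℕ → ℝ, Antitone x ∧ Monotone y ∧
      (∀ n, (A < (x n : EReal) ∧ (x n : EReal) < B) ∧
        (A < (y n : EReal) ∧ (y n : EReal) < B)) ∧
      (⋃ n, Set.Ioc (x n) (y n)) = {t : ℝ | A < (t : EReal) ∧ (t : EReal) < B} := by
  induction A using EReal.rec with
  | top => exact absurd hAB (not_lt.mpr le_top)
  | bot =>
    induction B using EReal.rec with
    | bot => exact absurd hAB (lt_irrefl _)
    | top =>
      refine ⟨fun n => -(n : ℝ), fun n => (n : ℝ), ?_, ?_, ?_, ?_⟩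
      · exact fun n m h => neg_le_neg (Nat.cast_le.mpr h)
      · exact fun n m h => Nat.cast_le.mpr h
      · intro n
        exact ⟨⟨EReal.bot_lt_coe _, EReal.coe_lt_top _⟩, ⟨EReal.bot_lt_coe _, EReal.coe_lt_top _⟩⟩
      · ext t
        simp only [Set.mem_iUnion, Set.mem_Ioc, Set.mem_setOf_eq]
        constructor
        · intro _; exact ⟨EReal.bot_lt_coe _, EReal.coe_lt_top _⟩
        · intro _
          refine ⟨⌈|t|⌉₊ + 1, ?_, ?_⟩
          · have h1 : |t| ≤ (⌈|t|⌉₊ : ℝ) := Nat.le_ceil _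
            have h2 := neg_abs_le t
            push_cast
            linarith
          · have h1 : |t| ≤ (⌈|t|⌉₊ : ℝ) := Nat.le_ceil _
            have h2 := le_abs_self t
            push_cast
            linarith
    | coe bb =>
      refine ⟨fun n => bb - 1 - (n : ℝ), fun n => bb - 1 / ((n : ℝ) + 1), ?_, ?_, ?_, ?_⟩
      · intro n m h
        have : (n : ℝ) ≤ m := Nat.cast_le.mpr h
        dsimp; linarith
      · intro n m h
        have h1 : (0 : ℝ) < (n : ℝ) + 1 := by positivity
        have h2 : ((n : ℝ) + 1) ≤ ((m : ℝ) + 1) := by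
          have : (n : ℝ) ≤ m := Nat.cast_le.mpr h
          linarith
        have := one_div_le_one_div_of_le h1 h2
        dsimp; linarith
      · intro n
        have h1 : bb - 1 - (n : ℝ) < bb := by
          have : (0 : ℝ) ≤ n := Nat.cast_nonneg n
          linarith
        have h2 : bb - 1 / ((n : ℝ) + 1) < bb := by
          have : (0 : ℝ) < 1 / ((n : ℝ) + 1) := by positivity
          linarith
        exact ⟨⟨EReal.bot_lt_coe _, EReal.coe_lt_coe_iff.mpr h1⟩,
          ⟨EReal.bot_lt_coe _, EReal.coe_lt_coe_iff.mpr h2⟩⟩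
      · ext t
        simp only [Set.mem_iUnion, Set.mem_Ioc, Set.mem_setOf_eq]
        constructor
        · rintro ⟨n, h1, h2⟩
          refine ⟨EReal.bot_lt_coe _, ?_⟩
          have : (0 : ℝ) < 1 / ((n : ℝ) + 1) := by positivity
          exact EReal.coe_lt_coe_iff.mpr (by linarith)
        · rintro ⟨-, ht⟩
          have ht' : t < bb := EReal.coe_lt_coe_iff.mp ht
          obtain ⟨n1, hn1⟩ := exists_nat_gt (bb - 1 - t)
          obtain ⟨n2, hn2⟩ := exists_nat_one_div_lt (show (0 : ℝ) < bb - t by linarith)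
          refine ⟨n1 + n2, ?_, ?_⟩
          · have : (n1 : ℝ) ≤ (n1 + n2 : ℕ) := Nat.cast_le.mpr (Nat.le_add_right _ _)
            push_cast at this ⊢
            linarith
          · have h3 : (1 : ℝ) / ((n1 + n2 : ℕ) + 1) ≤ 1 / ((n2 : ℝ) + 1) := by
              apply one_div_le_one_div_of_le (by positivity)
              have : (n2 : ℝ) ≤ (n1 + n2 : ℕ) := Nat.cast_le.mpr (Nat.le_add_left _ _)
              linarith
            push_cast at h3 ⊢
            linarith
  | coe aa =>
    induction B using EReal.rec with
    | bot => exact absurd hAB (not_lt.mpr bot_le)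
    | top =>
      refine ⟨fun n => aa + 1 / ((n : ℝ) + 1), fun n => aa + 1 + (n : ℝ), ?_, ?_, ?_, ?_⟩
      · intro n m h
        have h1 : (0 : ℝ) < (n : ℝ) + 1 := by positivity
        have h2 : ((n : ℝ) + 1) ≤ ((m : ℝ) + 1) := by
          have : (n : ℝ) ≤ m := Nat.cast_le.mpr h
          linarith
        have := one_div_le_one_div_of_le h1 h2
        dsimp; linarith
      · intro n m h
        have : (n : ℝ) ≤ m := Nat.cast_le.mpr h
        dsimp; linarith
      · intro n
        have h1 : aa < aa + 1 / ((n : ℝ) + 1) := by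
          have : (0 : ℝ) < 1 / ((n : ℝ) + 1) := by positivity
          linarith
        have h2 : aa < aa + 1 + (n : ℝ) := by
          have : (0 : ℝ) ≤ n := Nat.cast_nonneg n
          linarith
        exact ⟨⟨EReal.coe_lt_coe_iff.mpr h1, EReal.coe_lt_top _⟩,
          ⟨EReal.coe_lt_coe_iff.mpr h2, EReal.coe_lt_top _⟩⟩
      · ext t
        simp only [Set.mem_iUnion, Set.mem_Ioc, Set.mem_setOf_eq]
        constructor
        · rintro ⟨n, h1, h2⟩
          refine ⟨?_, EReal.coe_lt_top _⟩
          have : (0 : ℝ) < 1 / ((n : ℝ) + 1) := by positivity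
          exact EReal.coe_lt_coe_iff.mpr (by linarith)
        · rintro ⟨ht, -⟩
          have ht' : aa < t := EReal.coe_lt_coe_iff.mp ht
          obtain ⟨n1, hn1⟩ := exists_nat_one_div_lt (show (0 : ℝ) < t - aa by linarith)
          obtain ⟨n2, hn2⟩ := exists_nat_gt (t - aa - 1)
          refine ⟨n1 + n2, ?_, ?_⟩
          · have h3 : (1 : ℝ) / ((n1 + n2 : ℕ) + 1) ≤ 1 / ((n1 : ℝ) + 1) := by
              apply one_div_le_one_div_of_le (by positivity)
              have : (n1 : ℝ) ≤ (n1 + n2 : ℕ) := Nat.cast_le.mpr (Nat.le_add_right _ _)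
              linarith
            push_cast at h3 ⊢
            linarith
          · have : (n2 : ℝ) ≤ (n1 + n2 : ℕ) := Nat.cast_le.mpr (Nat.le_add_left _ _)
            push_cast at this ⊢
            linarith
    | coe bb =>
      have hab : aa < bb := EReal.coe_lt_coe_iff.mp hAB
      refine ⟨fun n => aa + (bb - aa) / ((n : ℝ) + 2), fun n => bb - (bb - aa) / ((n : ℝ) + 2),
        ?_, ?_, ?_, ?_⟩
      · intro n m h
        have h2 : ((n : ℝ) + 2) ≤ ((m : ℝ) + 2) := by
          have : (n : ℝ) ≤ m := Nat.cast_le.mpr h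
          linarith
        have := div_le_div_of_nonneg_left (by linarith : (0:ℝ) ≤ bb - aa) (by positivity) h2
        dsimp; linarith [div_le_div_of_nonneg_left (by linarith : (0:ℝ) ≤ bb - aa) (show (0:ℝ) < (n:ℝ)+2 by positivity) h2]
      · intro n m h
        have h2 : ((n : ℝ) + 2) ≤ ((m : ℝ) + 2) := by
          have : (n : ℝ) ≤ m := Nat.cast_le.mpr h
          linarith
        dsimp; linarith [div_le_div_of_nonneg_left (by linarith : (0:ℝ) ≤ bb - aa) (show (0:ℝ) < (n:ℝ)+2 by positivity) h2]
      · intro n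
        have hp : (0 : ℝ) < (bb - aa) / ((n : ℝ) + 2) := by
          apply div_pos (by linarith) (by positivity)
        have hlt : (bb - aa) / ((n : ℝ) + 2) < bb - aa := by
          apply div_lt_self (by linarith)
          have : (0 : ℝ) ≤ n := Nat.cast_nonneg n
          linarith
        exact ⟨⟨EReal.coe_lt_coe_iff.mpr (by linarith), EReal.coe_lt_coe_iff.mpr (by linarith)⟩,
          ⟨EReal.coe_lt_coe_iff.mpr (by linarith), EReal.coe_lt_coe_iff.mpr (by linarith)⟩⟩
      · ext t
        simp only [Set.mem_iUnion, Set.mem_Ioc, Set.mem_setOf_eq]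
        constructor
        · rintro ⟨n, h1, h2⟩
          have hp : (0 : ℝ) < (bb - aa) / ((n : ℝ) + 2) := by
            apply div_pos (by linarith) (by positivity)
          exact ⟨EReal.coe_lt_coe_iff.mpr (by linarith), EReal.coe_lt_coe_iff.mpr (by linarith)⟩
        · rintro ⟨h1, h2⟩
          have h1' : aa < t := EReal.coe_lt_coe_iff.mp h1
          have h2' : t < bb := EReal.coe_lt_coe_iff.mp h2
          obtain ⟨n1, hn1⟩ := exists_nat_gt ((bb - aa) / (t - aa))
          obtain ⟨n2, hn2⟩ := exists_nat_gt ((bb - aa) / (bb - t))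
          have hkey : ∀ n : ℕ, (bb - aa) / (t - aa) < (n : ℝ) + 2 →
              aa + (bb - aa) / ((n : ℝ) + 2) < t := by
            intro n hn
            have hta : (0 : ℝ) < t - aa := by linarith
            have hn2' : (0 : ℝ) < (n : ℝ) + 2 := by positivity
            rw [div_lt_iff₀ hta] at hn
            have hgoal : (bb - aa) / ((n : ℝ) + 2) < t - aa := by
              rw [div_lt_iff₀ hn2']
              nlinarith
            linarith
          have hkey2 : ∀ n : ℕ, (bb - aa) / (bb - t) < (n : ℝ) + 2 →
              t ≤ bb - (bb - aa) / ((n : ℝ) + 2) := by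
            intro n hn
            have htb : (0 : ℝ) < bb - t := by linarith
            have hn2' : (0 : ℝ) < (n : ℝ) + 2 := by positivity
            rw [div_lt_iff₀ htb] at hn
            have hgoal : (bb - aa) / ((n : ℝ) + 2) ≤ bb - t := by
              rw [div_le_iff₀ hn2']
              nlinarith
            linarith
          refine ⟨n1 + n2, ?_, ?_⟩
          · apply hkey
            have : (n1 : ℝ) ≤ (n1 + n2 : ℕ) := Nat.cast_le.mpr (Nat.le_add_right _ _)
            push_cast at this ⊢
            linarith
          · apply hkey2
            have : (n2 : ℝ) ≤ (n1 + n2 : ℕ) := Nat.cast_le.mpr (Nat.le_add_left _ _)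
            push_cast at this ⊢
            linarith

/-- If `u` is a nonnegative integrable function vanishing outside the interval
`(A, B)` and dominated there by the continuous derivative of `h`, whose oscillation
is at most `C`, then `∫ u ≤ C`. -/
lemma key_lemA (A B : EReal) (hAB : A < B) (u h h' : ℝ → ℝ) (C : ℝ) (hC : 0 ≤ C)
    (hui : Integrable u) (hu0 : ∀ t, 0 ≤ u t)
    (huz : ∀ t : ℝ, ¬(A < (t : EReal) ∧ (t : EReal) < B) → u t = 0)
    (hd : ∀ t : ℝ, HasDerivAt h (h' t) t)
    (hcont : Continuous h')
    (hle : ∀ t : ℝ, A < (t : EReal) → (t : EReal) < B → u t ≤ h' t)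
    (hosc : ∀ x y : ℝ, h y - h x ≤ C) :
    ∫ t : ℝ, u t ≤ C := by
  obtain ⟨x, y, hx, hy, hmem, hU⟩ := key_exhaust A B hAB
  have hSm : MeasurableSet {t : ℝ | A < (t : EReal) ∧ (t : EReal) < B} := key_meas A B
  have huind : u = Set.indicator {t : ℝ | A < (t : EReal) ∧ (t : EReal) < B} u := by
    funext t
    by_cases ht : A < (t : EReal) ∧ (t : EReal) < B
    · exact (Set.indicator_of_mem (show t ∈ {t : ℝ | A < (t : EReal) ∧ (t : EReal) < B} from ht) u).symm
    · rw [Set.indicator_of_notMem (show t ∉ {t : ℝ | A < (t : EReal) ∧ (t : EReal) < B} from ht), huz t ht]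
  have key : ∀ n, ∫ t in Set.Ioc (x n) (y n), u t ≤ C := by
    intro n
    rcases le_or_gt (x n) (y n) with hxy | hxy
    · have hsub : Set.Ioc (x n) (y n) ⊆ {t : ℝ | A < (t : EReal) ∧ (t : EReal) < B} := by
        intro t ht
        refine ⟨lt_of_lt_of_le (hmem n).1.1 ?_, lt_of_le_of_lt ?_ (hmem n).2.2⟩
        · exact_mod_cast EReal.coe_le_coe_iff.mpr ht.1.le
        · exact_mod_cast EReal.coe_le_coe_iff.mpr ht.2
      have h1 : ∫ t in Set.Ioc (x n) (y n), u t ≤ ∫ t in Set.Ioc (x n) (y n), h' t := by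
        apply setIntegral_mono_on hui.integrableOn
          ((hcont.integrableOn_Icc).mono_set Set.Ioc_subset_Icc_self) measurableSet_Ioc
        intro t ht
        exact hle t (hsub ht).1 (hsub ht).2
      have h2 : ∫ t in Set.Ioc (x n) (y n), h' t = h (y n) - h (x n) := by
        rw [← intervalIntegral.integral_of_le hxy]
        exact intervalIntegral.integral_eq_sub_of_hasDerivAt (fun t _ => hd t)
          (hcont.intervalIntegrable _ _)
      rw [h2] at h1
      exact h1.trans (hosc _ _)
    · rw [Set.Ioc_eq_empty (not_lt.mpr hxy.le)]
      simp [hC]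
  have hmonoS : Monotone (fun n => Set.Ioc (x n) (y n)) :=
    fun n m hnm => Set.Ioc_subset_Ioc (hx hnm) (hy hnm)
  have htend := tendsto_setIntegral_of_monotone (fun n => measurableSet_Ioc) hmonoS
    hui.integrableOn
  have heq : ∫ t in (⋃ n, Set.Ioc (x n) (y n)), u t = ∫ t : ℝ, u t := by
    rw [hU, ← integral_indicator hSm, ← huind]
  rw [← heq]
  exact le_of_tendsto htend (Filter.Eventually.of_forall key)

lemma key_cover (r : ℕ) (hr : 0 < r) (a : Fin (r + 1) → EReal) (ha0 : a 0 = ⊥)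
    (hal : a (Fin.last r) = ⊤) (hmono : StrictMono a) (t : ℝ)
    (ht : ∀ i, (t : EReal) ≠ a i) :
    ∃ j : Fin r, a j.castSucc < (t : EReal) ∧ (t : EReal) < a j.succ := by
  classical
  have h0 : a 0 < (t : EReal) := by rw [ha0]; exact EReal.bot_lt_coe t
  set T : Finset (Fin (r + 1)) := Finset.univ.filter (fun i => a i < (t : EReal)) with hT
  have hTne : T.Nonempty := ⟨0, by simp [hT, h0]⟩
  set k := T.max' hTne with hk
  have hkmem : a k < (t : EReal) := by
    have h1 : k ∈ T := T.max'_mem hTne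
    rw [hT, Finset.mem_filter] at h1
    exact h1.2
  have hkl : k ≠ Fin.last r := by
    intro h
    rw [h, hal] at hkmem
    exact absurd hkmem (not_top_lt)
  refine ⟨k.castPred hkl, ?_, ?_⟩
  · rw [Fin.castSucc_castPred]
    exact hkmem
  · rcases lt_or_ge (a (k.castPred hkl).succ) (t : EReal) with hlt | hle
    · exfalso
      have hmem : (k.castPred hkl).succ ∈ T := by
        rw [hT, Finset.mem_filter]
        exact ⟨Finset.mem_univ _, hlt⟩
      have h1 : (k.castPred hkl).succ ≤ k := Finset.le_max' T _ hmem
      have h2 : (k.castPred hkl).castSucc < (k.castPred hkl).succ := Fin.castSucc_lt_succ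
      rw [Fin.castSucc_castPred] at h2
      exact absurd (h2.trans_le h1) (lt_irrefl k)
    · exact lt_of_le_of_ne hle (ht _)

/-- The core "total variation" estimate, interval by interval. -/
lemma key_B3 (r : ℕ) (hr : 0 < r) (a : Fin (r + 1) → EReal) (ha0 : a 0 = ⊥)
    (hal : a (Fin.last r) = ⊤) (hmono : StrictMono a) (b dd : ℝ → ℝ)
    (hbd : ∀ t, HasDerivAt b (dd t) t) (hddc : Continuous dd)
    (hsign : ∀ j : Fin r,
      (∀ t : ℝ, a j.castSucc < (t : EReal) → (t : EReal) < a j.succ → 0 ≤ dd t) ∨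
      (∀ t : ℝ, a j.castSucc < (t : EReal) → (t : EReal) < a j.succ → dd t ≤ 0))
    (q : ℝ → ℝ) (hq : Integrable q)
    (G dg : ℝ → ℝ) (hG : ∀ s, HasDerivAt G (|dg s|) s) (hdgc : Continuous dg)
    (V : ℝ) (hGb : ∀ s, |G s| ≤ V)
    (c : ℝ) (hc : 0 ≤ c)
    (hqb : ∀ t, |q t| ≤ c * (|dg (b t)| * |dd t|)) :
    ∫ t : ℝ, |q t| ≤ (r : ℝ) * (2 * (c * V)) := by
  classical
  have hbdiff : Differentiable ℝ b := fun t => (hbd t).differentiableAt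
  have hbc : Continuous b := hbdiff.continuous
  have hV0 : 0 ≤ V := (abs_nonneg _).trans (hGb 0)
  set S : Fin r → Set ℝ :=
    fun j => {t : ℝ | a j.castSucc < (t : EReal) ∧ (t : EReal) < a j.succ} with hS
  set u : Fin r → ℝ → ℝ := fun j => (S j).indicator (fun t => |q t|) with hu
  have hSmeas : ∀ j, MeasurableSet (S j) := fun j => key_meas _ _
  have hui : ∀ j, Integrable (u j) := fun j => (hq.abs).indicator (hSmeas j)
  have hu0 : ∀ j t, 0 ≤ u j t := fun j t =>
    Set.indicator_nonneg (fun s _ => abs_nonneg _) t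
  -- the exceptional null set
  have hN : volume {t : ℝ | ∃ i, (t : EReal) = a i} = 0 := by
    have hsub : {t : ℝ | ∃ i, (t : EReal) = a i} ⊆
        ⋃ i : Fin (r + 1), {t : ℝ | (t : EReal) = a i} := by
      rintro t ⟨i, hi⟩
      refine Set.mem_iUnion.mpr ⟨i, ?_⟩
      exact hi
    refine measure_mono_null hsub (measure_iUnion_null fun i => ?_)
    apply Set.Subsingleton.measure_zero
    intro s hs s' hs'
    have : (s : EReal) = (s' : EReal) := by
      rw [Set.mem_setOf_eq] at hs hs'
      rw [hs, hs']
    exact_mod_cast this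
  have hptwise : ∀ᵐ t : ℝ, |q t| ≤ ∑ j, u j t := by
    rw [MeasureTheory.ae_iff]
    apply measure_mono_null _ hN
    intro t hmem
    rw [Set.mem_setOf_eq, not_le] at hmem
    by_contra hcon
    rw [Set.mem_setOf_eq] at hcon
    push_neg at hcon
    obtain ⟨j, hj1, hj2⟩ := key_cover r hr a ha0 hal hmono t hcon
    have h1 : u j t = |q t| := Set.indicator_of_mem (show t ∈ S j from ⟨hj1, hj2⟩) _
    have h2 : u j t ≤ ∑ i, u i t :=
      Finset.single_le_sum (fun i _ => hu0 i t) (Finset.mem_univ j)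
    rw [h1] at h2
    exact absurd h2 (not_le.mpr hmem)
  have h1 : ∫ t : ℝ, |q t| ≤ ∫ t : ℝ, ∑ j, u j t :=
    integral_mono_ae hq.abs (integrable_finset_sum _ fun j _ => hui j) hptwise
  rw [integral_finset_sum _ fun j _ => hui j] at h1
  have h2 : ∀ j : Fin r, ∫ t : ℝ, u j t ≤ 2 * (c * V) := by
    intro j
    have hAB : a j.castSucc < a j.succ := hmono (Fin.castSucc_lt_succ (i := j))
    have hosc : ∀ (sgn : ℝ), |sgn| = 1 → ∀ x y : ℝ,
        sgn * (c * G (b y)) - sgn * (c * G (b x)) ≤ 2 * (c * V) := by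
      intro sgn hsgn x y
      have hx' : |c * G (b x)| ≤ c * V := by
        rw [abs_mul, abs_of_nonneg hc]
        exact mul_le_mul_of_nonneg_left (hGb _) hc
      have hy' : |c * G (b y)| ≤ c * V := by
        rw [abs_mul, abs_of_nonneg hc]
        exact mul_le_mul_of_nonneg_left (hGb _) hc
      have e1 : |sgn * (c * G (b y))| ≤ c * V := by rw [abs_mul, hsgn, one_mul]; exact hy'
      have e2 : |sgn * (c * G (b x))| ≤ c * V := by rw [abs_mul, hsgn, one_mul]; exact hx'
      have := abs_le.mp e1
      have := abs_le.mp e2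
      linarith [(abs_le.mp e1).2, (abs_le.mp e2).1]
    rcases hsign j with hpos | hneg
    · apply key_lemA (a j.castSucc) (a j.succ) hAB (u j)
        (fun t => c * G (b t)) (fun t => c * (|dg (b t)| * dd t)) _
        (by positivity) (hui j) (hu0 j)
        (fun t ht => Set.indicator_of_notMem (show t ∉ S j from ht) _)
        (fun t => (((hG (b t)).comp t (hbd t)).const_mul c))
        (continuous_const.mul (((hdgc.comp hbc).abs).mul hddc))
        ?_ ?_
      · intro t ht1 ht2
        show (S j).indicator (fun s => |q s|) t ≤ _
        rw [Set.indicator_of_mem (show t ∈ S j from ⟨ht1, ht2⟩)]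
        calc |q t| ≤ c * (|dg (b t)| * |dd t|) := hqb t
          _ = c * (|dg (b t)| * dd t) := by rw [abs_of_nonneg (hpos t ht1 ht2)]
      · intro x y
        have := hosc 1 (by norm_num) x y
        simpa using this
    · apply key_lemA (a j.castSucc) (a j.succ) hAB (u j)
        (fun t => -(c * G (b t))) (fun t => -(c * (|dg (b t)| * dd t))) _
        (by positivity) (hui j) (hu0 j)
        (fun t ht => Set.indicator_of_notMem (show t ∉ S j from ht) _)
        (fun t => (((hG (b t)).comp t (hbd t)).const_mul c).neg)
        ((continuous_const.mul (((hdgc.comp hbc).abs).mul hddc)).neg)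
        ?_ ?_
      · intro t ht1 ht2
        show (S j).indicator (fun s => |q s|) t ≤ _
        rw [Set.indicator_of_mem (show t ∈ S j from ⟨ht1, ht2⟩)]
        calc |q t| ≤ c * (|dg (b t)| * |dd t|) := hqb t
          _ = -(c * (|dg (b t)| * dd t)) := by
            rw [abs_of_nonpos (hneg t ht1 ht2)]; ring
      · intro x y
        have := hosc (-1) (by norm_num) x y
        simpa using this
  calc ∫ t : ℝ, |q t| ≤ ∑ j : Fin r, ∫ t : ℝ, u j t := h1
    _ ≤ ∑ _j : Fin r, 2 * (c * V) := Finset.sum_le_sum fun j _ => h2 j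
    _ = (r : ℝ) * (2 * (c * V)) := by
      rw [Finset.sum_const, Finset.card_univ, Fintype.card_fin, nsmul_eq_mul]

set_option maxHeartbeats 2000000 in
/-- **Key one-dimensional lemma.**  There is a universal constant `C > 1` such that:
if `ρ ∈ C_0^∞(ℝ)`, `f ∈ C^∞(ℝ)`, and there are points
`a₀ = -∞ < a₁ < … < a_{r-1} < a_r = +∞` such that on each interval `(a_{j-1}, a_j)`
the second derivative `f''` has a constant sign, then for every `φ ∈ C_b^∞(ℝ)` and
every `ε > 0`,
`∫ φ'(f(t)) ρ(t) dt ≤ C r ε⁻¹ ‖φ‖_∞ ‖ρ'‖_{L¹} + ‖φ'‖_∞ ∫_{|f'| ≤ 2ε} |ρ(t)| dt`. -/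
theorem key_lemma :
    ∃ C : ℝ, 1 < C ∧ ∀ (ρ f : ℝ → ℝ),
      ContDiff ℝ (⊤ : ℕ∞) ρ → HasCompactSupport ρ → ContDiff ℝ (⊤ : ℕ∞) f →
      ∀ (r : ℕ), 0 < r → ∀ a : Fin (r + 1) → EReal,
        a 0 = ⊥ → a (Fin.last r) = ⊤ → StrictMono a →
        (∀ j : Fin r,
          (∀ t : ℝ, a j.castSucc < (t : EReal) → (t : EReal) < a j.succ →
            0 ≤ iteratedDeriv 2 f t) ∨
          (∀ t : ℝ, a j.castSucc < (t : EReal) → (t : EReal) < a j.succ →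
            iteratedDeriv 2 f t ≤ 0)) →
      ∀ φ : ℝ → ℝ, CbSmooth φ → ∀ ε : ℝ, 0 < ε →
        (∫ t : ℝ, deriv φ (f t) * ρ t) ≤
          C * r * ε⁻¹ * supNorm φ * (∫ t : ℝ, |deriv ρ t|) +
          supNorm (deriv φ) * ∫ t in {t : ℝ | |deriv f t| ≤ 2 * ε}, |ρ t| := by
  obtain ⟨Mx, hMx0, hMx⟩ := keyChi_deriv_bound
  refine ⟨8 * Mx + 5, by linarith, ?_⟩
  intro ρ f hρω hρs hfω r hr a ha0 hal hamono hsign φ hφ ε hε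
  have hρ : ContDiff ℝ (⊤ : ℕ∞) ρ := hρω.of_le (by simp)
  have hf : ContDiff ℝ (⊤ : ℕ∞) f := hfω.of_le (by simp)
  have hφC : ContDiff ℝ (⊤ : ℕ∞) φ := hφ.1.of_le (by simp)
  have hone : (1 : WithTop ℕ∞) ≤ ((⊤ : ℕ∞) : WithTop ℕ∞) := by exact_mod_cast le_top
  -- derivatives of f
  set b := deriv f with hbdef
  have hbC : ContDiff ℝ (⊤ : ℕ∞) b := (contDiff_infty_iff_deriv.mp hf).2
  set dd := deriv b with hdddef
  have hfd : Differentiable ℝ f := hf.differentiable (by simp)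
  have hbdiff : Differentiable ℝ b := hbC.differentiable (by simp)
  have hbd : ∀ t, HasDerivAt b (dd t) t := fun t => (hbdiff t).hasDerivAt
  have hddc : Continuous dd := hbC.continuous_deriv hone
  have hbc : Continuous b := hbC.continuous
  have hfd' : ∀ t, HasDerivAt f (b t) t := fun t => (hfd t).hasDerivAt
  have h2f : iteratedDeriv 2 f = dd := by
    have : (2 : ℕ) = 1 + 1 := rfl
    rw [this, iteratedDeriv_succ, iteratedDeriv_one]
  simp only [h2f] at hsign
  -- facts about φ
  have hφd : Differentiable ℝ φ := hφC.differentiable (by simp)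
  have hφ'c : Continuous (deriv φ) := hφC.continuous_deriv hone
  obtain ⟨M0, hM0⟩ := hφ.2 0
  simp only [iteratedDeriv_zero] at hM0
  obtain ⟨M1, hM1⟩ := hφ.2 1
  simp only [iteratedDeriv_one] at hM1
  have hsupφ : ∀ s, |φ s| ≤ supNorm φ := fun s =>
    le_ciSup ⟨M0, by rintro _ ⟨t, rfl⟩; exact hM0 t⟩ s
  have hsupφ' : ∀ s, |deriv φ s| ≤ supNorm (deriv φ) := fun s =>
    le_ciSup ⟨M1, by rintro _ ⟨t, rfl⟩; exact hM1 t⟩ s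
  have hK10 : 0 ≤ supNorm φ := (abs_nonneg _).trans (hsupφ 0)
  have hK1'0 : 0 ≤ supNorm (deriv φ) := (abs_nonneg _).trans (hsupφ' 0)
  -- facts about ρ
  have hρdiff : Differentiable ℝ ρ := hρ.differentiable (by simp)
  have hρc : Continuous ρ := hρ.continuous
  have hρ'c : Continuous (deriv ρ) := hρ.continuous_deriv hone
  have hρint : Integrable ρ := hρc.integrable_of_hasCompactSupport hρs
  have hρ'int : Integrable (deriv ρ) := hρ'c.integrable_of_hasCompactSupport hρs.deriv
  set Nρ : ℝ := ∫ t : ℝ, |deriv ρ t| with hNρdef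
  have hNρ : ∀ t, |ρ t| ≤ Nρ := key_sup_bound ρ hρdiff hρ'c hρs
  have hNρ0 : 0 ≤ Nρ := (abs_nonneg _).trans (hNρ 0)
  -- the function g
  set g : ℝ → ℝ := fun s => keyChi (s / ε) * s⁻¹ with hgdef
  have hgz : ∀ s : ℝ, |s| ≤ ε → g s = 0 := by
    intro s hs
    have h1 : |s / ε| ≤ 1 := by
      rw [abs_div, abs_of_pos hε, div_le_one hε]
      exact hs
    rw [hgdef]
    simp only [keyChi_eq_zero h1, zero_mul]
  have hgC : ContDiff ℝ (⊤ : ℕ∞) g := by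
    rw [contDiff_iff_contDiffAt]
    intro s
    by_cases hs : s = 0
    · subst hs
      apply ContDiffAt.congr_of_eventuallyEq (contDiffAt_const (c := (0 : ℝ)))
      filter_upwards [Metric.ball_mem_nhds (0 : ℝ) hε] with v hv
      rw [Metric.mem_ball, Real.dist_eq, sub_zero] at hv
      exact hgz v hv.le
    · exact ((keyChi_contDiff.contDiffAt).comp s (contDiffAt_id.div_const ε)).mul
        (contDiffAt_inv ℝ hs)
  have hgdiff : Differentiable ℝ g := hgC.differentiable (by simp)
  have hgdc : Continuous (deriv g) := hgC.continuous_deriv hone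
  have hgcont : Continuous g := hgC.continuous
  have hgd0 : ∀ s : ℝ, |s| < ε → deriv g s = 0 := by
    intro s hs
    have hop : IsOpen {v : ℝ | |v| < ε} := isOpen_lt continuous_abs continuous_const
    have hev : g =ᶠ[nhds s] (fun _ => (0 : ℝ)) := by
      filter_upwards [hop.mem_nhds hs] with v hv
      exact hgz v hv.le
    rw [hev.deriv_eq, deriv_const]
  have hgder : ∀ s : ℝ, s ≠ 0 →
      deriv g s = deriv keyChi (s / ε) * ε⁻¹ * s⁻¹ + keyChi (s / ε) * (-(s ^ 2)⁻¹) := by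
    intro s hs
    have hχ : HasDerivAt keyChi (deriv keyChi (s / ε)) (s / ε) :=
      ((keyChi_contDiff.differentiable (by simp)) _).hasDerivAt
    have h2 : HasDerivAt (fun v : ℝ => v / ε) (1 / ε) s := by
      simpa using (hasDerivAt_id s).div_const ε
    have h1 : HasDerivAt (fun v : ℝ => keyChi (v / ε)) (deriv keyChi (s / ε) * ε⁻¹) s := by
      have := hχ.comp s h2
      simpa [one_div, Function.comp_def] using this
    have h3 : HasDerivAt (fun v : ℝ => v⁻¹) (-(s ^ 2)⁻¹) s := hasDerivAt_inv hs
    have h4 := h1.mul h3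
    rw [hgdef]
    exact h4.deriv
  have hgb : ∀ s : ℝ, |g s| ≤ ε⁻¹ := by
    intro s
    rcases le_or_gt |s| ε with h | h
    · rw [hgz s h, abs_zero]
      positivity
    · have hs0 : s ≠ 0 := by
        intro h0
        rw [h0, abs_zero] at h
        linarith
      rw [hgdef]
      simp only []
      rw [abs_mul, abs_inv]
      calc |keyChi (s / ε)| * |s|⁻¹ ≤ 1 * |s|⁻¹ := by
            apply mul_le_mul_of_nonneg_right _ (by positivity)
            rw [abs_of_nonneg (keyChi_nonneg _)]
            exact keyChi_le_one _
        _ = |s|⁻¹ := one_mul _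
        _ ≤ ε⁻¹ := by
            apply inv_anti₀ hε h.le
  have hsgval : ∀ s : ℝ, s ≠ 0 → s * g s = keyChi (s / ε) := by
    intro s hs
    rw [hgdef]
    field_simp
  have hsg01 : ∀ s : ℝ, 0 ≤ s * g s ∧ s * g s ≤ 1 := by
    intro s
    by_cases hs : s = 0
    · subst hs; simp
    · rw [hsgval s hs]
      exact ⟨keyChi_nonneg _, keyChi_le_one _⟩
  have hsg1 : ∀ s : ℝ, 2 * ε < |s| → s * g s = 1 := by
    intro s hs
    have hs0 : s ≠ 0 := by
      intro h0
      rw [h0, abs_zero] at hs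
      nlinarith
    rw [hsgval s hs0]
    apply keyChi_eq_one
    rw [abs_div, abs_of_pos hε, le_div_iff₀ hε]
    linarith
  -- the dominating function D
  set D : ℝ → ℝ := fun s => Set.indicator (Set.Icc (-(2 * ε)) (2 * ε))
      (fun _ => Mx * (ε⁻¹ * ε⁻¹)) s +
    (Set.indicator (Set.Iic (-ε)) (fun x => (x⁻¹) ^ 2) s +
     Set.indicator (Set.Ici ε) (fun x => (x⁻¹) ^ 2) s) with hDdef
  have hrpow_eq : ∀ x ∈ Set.Ioi ε, x ^ (-2 : ℝ) = (x⁻¹) ^ 2 := by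
    intro x hx
    have hx0 : (0 : ℝ) < x := hε.trans hx
    rw [show (-2 : ℝ) = ((-2 : ℤ) : ℝ) from by norm_num, Real.rpow_intCast]
    rw [zpow_neg, inv_pow]
    norm_cast
  have hIoi : IntegrableOn (fun x : ℝ => (x⁻¹) ^ 2) (Set.Ioi ε) := by
    have h1 := integrableOn_Ioi_rpow_of_lt (show (-2 : ℝ) < -1 by norm_num) hε
    exact h1.congr_fun hrpow_eq measurableSet_Ioi
  have hIci : IntegrableOn (fun x : ℝ => (x⁻¹) ^ 2) (Set.Ici ε) :=
    (integrableOn_Ici_iff_integrableOn_Ioi (f := fun x : ℝ => (x⁻¹) ^ 2) (b := ε) enorm_ne_top).mpr hIoi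
  have hIic : IntegrableOn (fun x : ℝ => (x⁻¹) ^ 2) (Set.Iic (-ε)) := by
    have heq : (fun x : ℝ => (x⁻¹) ^ 2) = (fun x : ℝ => (x⁻¹) ^ 2) ∘ Neg.neg := by
      funext x
      simp [inv_neg]
    have hpre : Set.Iic (-ε) = Neg.neg ⁻¹' (Set.Ici ε) := by
      ext x
      simp [le_neg]
    rw [heq, hpre]
    rw [(Measure.measurePreserving_neg (volume : Measure ℝ)).integrableOn_comp_preimage
      (Homeomorph.neg ℝ).measurableEmbedding]
    exact hIci
  have hDint : Integrable D := by
    apply Integrable.add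
    · rw [integrable_indicator_iff measurableSet_Icc]
      exact integrableOn_const measure_Icc_lt_top.ne
    · exact ((integrable_indicator_iff measurableSet_Iic).2 hIic).add
        ((integrable_indicator_iff measurableSet_Ici).2 hIci)
  have hD0 : ∀ s, 0 ≤ D s := by
    intro s
    apply add_nonneg
    · exact Set.indicator_nonneg (fun _ _ => by positivity) s
    · exact add_nonneg (Set.indicator_nonneg (fun x _ => by positivity) s)
        (Set.indicator_nonneg (fun x _ => by positivity) s)
  have habs_dg : ∀ s : ℝ, s ≠ 0 →
      |deriv g s| ≤ |deriv keyChi (s / ε)| * ε⁻¹ * |s|⁻¹ + (s⁻¹) ^ 2 := by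
    intro s hs
    rw [hgder s hs]
    calc |deriv keyChi (s / ε) * ε⁻¹ * s⁻¹ + keyChi (s / ε) * (-(s ^ 2)⁻¹)|
        ≤ |deriv keyChi (s / ε) * ε⁻¹ * s⁻¹| + |keyChi (s / ε) * (-(s ^ 2)⁻¹)| := abs_add_le _ _
      _ ≤ |deriv keyChi (s / ε)| * ε⁻¹ * |s|⁻¹ + (s⁻¹) ^ 2 := by
          apply add_le_add
          · rw [abs_mul, abs_mul, abs_inv, abs_inv, abs_of_pos hε]
          · rw [abs_mul, abs_neg, abs_inv, abs_of_nonneg (sq_nonneg s), ← inv_pow]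
            calc |keyChi (s / ε)| * (s⁻¹) ^ 2 ≤ 1 * (s⁻¹) ^ 2 := by
                  apply mul_le_mul_of_nonneg_right _ (by positivity)
                  rw [abs_of_nonneg (keyChi_nonneg _)]
                  exact keyChi_le_one _
              _ = (s⁻¹) ^ 2 := one_mul _
  have hDb : ∀ s, |deriv g s| ≤ D s := by
    intro s
    rcases lt_or_ge |s| ε with h | h
    · rw [hgd0 s h, abs_zero]
      exact hD0 s
    · have hs0 : s ≠ 0 := by
        intro h0
        rw [h0, abs_zero] at h
        linarith
      have hsq : Set.indicator (Set.Iic (-ε)) (fun x => (x⁻¹) ^ 2) s +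
          Set.indicator (Set.Ici ε) (fun x => (x⁻¹) ^ 2) s = (s⁻¹) ^ 2 := by
        rcases le_or_gt ε s with hss | hss
        · rw [Set.indicator_of_mem (Set.mem_Ici.mpr hss),
            Set.indicator_of_notMem (by simp [Set.mem_Iic]; nlinarith), zero_add]
        · have hsneg : s ≤ -ε := by
            rcases abs_cases s with ⟨he, h0⟩ | ⟨he, h0⟩
            · rw [he] at h; linarith
            · rw [he] at h; linarith
          rw [Set.indicator_of_mem (Set.mem_Iic.mpr hsneg),
            Set.indicator_of_notMem (by simp [Set.mem_Ici]; nlinarith), add_zero]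
      rcases le_or_gt |s| (2 * ε) with h2 | h2
      · have hmem : s ∈ Set.Icc (-(2 * ε)) (2 * ε) := by
          rw [Set.mem_Icc]
          constructor <;> [linarith [neg_abs_le s]; linarith [le_abs_self s]]
        rw [hDdef]
        simp only []
        rw [Set.indicator_of_mem hmem, hsq]
        calc |deriv g s| ≤ |deriv keyChi (s / ε)| * ε⁻¹ * |s|⁻¹ + (s⁻¹) ^ 2 := habs_dg s hs0
          _ ≤ Mx * (ε⁻¹ * ε⁻¹) + (s⁻¹) ^ 2 := by
              apply add_le_add_left
              rw [mul_assoc]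
              apply mul_le_mul (hMx _) _ (by positivity) hMx0
              apply mul_le_mul_of_nonneg_left _ (by positivity)
              exact inv_anti₀ hε h
      · have hnmem : s ∉ Set.Icc (-(2 * ε)) (2 * ε) := by
          rw [Set.mem_Icc]
          intro ⟨ha, hb⟩
          rcases abs_cases s with ⟨he, h0⟩ | ⟨he, h0⟩ <;> rw [he] at h2 <;> linarith
        have hχ0 : deriv keyChi (s / ε) = 0 := by
          apply keyChi_deriv_eq_zero
          rw [abs_div, abs_of_pos hε, lt_div_iff₀ hε]
          linarith
        rw [hDdef]
        simp only []
        rw [Set.indicator_of_notMem hnmem, hsq, zero_add]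
        calc |deriv g s| ≤ |deriv keyChi (s / ε)| * ε⁻¹ * |s|⁻¹ + (s⁻¹) ^ 2 := habs_dg s hs0
          _ = (s⁻¹) ^ 2 := by rw [hχ0, abs_zero, zero_mul, zero_mul, zero_add]
  set VD : ℝ := ∫ s : ℝ, D s with hVDdef
  have hVD0 : 0 ≤ VD := integral_nonneg hD0
  have hIciVal : ∫ x in Set.Ici ε, (x⁻¹) ^ 2 = ε⁻¹ := by
    rw [integral_Ici_eq_integral_Ioi]
    rw [← setIntegral_congr_fun measurableSet_Ioi hrpow_eq]
    rw [integral_Ioi_rpow_of_lt (show (-2 : ℝ) < -1 by norm_num) hε]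
    norm_num [Real.rpow_neg_one]
  have hIicVal : ∫ x in Set.Iic (-ε), (x⁻¹) ^ 2 = ε⁻¹ := by
    have h1 : ∫ x in Set.Iic (-ε), (x⁻¹) ^ 2 = ∫ x in Set.Iic (-ε), ((-x)⁻¹) ^ 2 := by
      apply setIntegral_congr_fun measurableSet_Iic
      intro x _
      simp only [inv_neg, neg_sq]
    rw [h1, integral_comp_neg_Iic (-ε) (fun x => (x⁻¹) ^ 2), neg_neg,
      ← integral_Ici_eq_integral_Ioi, hIciVal]
  have hVD : VD ≤ (4 * Mx + 2) * ε⁻¹ := by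
    have e1 : Integrable (fun s : ℝ => Set.indicator (Set.Icc (-(2 * ε)) (2 * ε))
        (fun _ => Mx * (ε⁻¹ * ε⁻¹)) s) :=
      (integrable_indicator_iff measurableSet_Icc).2
        (integrableOn_const measure_Icc_lt_top.ne)
    have e2 : Integrable (fun s : ℝ => Set.indicator (Set.Iic (-ε)) (fun x => (x⁻¹) ^ 2) s) :=
      (integrable_indicator_iff measurableSet_Iic).2 hIic
    have e3 : Integrable (fun s : ℝ => Set.indicator (Set.Ici ε) (fun x => (x⁻¹) ^ 2) s) :=
      (integrable_indicator_iff measurableSet_Ici).2 hIci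
    have e23 : Integrable (fun s : ℝ => Set.indicator (Set.Iic (-ε)) (fun x => (x⁻¹) ^ 2) s +
        Set.indicator (Set.Ici ε) (fun x => (x⁻¹) ^ 2) s) := e2.add e3
    have hsplit : VD = (∫ s : ℝ, Set.indicator (Set.Icc (-(2 * ε)) (2 * ε))
        (fun _ => Mx * (ε⁻¹ * ε⁻¹)) s) +
        ((∫ s : ℝ, Set.indicator (Set.Iic (-ε)) (fun x => (x⁻¹) ^ 2) s) +
         (∫ s : ℝ, Set.indicator (Set.Ici ε) (fun x => (x⁻¹) ^ 2) s)) := by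
      rw [hVDdef]
      simp only [hDdef]
      rw [integral_add e1 e23, integral_add e2 e3]
    have hv1 : (∫ s : ℝ, Set.indicator (Set.Icc (-(2 * ε)) (2 * ε))
        (fun _ => Mx * (ε⁻¹ * ε⁻¹)) s) = 4 * Mx * ε⁻¹ := by
      rw [integral_indicator measurableSet_Icc, setIntegral_const, measureReal_def, Real.volume_Icc]
      rw [show (2 * ε - -(2 * ε)) = 4 * ε by ring, ENNReal.toReal_ofReal (by positivity)]
      rw [smul_eq_mul]
      field_simp
    rw [hsplit, hv1, integral_indicator measurableSet_Iic,
      integral_indicator measurableSet_Ici, hIicVal, hIciVal]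
    linarith
  -- the function G
  set G : ℝ → ℝ := fun s => ∫ u in (0 : ℝ)..s, |deriv g u| with hGdef
  have hGd : ∀ s, HasDerivAt G (|deriv g s|) s := fun s =>
    intervalIntegral.integral_hasDerivAt_right ((hgdc.abs).intervalIntegrable _ _)
      ((hgdc.abs).stronglyMeasurableAtFilter _ _) (hgdc.abs).continuousAt
  have hGb : ∀ s, |G s| ≤ VD := by
    intro s
    have h1 : |G s| ≤ ∫ u in Set.uIoc 0 s, |deriv g u| := by
      rw [hGdef]
      have := intervalIntegral.norm_integral_le_integral_norm_uIoc
        (f := fun u => |deriv g u|) (a := (0 : ℝ)) (b := s) (μ := volume)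
      simpa [Real.norm_eq_abs, abs_abs] using this
    have h2 : ∫ u in Set.uIoc 0 s, |deriv g u| ≤ ∫ u in Set.uIoc 0 s, D u := by
      apply setIntegral_mono_on
      · exact (hgdc.abs).integrableOn_uIoc
      · exact hDint.integrableOn
      · exact measurableSet_uIoc
      · exact fun u _ => hDb u
    have h3 : ∫ u in Set.uIoc 0 s, D u ≤ VD :=
      setIntegral_le_integral hDint (Filter.Eventually.of_forall hD0)
    linarith
  -- main integrands
  set T1 : ℝ → ℝ := fun t => (deriv φ (f t) * (1 - b t * g (b t))) * ρ t with hT1def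
  set I2 : ℝ → ℝ := fun t => (φ (f t) * (deriv g (b t) * dd t)) * ρ t with hI2def
  set I3 : ℝ → ℝ := fun t => (φ (f t) * g (b t)) * deriv ρ t with hI3def
  set DP : ℝ → ℝ := fun t => (deriv φ (f t) * b t) * (g (b t) * ρ t) +
    φ (f t) * (deriv g (b t) * dd t * ρ t + g (b t) * deriv ρ t) with hDPdef
  set P : ℝ → ℝ := fun t => φ (f t) * (g (b t) * ρ t) with hPdef
  have hΦd : ∀ t, HasDerivAt (fun t => φ (f t)) (deriv φ (f t) * b t) t := fun t =>
    ((hφd (f t)).hasDerivAt).comp t (hfd' t)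
  have hgbd : ∀ t, HasDerivAt (fun t => g (b t)) (deriv g (b t) * dd t) t := fun t =>
    ((hgdiff (b t)).hasDerivAt).comp t (hbd t)
  have hwd : ∀ t, HasDerivAt (fun t => g (b t) * ρ t)
      (deriv g (b t) * dd t * ρ t + g (b t) * deriv ρ t) t := fun t =>
    (hgbd t).mul ((hρdiff t).hasDerivAt)
  have hPd : ∀ t, HasDerivAt P (DP t) t := fun t => (hΦd t).mul (hwd t)
  have hDPc : Continuous DP := by
    rw [hDPdef]
    apply Continuous.add
    · exact ((hφ'c.comp hf.continuous).mul hbc).mul ((hgcont.comp hbc).mul hρc)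
    · exact (hφC.continuous.comp hf.continuous).mul
        ((((hgdc.comp hbc).mul hddc).mul hρc).add ((hgcont.comp hbc).mul hρ'c))
  have hPderiv : deriv P = DP := funext fun t => (hPd t).deriv
  have hPcs : HasCompactSupport P := by
    rw [hPdef]
    exact (hρs.mul_left).mul_left
  have hibp : ∫ t : ℝ, DP t = 0 := by
    rw [← hPderiv]
    apply key_ibp P (fun t => (hPd t).differentiableAt) _ hPcs
    rw [hPderiv]
    exact hDPc
  -- integrability of the pieces
  have hT1c : Continuous T1 := by
    rw [hT1def]
    apply Continuous.mul _ hρc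
    apply (hφ'c.comp hf.continuous).mul
    exact continuous_const.sub (hbc.mul (hgcont.comp hbc))
  have hT1cs : HasCompactSupport T1 := hρs.mul_left
  have hT1int : Integrable T1 := hT1c.integrable_of_hasCompactSupport hT1cs
  have hI2c : Continuous I2 := by
    rw [hI2def]
    exact ((hφC.continuous.comp hf.continuous).mul ((hgdc.comp hbc).mul hddc)).mul hρc
  have hI2cs : HasCompactSupport I2 := hρs.mul_left
  have hI2int : Integrable I2 := hI2c.integrable_of_hasCompactSupport hI2cs
  have hI3c : Continuous I3 := by
    rw [hI3def]
    exact ((hφC.continuous.comp hf.continuous).mul (hgcont.comp hbc)).mul hρ'c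
  have hI3cs : HasCompactSupport I3 := hρs.deriv.mul_left
  have hI3int : Integrable I3 := hI3c.integrable_of_hasCompactSupport hI3cs
  have hDPint : Integrable DP := hDPc.integrable_of_hasCompactSupport (by
    rw [← hPderiv]; exact hPcs.deriv)
  -- the pointwise identity
  have hident : (fun t : ℝ => deriv φ (f t) * ρ t) =
      fun t => T1 t + DP t - I2 t - I3 t := by
    funext t
    rw [hT1def, hDPdef, hI2def, hI3def]
    ring
  have hsplit2 : ∫ t : ℝ, deriv φ (f t) * ρ t = (∫ t : ℝ, T1 t) - (∫ t : ℝ, I2 t) -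
      (∫ t : ℝ, I3 t) := by
    have hA1 : Integrable (fun t => T1 t + DP t) := hT1int.add hDPint
    have hA2 : Integrable (fun t => T1 t + DP t - I2 t) := hA1.sub hI2int
    rw [hident]
    rw [integral_sub hA2 hI3int, integral_sub hA1 hI2int, integral_add hT1int hDPint,
      hibp, add_zero]
  -- bound on T1
  set S : Set ℝ := {t : ℝ | |b t| ≤ 2 * ε} with hSdef
  have hSmeas : MeasurableSet S := by
    apply (isClosed_le (hbc.abs) continuous_const).measurableSet
  have hT1bound : ∫ t : ℝ, T1 t ≤ supNorm (deriv φ) * ∫ t in S, |ρ t| := by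
    have hptw : ∀ t, T1 t ≤ S.indicator (fun t => supNorm (deriv φ) * |ρ t|) t := by
      intro t
      by_cases ht : t ∈ S
      · rw [Set.indicator_of_mem ht]
        have h1 : |T1 t| ≤ supNorm (deriv φ) * |ρ t| := by
          rw [hT1def]
          simp only []
          rw [abs_mul, abs_mul]
          apply mul_le_mul _ le_rfl (abs_nonneg _) hK1'0
          calc |deriv φ (f t)| * |1 - b t * g (b t)| ≤ supNorm (deriv φ) * 1 := by
                apply mul_le_mul (hsupφ' _) _ (abs_nonneg _) hK1'0
                rw [abs_le]
                have := hsg01 (b t)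
                constructor <;> linarith [this.1, this.2]
            _ = supNorm (deriv φ) := mul_one _
        linarith [le_abs_self (T1 t), h1]
      · rw [Set.indicator_of_notMem ht]
        rw [hSdef] at ht
        simp only [Set.mem_setOf_eq, not_le] at ht
        rw [hT1def]
        simp only []
        rw [hsg1 (b t) ht]
        simp
    have hind_int : Integrable (S.indicator (fun t => supNorm (deriv φ) * |ρ t|)) :=
      ((hρint.abs).const_mul _).indicator hSmeas
    calc ∫ t : ℝ, T1 t ≤ ∫ t : ℝ, S.indicator (fun t => supNorm (deriv φ) * |ρ t|) t :=
          integral_mono hT1int hind_int hptw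
      _ = ∫ t in S, supNorm (deriv φ) * |ρ t| := integral_indicator hSmeas
      _ = supNorm (deriv φ) * ∫ t in S, |ρ t| := integral_const_mul _ _
  -- bound on I3
  have hI3bound : |∫ t : ℝ, I3 t| ≤ supNorm φ * ε⁻¹ * Nρ := by
    have hptw : ∀ t, |I3 t| ≤ (supNorm φ * ε⁻¹) * |deriv ρ t| := by
      intro t
      rw [hI3def]
      simp only []
      rw [abs_mul]
      apply mul_le_mul _ le_rfl (abs_nonneg _) (by positivity)
      rw [abs_mul]
      exact mul_le_mul (hsupφ _) (hgb _) (abs_nonneg _) hK10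
    calc |∫ t : ℝ, I3 t| = ‖∫ t : ℝ, I3 t‖ := (Real.norm_eq_abs _).symm
      _ ≤ ∫ t : ℝ, ‖I3 t‖ := norm_integral_le_integral_norm _
      _ = ∫ t : ℝ, |I3 t| := by simp [Real.norm_eq_abs]
      _ ≤ ∫ t : ℝ, (supNorm φ * ε⁻¹) * |deriv ρ t| :=
          integral_mono hI3int.abs ((hρ'int.abs).const_mul _) hptw
      _ = (supNorm φ * ε⁻¹) * Nρ := by rw [integral_const_mul, hNρdef]
      _ = supNorm φ * ε⁻¹ * Nρ := rfl
  -- bound on I2 via key_B3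
  have hI2bound : |∫ t : ℝ, I2 t| ≤ (r : ℝ) * (2 * ((supNorm φ * Nρ) * VD)) := by
    have hqb : ∀ t, |I2 t| ≤ (supNorm φ * Nρ) * (|deriv g (b t)| * |dd t|) := by
      intro t
      rw [hI2def]
      simp only []
      rw [abs_mul, abs_mul, abs_mul]
      calc |φ (f t)| * (|deriv g (b t)| * |dd t|) * |ρ t| ≤
          supNorm φ * (|deriv g (b t)| * |dd t|) * Nρ := by
            apply mul_le_mul _ (hNρ t) (abs_nonneg _) (by positivity)
            exact mul_le_mul_of_nonneg_right (hsupφ _) (by positivity)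
        _ = (supNorm φ * Nρ) * (|deriv g (b t)| * |dd t|) := by ring
    calc |∫ t : ℝ, I2 t| = ‖∫ t : ℝ, I2 t‖ := (Real.norm_eq_abs _).symm
      _ ≤ ∫ t : ℝ, ‖I2 t‖ := norm_integral_le_integral_norm _
      _ = ∫ t : ℝ, |I2 t| := by simp [Real.norm_eq_abs]
      _ ≤ (r : ℝ) * (2 * ((supNorm φ * Nρ) * VD)) :=
          key_B3 r hr a ha0 hal hamono b dd hbd hddc hsign I2 hI2int G (deriv g)
            hGd hgdc VD hGb (supNorm φ * Nρ) (by positivity) hqb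
  -- put everything together
  have hr1 : (1 : ℝ) ≤ (r : ℝ) := by exact_mod_cast hr
  have hmain : ∫ t : ℝ, deriv φ (f t) * ρ t ≤
      supNorm (deriv φ) * (∫ t in S, |ρ t|) +
      (supNorm φ * ε⁻¹ * Nρ + (r : ℝ) * (2 * ((supNorm φ * Nρ) * VD))) := by
    rw [hsplit2]
    have h2 := abs_le.mp hI2bound
    have h3 := abs_le.mp hI3bound
    linarith [hT1bound, h2.1, h3.1]
  have hfinal : supNorm φ * ε⁻¹ * Nρ + (r : ℝ) * (2 * ((supNorm φ * Nρ) * VD)) ≤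
      (8 * Mx + 5) * (r : ℝ) * ε⁻¹ * supNorm φ * Nρ := by
    have hεinv : (0 : ℝ) < ε⁻¹ := by positivity
    have hb1 : supNorm φ * ε⁻¹ * Nρ ≤ (r : ℝ) * ε⁻¹ * supNorm φ * Nρ := by
      nlinarith [mul_nonneg (mul_nonneg hK10 hεinv.le) hNρ0]
    have hb2 : (r : ℝ) * (2 * ((supNorm φ * Nρ) * VD)) ≤
        (r : ℝ) * (2 * ((supNorm φ * Nρ) * ((4 * Mx + 2) * ε⁻¹))) := by
      apply mul_le_mul_of_nonneg_left _ (by positivity)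
      apply mul_le_mul_of_nonneg_left _ (by norm_num)
      exact mul_le_mul_of_nonneg_left hVD (by positivity)
    have hr0 : (0 : ℝ) ≤ (r : ℝ) := by positivity
    nlinarith [mul_nonneg (mul_nonneg (mul_nonneg hr0 hεinv.le) hK10) hNρ0,
      mul_nonneg hK10 hNρ0]
  calc ∫ t : ℝ, deriv φ (f t) * ρ t ≤
      supNorm (deriv φ) * (∫ t in S, |ρ t|) +
      (supNorm φ * ε⁻¹ * Nρ + (r : ℝ) * (2 * ((supNorm φ * Nρ) * VD))) := hmain
    _ ≤ supNorm (deriv φ) * (∫ t in S, |ρ t|) +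
        (8 * Mx + 5) * (r : ℝ) * ε⁻¹ * supNorm φ * Nρ := by linarith
    _ = (8 * Mx + 5) * (r : ℝ) * ε⁻¹ * supNorm φ * Nρ +
        supNorm (deriv φ) * ∫ t in S, |ρ t| := by ring
end
end

section
/- There exists a universal constant C > 1 with the following property. Let ρ ∈ C_0^∞(ℝ), f ∈ C^∞(ℝ), and k ∈ ℕ, and assume that either k ≥ 3 and f^{(k)}(t) > 0 for all t ∈ ℝ, or k = 2 and f''(t) ≥ 0 for all t ∈ ℝ. Then for every φ ∈ C_b^∞(ℝ) and every ε > 0, ∫_ℝ φ'(f(t)) ρ(t) dt ≤ C (k−1) ε^{−1} ‖φ‖_∞ ‖ρ'‖_{L¹(ℝ)} + ‖φ'‖_∞ ∫_ℝ 1_{{|f'| ≤ 2ε}}(t) |ρ(t)| dt. -/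
open MeasureTheory

noncomputable section

open Set

namespace KeyCor

/-- smooth cutoff: `1` on `[-1,1]`, `0` outside `(-2,2)`, values in `[0,1]`. -/
def chi1 : ℝ → ℝ := fun y => Real.smoothTransition ((4 - y ^ 2) / 3)

lemma chi1_smooth : ContDiff ℝ (⊤ : ℕ∞) chi1 :=
  Real.smoothTransition.contDiff.comp (ContDiff.div_const (by fun_prop) 3)

lemma chi1_nonneg (y : ℝ) : 0 ≤ chi1 y := Real.smoothTransition.nonneg _

lemma chi1_le_one (y : ℝ) : chi1 y ≤ 1 := Real.smoothTransition.le_one _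

lemma chi1_eq_one {y : ℝ} (h : |y| ≤ 1) : chi1 y = 1 := by
  apply Real.smoothTransition.one_of_one_le
  have h2 : y ^ 2 ≤ 1 := by
    have := abs_nonneg y
    nlinarith [sq_abs y]
  rw [le_div_iff₀ (by norm_num)]
  linarith

lemma chi1_eq_zero {y : ℝ} (h : 2 ≤ |y|) : chi1 y = 0 := by
  apply Real.smoothTransition.zero_of_nonpos
  have h2 : (4 : ℝ) ≤ y ^ 2 := by nlinarith [sq_abs y]
  have : (0:ℝ) < 3 := by norm_num
  apply div_nonpos_of_nonpos_of_nonneg <;> linarith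

/-- `th1 y = (1 - chi1 y)/y`; equals `1/y` for `|y| ≥ 2`, vanishes on `[-1,1]`. -/
def th1 : ℝ → ℝ := fun y => (1 - chi1 y) / y

lemma th1_eq_zero {y : ℝ} (h : |y| ≤ 1) : th1 y = 0 := by
  simp [th1, chi1_eq_one h]

lemma th1_smooth : ContDiff ℝ (⊤ : ℕ∞) th1 := by
  rw [contDiff_iff_contDiffAt]
  intro x
  rcases lt_or_ge (|x|) 1 with hx | hx
  · have : th1 =ᶠ[nhds x] (fun _ => (0:ℝ)) := by
      filter_upwards [eventually_abs_sub_lt x (by linarith : (0:ℝ) < 1 - |x|)] with y hy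
      have : |y| < 1 := by
        have := abs_sub_abs_le_abs_sub y x
        linarith
      exact th1_eq_zero this.le
    exact (contDiffAt_const (c := (0:ℝ))).congr_of_eventuallyEq this
  · have hx0 : x ≠ 0 := by
      intro h; rw [h] at hx; simp at hx; linarith
    exact ((contDiffAt_const (c := (1:ℝ))).sub chi1_smooth.contDiffAt).div contDiffAt_id hx0

lemma th1_mul (y : ℝ) : y * th1 y = 1 - chi1 y := by
  rcases eq_or_ne y 0 with rfl | hy
  · simp [chi1_eq_one (by norm_num : |(0:ℝ)| ≤ 1)]
  · rw [th1]; field_simp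

lemma th1_abs_le (y : ℝ) : |th1 y| ≤ 1 := by
  rcases le_or_gt (|y|) 1 with h | h
  · simp [th1_eq_zero h]
  · have hy : y ≠ 0 := by intro h0; rw [h0] at h; simp at h; linarith
    have h1 : |1 - chi1 y| ≤ 1 := by
      rw [abs_le]; constructor
      · have := chi1_le_one y; linarith
      · have := chi1_nonneg y; linarith
    calc |th1 y| = |1 - chi1 y| / |y| := by rw [th1, abs_div]
    _ ≤ 1 / 1 := div_le_div₀ (by norm_num) h1 (by norm_num) h.le
    _ = 1 := by norm_num

lemma th1_deriv_cont : Continuous (deriv th1) :=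
  th1_smooth.continuous_deriv (by exact_mod_cast le_top)

lemma th1_deriv_tail_pos {x : ℝ} (hx : 2 < x) : deriv th1 x = -(x ^ 2)⁻¹ := by
  have h : th1 =ᶠ[nhds x] fun y => y⁻¹ := by
    filter_upwards [Ioi_mem_nhds hx] with y hy
    have hy2 : 2 < y := hy
    have : chi1 y = 0 := chi1_eq_zero (by rw [abs_of_pos (by linarith : (0:ℝ) < y)]; linarith)
    rw [th1]; simp only [this, sub_zero]; rw [one_div]
  rw [h.deriv_eq]; exact deriv_inv

lemma th1_deriv_tail_neg {x : ℝ} (hx : x < -2) : deriv th1 x = -(x ^ 2)⁻¹ := by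
  have h : th1 =ᶠ[nhds x] fun y => y⁻¹ := by
    filter_upwards [Iio_mem_nhds hx] with y hy
    have hy2 : y < -2 := hy
    have : chi1 y = 0 := chi1_eq_zero (by rw [abs_of_neg (by linarith : y < 0)]; linarith)
    rw [th1]; simp only [this, sub_zero]; rw [one_div]
  rw [h.deriv_eq]; exact deriv_inv

lemma invsq_integrableOn_Ioi : IntegrableOn (fun x : ℝ => -(x ^ 2)⁻¹) (Ioi (2:ℝ)) := by
  have h : IntegrableOn (fun x : ℝ => x ^ (-2:ℝ)) (Ioi (2:ℝ)) :=
    integrableOn_Ioi_rpow_of_lt (by norm_num) (by norm_num)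
  have h2 : IntegrableOn (fun x : ℝ => (x ^ 2)⁻¹) (Ioi (2:ℝ)) := by
    apply h.congr_fun _ measurableSet_Ioi
    intro x hx
    have hx0 : (0:ℝ) < x := lt_trans (by norm_num) hx
    show x ^ (-2:ℝ) = (x ^ 2)⁻¹
    rw [Real.rpow_neg hx0.le, ← Real.rpow_natCast x 2]
    norm_num
  exact h2.neg

lemma io_neg (f : ℝ → ℝ) (h : IntegrableOn f (Ioi (2:ℝ))) :
    IntegrableOn (fun x => f (-x)) (Iio (-2:ℝ)) := by
  have h2 : Integrable (fun x => indicator (Ioi (2:ℝ)) f (-x)) :=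
    (integrable_indicator_iff measurableSet_Ioi |>.2 h).comp_neg
  have heq : IntegrableOn (fun x => f (-x)) (Iio (-2:ℝ)) ↔
      Integrable (indicator (Iio (-2:ℝ)) (fun x => f (-x))) :=
    (integrable_indicator_iff measurableSet_Iio).symm
  rw [heq]
  convert h2 using 2 with x
  by_cases hx : x < -2
  · rw [indicator_of_mem (by simpa using hx), indicator_of_mem (by simp; linarith)]
  · rw [indicator_of_notMem (by simpa using hx), indicator_of_notMem (by simp; linarith)]

lemma invsq_integrableOn_Iio : IntegrableOn (fun x : ℝ => -(x ^ 2)⁻¹) (Iio (-2:ℝ)) := by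
  have := io_neg _ invsq_integrableOn_Ioi
  apply this.congr_fun _ measurableSet_Iio
  intro x _; simp [neg_sq]

lemma th1_deriv_integrable : Integrable (deriv th1) := by
  rw [← integrableOn_univ]
  have hcov : (univ : Set ℝ) ⊆ Iio (-2) ∪ (Icc (-2) 2 ∪ Ioi 2) := by
    intro x _
    rcases lt_or_ge x (-2) with h | h
    · exact Or.inl h
    · rcases le_or_gt x 2 with h2 | h2
      · exact Or.inr (Or.inl ⟨h, h2⟩)
      · exact Or.inr (Or.inr h2)
  apply IntegrableOn.mono_set _ hcov
  apply IntegrableOn.union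
  · exact invsq_integrableOn_Iio.congr_fun (fun x hx => (th1_deriv_tail_neg hx).symm) measurableSet_Iio
  apply IntegrableOn.union
  · exact th1_deriv_cont.integrableOn_Icc
  · exact invsq_integrableOn_Ioi.congr_fun (fun x hx => (th1_deriv_tail_pos hx).symm) measurableSet_Ioi

/-- universal constant: total variation scale of `th1`. -/
def V1 : ℝ := ∫ y, |deriv th1 y|

lemma V1_nonneg : 0 ≤ V1 := integral_nonneg (fun y => abs_nonneg _)

/-- rescaled multiplier `th ε x ≈ 1/x` for `|x| ≥ 2ε`. -/
def th (ε : ℝ) : ℝ → ℝ := fun x => ε⁻¹ * th1 (x / ε)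

section
variable {ε : ℝ} (hε : 0 < ε)
include hε

lemma th_smooth : ContDiff ℝ (⊤:ℕ∞) (th ε) :=
  contDiff_const.mul (th1_smooth.comp (contDiff_id.div_const ε))

lemma th_mul (x : ℝ) : x * th ε x = 1 - chi1 (x / ε) := by
  have h := th1_mul (x / ε)
  rw [th]
  field_simp at h ⊢
  linarith [h]

lemma th_abs_le (x : ℝ) : |th ε x| ≤ ε⁻¹ := by
  rw [th, abs_mul, abs_of_pos (inv_pos.2 hε)]
  calc ε⁻¹ * |th1 (x / ε)| ≤ ε⁻¹ * 1 := by
        exact mul_le_mul_of_nonneg_left (th1_abs_le _) (inv_pos.2 hε).le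
  _ = ε⁻¹ := mul_one _

lemma th_hasDerivAt (x : ℝ) : HasDerivAt (th ε) (ε⁻¹ * ε⁻¹ * deriv th1 (x / ε)) x := by
  have h1 : HasDerivAt th1 (deriv th1 (x / ε)) (x / ε) :=
    (th1_smooth.differentiable (by simp) (x / ε)).hasDerivAt
  have h2 : HasDerivAt (fun y : ℝ => y / ε) (1 / ε) x := (hasDerivAt_id x).div_const ε
  have h3 := (h1.comp x h2).const_mul (ε⁻¹)
  have e : ε⁻¹ * ε⁻¹ * deriv th1 (x / ε) = ε⁻¹ * (deriv th1 (x / ε) * (1 / ε)) := by ring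
  rw [e]; exact h3

lemma th_deriv (x : ℝ) : deriv (th ε) x = ε⁻¹ * ε⁻¹ * deriv th1 (x / ε) :=
  (th_hasDerivAt hε x).deriv

lemma th_deriv_cont : Continuous (deriv (th ε)) :=
  (th_smooth hε).continuous_deriv (by exact_mod_cast le_top)

lemma th_deriv_abs_integrable : Integrable (fun x => |deriv (th ε) x|) := by
  have h : Integrable (fun x => ε⁻¹ * ε⁻¹ * |deriv th1 (x / ε)|) :=
    (th1_deriv_integrable.abs.comp_div hε.ne').const_mul _
  apply h.congr
  filter_upwards with x
  rw [th_deriv hε, abs_mul, abs_mul, abs_of_pos (inv_pos.2 hε)]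

lemma th_deriv_abs_integral : ∫ x, |deriv (th ε) x| = ε⁻¹ * V1 := by
  have h0 : ∀ x : ℝ, |deriv (th ε) x| = ε⁻¹ * ε⁻¹ * |deriv th1 (x / ε)| := by
    intro x; rw [th_deriv hε, abs_mul, abs_mul, abs_of_pos (inv_pos.2 hε)]
  rw [funext h0, integral_const_mul]
  rw [MeasureTheory.Measure.integral_comp_div (fun y => |deriv th1 y|) ε]
  rw [abs_of_pos hε, smul_eq_mul, V1]
  field_simp

end
/-! ### Piecewise monotonicity and sign pieces -/

lemma split_mono {h : ℝ → ℝ} {u v : ℝ} (huv : u ≤ v) (hm : MonotoneOn h (Icc u v)) :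
    ∃ c, c ∈ Icc u v ∧ (∀ x ∈ Ico u c, h x ≤ 0) ∧ (∀ x ∈ Ioc c v, 0 < h x) := by
  set S := {x | x ∈ Icc u v ∧ 0 < h x} ∪ {v} with hS
  have hne : S.Nonempty := ⟨v, Or.inr rfl⟩
  have hbdd : BddBelow S := ⟨u, by rintro x (⟨hx, _⟩ | rfl); exacts [hx.1, huv]⟩
  have hcv : sInf S ≤ v := csInf_le hbdd (Or.inr rfl)
  have huc : u ≤ sInf S := le_csInf hne (by rintro x (⟨hx, _⟩ | rfl); exacts [hx.1, huv])
  refine ⟨sInf S, ⟨huc, hcv⟩, ?_, ?_⟩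
  · intro x hx
    by_contra hpos
    push_neg at hpos
    have hxS : x ∈ S := Or.inl ⟨⟨hx.1, le_trans hx.2.le hcv⟩, hpos⟩
    exact absurd (csInf_le hbdd hxS) (not_le.2 hx.2)
  · intro x hx
    obtain ⟨y, hy, hyx⟩ := exists_lt_of_csInf_lt hne hx.1
    rcases hy with ⟨hy1, hy2⟩ | rfl
    · have hxI : x ∈ Icc u v := ⟨le_trans huc (le_of_lt hx.1), hx.2⟩
      exact lt_of_lt_of_le hy2 (hm hy1 hxI hyx.le)
    · exact absurd hx.2 (not_le.2 hyx)

lemma split_anti {h : ℝ → ℝ} {u v : ℝ} (huv : u ≤ v) (hm : AntitoneOn h (Icc u v)) :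
    ∃ c, c ∈ Icc u v ∧ (∀ x ∈ Ico u c, 0 ≤ h x) ∧ (∀ x ∈ Ioc c v, h x < 0) := by
  obtain ⟨c, hc, h1, h2⟩ := split_mono huv hm.neg
  refine ⟨c, hc, fun x hx => ?_, fun x hx => ?_⟩
  · have := h1 x hx; simpa using this
  · have := h2 x hx; simpa using this

lemma merge {h : ℝ → ℝ} {q c c' : ℝ} (hq : c ≤ q) (hq' : q ≤ c')
    (hL : (∀ x ∈ Ioc c q, 0 < h x) ∨ (∀ x ∈ Ioc c q, h x < 0))
    (hR : (∀ x ∈ Ico q c', h x ≤ 0) ∨ (∀ x ∈ Ico q c', 0 ≤ h x)) :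
    (∀ x ∈ Ioo c c', 0 ≤ h x) ∨ (∀ x ∈ Ioo c c', h x ≤ 0) := by
  have hsplit : ∀ x ∈ Ioo c c', x ∈ Ioc c q ∨ x ∈ Ico q c' := by
    intro x hx
    rcases le_or_gt x q with hxq | hxq
    · exact Or.inl ⟨hx.1, hxq⟩
    · exact Or.inr ⟨hxq.le, hx.2⟩
  rcases hL with hL | hL <;> rcases hR with hR | hR
  · -- 0 < on left, ≤ 0 on right : mismatch
    rcases eq_or_lt_of_le hq with rfl | hcq
    · right; intro x hx
      exact hR x ⟨hx.1.le, hx.2⟩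
    · have hqc' : q = c' := by
        by_contra hne
        have h1 : 0 < h q := hL q ⟨hcq, le_refl q⟩
        have h2 : h q ≤ 0 := hR q ⟨le_refl q, lt_of_le_of_ne hq' hne⟩
        linarith
      left; intro x hx
      rw [← hqc'] at hx
      exact (hL x ⟨hx.1, hx.2.le⟩).le
  · -- 0 < left, 0 ≤ right : all nonneg
    left; intro x hx
    rcases hsplit x hx with h1 | h1
    · exact (hL x h1).le
    · exact hR x h1
  · -- < 0 left, ≤ 0 right : all nonpos
    right; intro x hx
    rcases hsplit x hx with h1 | h1
    · exact (hL x h1).le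
    · exact hR x h1
  · -- < 0 left, 0 ≤ right : mismatch
    rcases eq_or_lt_of_le hq with rfl | hcq
    · left; intro x hx
      exact hR x ⟨hx.1.le, hx.2⟩
    · have hqc' : q = c' := by
        by_contra hne
        have h1 : h q < 0 := hL q ⟨hcq, le_refl q⟩
        have h2 : 0 ≤ h q := hR q ⟨le_refl q, lt_of_le_of_ne hq' hne⟩
        linarith
      right; intro x hx
      rw [← hqc'] at hx
      exact (hL x ⟨hx.1, hx.2.le⟩).le

lemma signPieces {h : ℝ → ℝ} {n : ℕ} {a : ℕ → ℝ}
    (hstep : ∀ i < n, a i ≤ a (i + 1))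
    (hp : ∀ i < n, MonotoneOn h (Icc (a i) (a (i + 1))) ∨ AntitoneOn h (Icc (a i) (a (i + 1)))) :
    ∃ b : ℕ → ℝ, b 0 = a 0 ∧ b (n + 1) = a n ∧ (∀ i < n + 1, b i ≤ b (i + 1)) ∧
      ∀ i < n + 1, (∀ x ∈ Ioo (b i) (b (i + 1)), 0 ≤ h x) ∨
        (∀ x ∈ Ioo (b i) (b (i + 1)), h x ≤ 0) := by
  have key : ∀ i : ℕ, ∃ c : ℝ, i < n → c ∈ Icc (a i) (a (i + 1)) ∧
      (((∀ x ∈ Ico (a i) c, h x ≤ 0) ∧ (∀ x ∈ Ioc c (a (i + 1)), 0 < h x)) ∨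
       ((∀ x ∈ Ico (a i) c, 0 ≤ h x) ∧ (∀ x ∈ Ioc c (a (i + 1)), h x < 0))) := by
    intro i
    by_cases hi : i < n
    · rcases hp i hi with hmono | hanti
      · obtain ⟨c, hc, h1, h2⟩ := split_mono (hstep i hi) hmono
        exact ⟨c, fun _ => ⟨hc, Or.inl ⟨h1, h2⟩⟩⟩
      · obtain ⟨c, hc, h1, h2⟩ := split_anti (hstep i hi) hanti
        exact ⟨c, fun _ => ⟨hc, Or.inr ⟨h1, h2⟩⟩⟩
    · exact ⟨0, fun hlt => absurd hlt hi⟩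
  choose cf hcf using key
  set b : ℕ → ℝ := fun i => if i = 0 then a 0 else if i ≤ n then cf (i - 1) else a n with hbdef
  have hbval0 : b 0 = a 0 := rfl
  have hbval : ∀ i, 1 ≤ i → i ≤ n → b i = cf (i - 1) := by
    intro i h1 h2
    simp only [hbdef]
    rw [if_neg (by omega), if_pos h2]
  have hbvalend : ∀ i, n < i → b i = a n := by
    intro i hgt
    simp only [hbdef]
    rw [if_neg (by omega), if_neg (by omega)]
  refine ⟨b, hbval0, hbvalend (n + 1) (by omega), ?_, ?_⟩
  · -- steps
    intro i hi
    rcases Nat.eq_zero_or_pos n with rfl | hnpos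
    · have h1 : i = 0 := by omega
      subst h1
      rw [hbval0, hbvalend 1 (by omega)]
    rcases Nat.eq_zero_or_pos i with rfl | hipos
    · rw [hbval0, hbval 1 (by omega) (by omega)]
      have := ((hcf 0 hnpos).1).1
      simpa using this
    by_cases h1 : i + 1 ≤ n
    · rw [hbval i (by omega) (by omega), hbval (i + 1) (by omega) h1]
      have hA : cf (i - 1) ≤ a ((i - 1) + 1) := ((hcf (i - 1) (by omega)).1).2
      have hB : a i ≤ cf i := ((hcf i (by omega)).1).1
      have hieq : (i - 1) + 1 = i := by omega
      rw [hieq] at hA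
      have hieq2 : i + 1 - 1 = i := by omega
      rw [hieq2]
      exact le_trans hA hB
    · rw [hbval i (by omega) (by omega), hbvalend (i + 1) (by omega)]
      have hA : cf (i - 1) ≤ a ((i - 1) + 1) := ((hcf (i - 1) (by omega)).1).2
      have hieq : (i - 1) + 1 = i := by omega
      rw [hieq] at hA
      have hieq3 : i = n := by omega
      rw [← hieq3]
      exact hA
  · -- signs
    intro i hi
    rcases Nat.eq_zero_or_pos n with rfl | hnpos
    · have h1 : i = 0 := by omega
      subst h1
      left; intro x hx
      rw [hbval0, hbvalend 1 (by omega)] at hx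
      exact absurd hx.2 (not_lt.2 hx.1.le)
    rcases Nat.eq_zero_or_pos i with rfl | hipos
    · rw [hbval0, hbval 1 (by omega) (by omega)]
      have h1eq : (1:ℕ) - 1 = 0 := rfl
      rw [h1eq]
      rcases (hcf 0 hnpos).2 with ⟨h1, _⟩ | ⟨h1, _⟩
      · right; intro x hx; exact h1 x ⟨hx.1.le, hx.2⟩
      · left; intro x hx; exact h1 x ⟨hx.1.le, hx.2⟩
    rcases eq_or_lt_of_le (Nat.lt_succ_iff.mp hi) with hieq | hilt
    · -- i = n
      rw [hbval i (by omega) (by omega), hbvalend (i + 1) (by omega)]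
      have h2 := (hcf (i - 1) (by omega)).2
      have hieq2 : (i - 1) + 1 = i := by omega
      rcases h2 with ⟨_, h2⟩ | ⟨_, h2⟩
      · left; intro x hx
        apply le_of_lt
        apply h2 x
        refine ⟨hx.1, ?_⟩
        rw [hieq2, hieq]
        exact hx.2.le
      · right; intro x hx
        apply le_of_lt
        apply h2 x
        refine ⟨hx.1, ?_⟩
        rw [hieq2, hieq]
        exact hx.2.le
    · -- 0 < i < n : merge
      rw [hbval i (by omega) (by omega), hbval (i + 1) (by omega) (by omega)]
      have hieq4 : i + 1 - 1 = i := by omega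
      rw [hieq4]
      have hL := (hcf (i - 1) (by omega)).2
      have hR := (hcf i (by omega)).2
      have hieq2 : (i - 1) + 1 = i := by omega
      have hq1 : cf (i - 1) ≤ a i := by
        have := ((hcf (i - 1) (by omega)).1).2; rwa [hieq2] at this
      have hq2 : a i ≤ cf i := ((hcf i (by omega)).1).1
      apply merge hq1 hq2
      · rcases hL with ⟨_, h2⟩ | ⟨_, h2⟩
        · left; intro x hx; apply h2 x; rwa [hieq2]
        · right; intro x hx; apply h2 x; rwa [hieq2]
      · rcases hR with ⟨h1, _⟩ | ⟨h1, _⟩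
        · left; exact h1
        · right; exact h1

/-- `g` can be cut into `n` monotone/antitone pieces on every `[c,d]`. -/
def MonoPieces (g : ℝ → ℝ) (n : ℕ) : Prop :=
  ∀ c d : ℝ, c ≤ d → ∃ a : ℕ → ℝ, a 0 = c ∧ a n = d ∧ (∀ i < n, a i ≤ a (i + 1)) ∧
    ∀ i < n, MonotoneOn g (Icc (a i) (a (i + 1))) ∨ AntitoneOn g (Icc (a i) (a (i + 1)))

lemma monoPieces_step {g : ℝ → ℝ} (hg : Differentiable ℝ g) {n : ℕ}
    (H : MonoPieces (deriv g) n) : MonoPieces g (n + 1) := by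
  intro c d hcd
  obtain ⟨a, ha0, han, hstep, hp⟩ := H c d hcd
  obtain ⟨b, hb0, hbn, hbstep, hsign⟩ := signPieces hstep hp
  refine ⟨b, by rw [hb0, ha0], by rw [hbn, han], hbstep, ?_⟩
  intro i hi
  rcases hsign i hi with hpos | hneg
  · left
    apply monotoneOn_of_deriv_nonneg (convex_Icc _ _) hg.continuous.continuousOn
      hg.differentiableOn
    intro x hx; rw [interior_Icc] at hx; exact hpos x hx
  · right
    apply antitoneOn_of_deriv_nonpos (convex_Icc _ _) hg.continuous.continuousOn
      hg.differentiableOn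
    intro x hx; rw [interior_Icc] at hx; exact hneg x hx

lemma monoPieces_of_monotone {g : ℝ → ℝ} (h : Monotone g) : MonoPieces g 1 := by
  intro c d hcd
  refine ⟨fun i => if i = 0 then c else d, rfl, rfl, ?_, ?_⟩
  · intro i hi
    have : i = 0 := by omega
    subst this
    simp [hcd]
  · intro i _
    exact Or.inl (h.monotoneOn _)

lemma descend : ∀ m : ℕ, ∀ g : ℝ → ℝ, ContDiff ℝ (⊤:ℕ∞) g →
    Monotone (iteratedDeriv (m + 1) g) → MonoPieces (deriv g) (m + 1) := by
  intro m
  induction m with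
  | zero =>
    intro g _ hmono
    rw [iteratedDeriv_one] at hmono
    exact monoPieces_of_monotone hmono
  | succ m ih =>
    intro g hg hmono
    rw [iteratedDeriv_succ'] at hmono
    have hg' : ContDiff ℝ (⊤:ℕ∞) (deriv g) := (contDiff_infty_iff_deriv.mp hg).2
    have hd : Differentiable ℝ (deriv g) := (contDiff_infty_iff_deriv.mp hg').1
    exact monoPieces_step hd (ih (deriv g) hg' hmono)
/-! ### Derivative signs on monotone pieces, change of variables -/

lemma deriv_nonneg_of_monotoneOn {h : ℝ → ℝ} {u v x : ℝ} (hx : x ∈ Ioo u v)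
    (hd : DifferentiableAt ℝ h x) (hm : MonotoneOn h (Icc u v)) : 0 ≤ deriv h x := by
  have ht : Filter.Tendsto (slope h x) (nhdsWithin x {x}ᶜ) (nhds (deriv h x)) :=
    hasDerivAt_iff_tendsto_slope.mp hd.hasDerivAt
  apply ge_of_tendsto ht
  have hIoo : Ioo u v ∈ nhdsWithin x {x}ᶜ :=
    mem_nhdsWithin_of_mem_nhds (Ioo_mem_nhds hx.1 hx.2)
  filter_upwards [hIoo, self_mem_nhdsWithin] with y hy hyx
  have hyx' : y ≠ x := hyx
  have hxI : x ∈ Icc u v := Ioo_subset_Icc_self hx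
  have hyI : y ∈ Icc u v := Ioo_subset_Icc_self hy
  rcases lt_or_gt_of_ne hyx' with hlt | hgt
  · have h1 : h y ≤ h x := hm hyI hxI hlt.le
    have h2 : y - x < 0 := by linarith
    rw [slope_def_field]
    exact div_nonneg_of_nonpos (by linarith) h2.le
  · have h1 : h x ≤ h y := hm hxI hyI hgt.le
    have h2 : 0 < y - x := by linarith
    rw [slope_def_field]
    exact div_nonneg (by linarith) h2.le

lemma deriv_nonpos_of_antitoneOn {h : ℝ → ℝ} {u v x : ℝ} (hx : x ∈ Ioo u v)
    (hd : DifferentiableAt ℝ h x) (hm : AntitoneOn h (Icc u v)) : deriv h x ≤ 0 := by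
  have key : 0 ≤ deriv (fun y => -h y) x := deriv_nonneg_of_monotoneOn hx hd.neg hm.neg
  rw [deriv.fun_neg] at key
  linarith

lemma piece_bound {f2 : ℝ → ℝ} (hf2 : ContDiff ℝ (⊤:ℕ∞) f2) {ε : ℝ} (hε : 0 < ε)
    {u v : ℝ} (huv : u ≤ v)
    (hm : MonotoneOn f2 (Icc u v) ∨ AntitoneOn f2 (Icc u v)) :
    ∫ t in u..v, |deriv (th ε) (f2 t)| * |deriv f2 t| ≤ ε⁻¹ * V1 := by
  have hdiff : Differentiable ℝ f2 := hf2.differentiable (by simp)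
  have hdc : Continuous (deriv f2) := hf2.continuous_deriv (by exact_mod_cast le_top)
  have hg : Continuous (fun y => |deriv (th ε) y|) := (th_deriv_cont hε).abs
  have hcv : ∫ t in u..v, (fun y => |deriv (th ε) y|) (f2 t) * deriv f2 t
      = ∫ y in f2 u..f2 v, |deriv (th ε) y| := by
    exact intervalIntegral.integral_comp_mul_deriv
      (fun x _ => (hdiff x).hasDerivAt) hdc.continuousOn hg
  have hae : ∀ᵐ x : ℝ, x ≠ v := by
    rw [MeasureTheory.ae_iff]
    have : {x : ℝ | ¬ x ≠ v} = {v} := by ext x; simp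
    rw [this]
    exact measure_singleton v
  have htail : ∀ c d : ℝ, c ≤ d → ∫ y in c..d, |deriv (th ε) y| ≤ ε⁻¹ * V1 := by
    intro c d hcd
    rw [← th_deriv_abs_integral hε]
    rw [intervalIntegral.integral_of_le hcd]
    exact setIntegral_le_integral (th_deriv_abs_integrable hε)
      (Filter.Eventually.of_forall fun y => abs_nonneg _)
  rcases hm with hmono | hanti
  · have hsign : ∀ x ∈ Ioo u v, 0 ≤ deriv f2 x :=
      fun x hx => deriv_nonneg_of_monotoneOn hx (hdiff x) hmono
    have heq : ∫ t in u..v, |deriv (th ε) (f2 t)| * |deriv f2 t|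
        = ∫ t in u..v, |deriv (th ε) (f2 t)| * deriv f2 t := by
      apply intervalIntegral.integral_congr_ae
      filter_upwards [hae] with x hxv hxI
      rw [uIoc_of_le huv] at hxI
      have hxIoo : x ∈ Ioo u v := ⟨hxI.1, lt_of_le_of_ne hxI.2 hxv⟩
      rw [abs_of_nonneg (hsign x hxIoo)]
    rw [heq, hcv]
    exact htail _ _ (hmono ⟨le_refl u, huv⟩ ⟨huv, le_refl v⟩ huv)
  · have hsign : ∀ x ∈ Ioo u v, deriv f2 x ≤ 0 :=
      fun x hx => deriv_nonpos_of_antitoneOn hx (hdiff x) hanti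
    have heq : ∫ t in u..v, |deriv (th ε) (f2 t)| * |deriv f2 t|
        = -∫ t in u..v, |deriv (th ε) (f2 t)| * deriv f2 t := by
      rw [← intervalIntegral.integral_neg]
      apply intervalIntegral.integral_congr_ae
      filter_upwards [hae] with x hxv hxI
      rw [uIoc_of_le huv] at hxI
      have hxIoo : x ∈ Ioo u v := ⟨hxI.1, lt_of_le_of_ne hxI.2 hxv⟩
      rw [abs_of_nonpos (hsign x hxIoo)]
      ring
    rw [heq, hcv, ← intervalIntegral.integral_symm]
    exact htail _ _ (hanti ⟨le_refl u, huv⟩ ⟨huv, le_refl v⟩ huv)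

lemma partition_bound {f2 : ℝ → ℝ} (hf2 : ContDiff ℝ (⊤:ℕ∞) f2) {ε : ℝ} (hε : 0 < ε)
    {n : ℕ} {a : ℕ → ℝ} (hstep : ∀ i < n, a i ≤ a (i + 1))
    (hp : ∀ i < n, MonotoneOn f2 (Icc (a i) (a (i + 1))) ∨
      AntitoneOn f2 (Icc (a i) (a (i + 1)))) :
    ∫ t in (a 0)..(a n), |deriv (th ε) (f2 t)| * |deriv f2 t| ≤ n * (ε⁻¹ * V1) := by
  have hdc : Continuous (deriv f2) := hf2.continuous_deriv (by exact_mod_cast le_top)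
  have hcont : Continuous (fun t => |deriv (th ε) (f2 t)| * |deriv f2 t|) :=
    (((th_deriv_cont hε).comp (hf2.continuous)).abs).mul hdc.abs
  rw [← intervalIntegral.sum_integral_adjacent_intervals
    (fun k _ => hcont.intervalIntegrable _ _)]
  calc ∑ k ∈ Finset.range n, ∫ t in (a k)..(a (k + 1)), |deriv (th ε) (f2 t)| * |deriv f2 t|
      ≤ ∑ _k ∈ Finset.range n, ε⁻¹ * V1 := by
        apply Finset.sum_le_sum
        intro k hk
        exact piece_bound hf2 hε (hstep k (Finset.mem_range.mp hk))
          (hp k (Finset.mem_range.mp hk))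
  _ = n * (ε⁻¹ * V1) := by
        rw [Finset.sum_const, Finset.card_range, nsmul_eq_mul]

/-! ### Sup bound via the integral of the derivative -/

lemma abs_le_integral_abs_deriv {ρ : ℝ → ℝ} (hρ : ContDiff ℝ (⊤:ℕ∞) ρ)
    (hsupp : HasCompactSupport ρ) (t : ℝ) : |ρ t| ≤ ∫ s, |deriv ρ s| := by
  obtain ⟨R, hR⟩ := hsupp.isBounded.subset_closedBall (0:ℝ)
  set u := min t (-(R + 1)) with hu
  have hut : u ≤ t := min_le_left _ _
  have huR : u ≤ -(R + 1) := min_le_right _ _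
  have hu0 : ρ u = 0 := by
    apply image_eq_zero_of_notMem_tsupport
    intro hmem
    have := hR hmem
    rw [Metric.mem_closedBall, Real.dist_eq, sub_zero] at this
    have habs : -(u) ≤ |u| := neg_le_abs u
    linarith
  have hint : Integrable (fun s => |deriv ρ s|) :=
    ((hρ.continuous_deriv (by exact_mod_cast le_top)).integrable_of_hasCompactSupport
      hsupp.deriv).abs
  have hftc : ∫ y in u..t, deriv ρ y = ρ t - ρ u := by
    apply intervalIntegral.integral_deriv_eq_sub
    · intro x _
      exact (hρ.differentiable (by simp)).differentiableAt
    · exact ((hρ.continuous_deriv (by exact_mod_cast le_top)).intervalIntegrable _ _)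
  have h1 : |ρ t| = |∫ y in u..t, deriv ρ y| := by rw [hftc, hu0, sub_zero]
  rw [h1]
  calc |∫ y in u..t, deriv ρ y| ≤ ∫ y in u..t, |deriv ρ y| :=
        intervalIntegral.abs_integral_le_integral_abs hut
  _ ≤ ∫ s, |deriv ρ s| := by
        rw [intervalIntegral.integral_of_le hut]
        exact setIntegral_le_integral hint
          (Filter.Eventually.of_forall fun y => abs_nonneg _)
/-! ### Main estimate -/

theorem key_estimate {ρ f : ℝ → ℝ} {m : ℕ} (hm : 1 ≤ m)
    (hρ : ContDiff ℝ (⊤:ℕ∞) ρ) (hsupp : HasCompactSupport ρ)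
    (hf : ContDiff ℝ (⊤:ℕ∞) f) (hpieces : MonoPieces (deriv f) m)
    {φ : ℝ → ℝ} (hφ : CbSmooth φ) {ε : ℝ} (hε : 0 < ε) :
    (∫ t : ℝ, deriv φ (f t) * ρ t) ≤
      (V1 + 2) * (m : ℝ) * ε⁻¹ * supNorm φ * (∫ t : ℝ, |deriv ρ t|) +
      supNorm (deriv φ) * ∫ t in {t : ℝ | |deriv f t| ≤ 2 * ε}, |ρ t| := by
  have htop : (1:WithTop ℕ∞) ≤ ((⊤:ℕ∞):WithTop ℕ∞) := by exact_mod_cast le_top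
  -- basic regularity
  have hφ1 : ContDiff ℝ (⊤:ℕ∞) φ := hφ.1.of_le (by simp)
  have hφd : Differentiable ℝ φ := hφ1.differentiable (by simp)
  have hφ'c : Continuous (deriv φ) := hφ1.continuous_deriv htop
  have hfd : Differentiable ℝ f := hf.differentiable (by simp)
  have hf1 : ContDiff ℝ (⊤:ℕ∞) (deriv f) := (contDiff_infty_iff_deriv.mp hf).2
  have hf1d : Differentiable ℝ (deriv f) := hf1.differentiable (by simp)
  have hf1c : Continuous (deriv f) := hf1d.continuous
  have hf2c : Continuous (deriv (deriv f)) := hf1.continuous_deriv htop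
  have hρd : Differentiable ℝ ρ := hρ.differentiable (by simp)
  have hρc : Continuous ρ := hρd.continuous
  have hρ'c : Continuous (deriv ρ) := hρ.continuous_deriv htop
  have hρint : Integrable ρ := hρc.integrable_of_hasCompactSupport hsupp
  have hρ'int : Integrable (fun t => |deriv ρ t|) :=
    (hρ'c.integrable_of_hasCompactSupport hsupp.deriv).abs
  -- sup norm facts
  obtain ⟨M0, hM0⟩ := hφ.2 0
  rw [iteratedDeriv_zero] at hM0
  have hbdd0 : BddAbove (Set.range fun t => |φ t|) := ⟨M0, by rintro _ ⟨t, rfl⟩; exact hM0 t⟩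
  have hsupφ : ∀ y, |φ y| ≤ supNorm φ := fun y => le_ciSup hbdd0 y
  have hsupφ0 : 0 ≤ supNorm φ := le_trans (abs_nonneg (φ 0)) (hsupφ 0)
  obtain ⟨M1, hM1⟩ := hφ.2 1
  rw [iteratedDeriv_one] at hM1
  have hbdd1 : BddAbove (Set.range fun t => |deriv φ t|) := ⟨M1, by rintro _ ⟨t, rfl⟩; exact hM1 t⟩
  have hsupφ' : ∀ y, |deriv φ y| ≤ supNorm (deriv φ) := fun y => le_ciSup hbdd1 y
  have hsupφ'0 : 0 ≤ supNorm (deriv φ) := le_trans (abs_nonneg (deriv φ 0)) (hsupφ' 0)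
  -- N, support radius
  set N : ℝ := ∫ t : ℝ, |deriv ρ t| with hN
  have hN0 : 0 ≤ N := integral_nonneg fun t => abs_nonneg _
  have hρN : ∀ t, |ρ t| ≤ N := fun t => abs_le_integral_abs_deriv hρ hsupp t
  obtain ⟨R, hR⟩ := hsupp.isBounded.subset_closedBall (0:ℝ)
  set L : ℝ := |R| + 1 with hLdef
  have hL0 : 0 < L := by positivity
  have hρzero : ∀ t : ℝ, L ≤ |t| → ρ t = 0 := by
    intro t ht
    apply image_eq_zero_of_notMem_tsupport
    intro hmem
    have h2 := hR hmem
    rw [Metric.mem_closedBall, Real.dist_eq, sub_zero] at h2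
    have : R ≤ |R| := le_abs_self R
    linarith
  have hcd : -L ≤ L := by linarith
  -- the set S
  set S : Set ℝ := {t : ℝ | |deriv f t| ≤ 2 * ε} with hSdef
  have hSclosed : IsClosed S := isClosed_le (continuous_abs.comp hf1c) continuous_const
  -- split the integrand
  set F1 : ℝ → ℝ := fun t => (deriv φ (f t) * deriv f t) * (th ε (deriv f t) * ρ t) with hF1
  set F2 : ℝ → ℝ := fun t => deriv φ (f t) * chi1 (deriv f t / ε) * ρ t with hF2
  have hsplit : (fun t => deriv φ (f t) * ρ t) = fun t => F1 t + F2 t := by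
    funext t
    have hx := th_mul hε (deriv f t)
    simp only [hF1, hF2]
    linear_combination (-(deriv φ (f t) * ρ t)) * hx
  have hchic : Continuous (fun t : ℝ => chi1 (deriv f t / ε)) :=
    (chi1_smooth.continuous).comp ((hf1c.div_const ε))
  have hthc : Continuous (fun t : ℝ => th ε (deriv f t)) :=
    ((th_smooth hε).continuous).comp hf1c
  have hF1c : Continuous F1 :=
    ((hφ'c.comp hfd.continuous).mul hf1c).mul (hthc.mul hρc)
  have hF2c : Continuous F2 :=
    ((hφ'c.comp hfd.continuous).mul hchic).mul hρc
  have hF1supp : HasCompactSupport F1 := by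
    apply HasCompactSupport.intro hsupp
    intro t ht
    simp only [hF1]
    rw [image_eq_zero_of_notMem_tsupport ht]
    ring
  have hF2supp : HasCompactSupport F2 := by
    apply HasCompactSupport.intro hsupp
    intro t ht
    simp only [hF2]
    rw [image_eq_zero_of_notMem_tsupport ht]
    ring
  have hF1int : Integrable F1 := hF1c.integrable_of_hasCompactSupport hF1supp
  have hF2int : Integrable F2 := hF2c.integrable_of_hasCompactSupport hF2supp
  rw [hsplit, integral_add hF1int hF2int]
  -- Bound the second term
  have hB : ∫ t : ℝ, F2 t ≤ supNorm (deriv φ) * ∫ t in S, |ρ t| := by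
    have hvan : ∀ t, t ∉ S → F2 t = 0 := by
      intro t ht
      simp only [hSdef, mem_setOf_eq, not_le] at ht
      have habs : 2 ≤ |deriv f t / ε| := by
        rw [abs_div, abs_of_pos hε, le_div_iff₀ hε]
        linarith
      simp only [hF2, chi1_eq_zero habs]
      ring
    rw [← setIntegral_eq_integral_of_forall_compl_eq_zero hvan]
    have hmono : ∀ t ∈ S, F2 t ≤ supNorm (deriv φ) * |ρ t| := by
      intro t _
      calc F2 t ≤ |F2 t| := le_abs_self _
      _ = |deriv φ (f t)| * |chi1 (deriv f t / ε)| * |ρ t| := by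
          simp only [hF2]; rw [abs_mul, abs_mul]
      _ ≤ supNorm (deriv φ) * 1 * |ρ t| := by
          apply mul_le_mul_of_nonneg_right _ (abs_nonneg _)
          apply mul_le_mul (hsupφ' _) _ (abs_nonneg _) hsupφ'0
          rw [abs_of_nonneg (chi1_nonneg _)]
          exact chi1_le_one _
      _ = supNorm (deriv φ) * |ρ t| := by ring
    calc ∫ t in S, F2 t ≤ ∫ t in S, supNorm (deriv φ) * |ρ t| := by
          apply setIntegral_mono_on hF2int.integrableOn
            ((hρint.abs.const_mul _).integrableOn) hSclosed.measurableSet hmono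
    _ = supNorm (deriv φ) * ∫ t in S, |ρ t| := integral_const_mul _ _
  -- Bound the first term
  have hA : ∫ t : ℝ, F1 t ≤ (V1 + 2) * (m : ℝ) * ε⁻¹ * supNorm φ * N := by
    -- reduce to an interval integral
    have hvanI : ∀ t, t ∉ Ioc (-L) L → F1 t = 0 := by
      intro t ht
      have : ρ t = 0 := by
        apply hρzero
        simp only [mem_Ioc, not_and_or, not_lt, not_le] at ht
        rcases ht with h1 | h1
        · rw [abs_of_nonpos (by linarith)]; linarith
        · rw [abs_of_pos (by linarith)]; linarith
      simp only [hF1, this]; ring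
    have hredI : ∫ t : ℝ, F1 t = ∫ t in (-L)..L, F1 t := by
      rw [← setIntegral_eq_integral_of_forall_compl_eq_zero hvanI,
        intervalIntegral.integral_of_le hcd]
    rw [hredI]
    -- integration by parts
    set u : ℝ → ℝ := fun t => φ (f t) with hu
    set u' : ℝ → ℝ := fun t => deriv φ (f t) * deriv f t with hu'
    set v : ℝ → ℝ := fun t => th ε (deriv f t) * ρ t with hv
    set v' : ℝ → ℝ := fun t => (deriv (th ε) (deriv f t) * deriv (deriv f) t) * ρ t
      + th ε (deriv f t) * deriv ρ t with hv'
    have hud : ∀ x ∈ uIcc (-L) L, HasDerivAt u (u' x) x := by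
      intro x _
      exact (hφd (f x)).hasDerivAt.comp x (hfd x).hasDerivAt
    have hvd : ∀ x ∈ uIcc (-L) L, HasDerivAt v (v' x) x := by
      intro x _
      have h1 : HasDerivAt (fun t => th ε (deriv f t))
          (deriv (th ε) (deriv f x) * deriv (deriv f) x) x :=
        (((th_smooth hε).differentiable (by simp) (deriv f x)).hasDerivAt).comp x (hf1d x).hasDerivAt
      exact h1.mul (hρd x).hasDerivAt
    have hu'c : Continuous u' := (hφ'c.comp hfd.continuous).mul hf1c
    have hv'c : Continuous v' :=
      ((((th_deriv_cont hε).comp hf1c).mul hf2c).mul hρc).add (hthc.mul hρ'c)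
    have hparts : ∫ t in (-L)..L, (u' t * v t + u t * v' t) = u L * v L - u (-L) * v (-L) :=
      intervalIntegral.integral_deriv_mul_eq_sub hud hvd
        (hu'c.intervalIntegrable _ _) (hv'c.intervalIntegrable _ _)
    have hvL : v L = 0 := by
      simp only [hv]; rw [hρzero L (le_of_eq (abs_of_pos hL0).symm)]; ring
    have hvmL : v (-L) = 0 := by
      simp only [hv]; rw [hρzero (-L) (by rw [abs_neg]; exact le_of_eq (abs_of_pos hL0).symm)]; ring
    have hsum : ∫ t in (-L)..L, (u' t * v t + u t * v' t)
        = (∫ t in (-L)..L, u' t * v t) + ∫ t in (-L)..L, u t * v' t :=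
      intervalIntegral.integral_add
        ((hu'c.mul (hthc.mul hρc)).intervalIntegrable _ _)
        (((hφd.continuous.comp hfd.continuous).mul hv'c).intervalIntegrable _ _)
    have hF1uv : ∫ t in (-L)..L, F1 t = ∫ t in (-L)..L, u' t * v t := by
      apply intervalIntegral.integral_congr
      intro x _
      simp only [hF1, hu', hv]
    have hkey : ∫ t in (-L)..L, F1 t = - ∫ t in (-L)..L, u t * v' t := by
      rw [hF1uv]
      rw [hparts, hvL, hvmL] at hsum
      linarith [hsum]
    rw [hkey]
    -- bound |u v'| pointwise
    set X : ℝ → ℝ := fun t => |deriv (th ε) (deriv f t)| * |deriv (deriv f) t| with hX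
    have hXc : Continuous X := (((th_deriv_cont hε).comp hf1c).abs).mul hf2c.abs
    have hX0 : ∀ t, 0 ≤ X t := fun t => mul_nonneg (abs_nonneg _) (abs_nonneg _)
    set E : ℝ → ℝ := fun t => supNorm φ * (X t * N + ε⁻¹ * |deriv ρ t|) with hE
    have hEc : Continuous E := continuous_const.mul ((hXc.mul continuous_const).add
      (continuous_const.mul hρ'c.abs))
    have hptw : ∀ x ∈ Icc (-L) L, u x * v' x ≤ E x := by
      intro x _
      have h1 : |v' x| ≤ X x * N + ε⁻¹ * |deriv ρ x| := by
        calc |v' x| ≤ |(deriv (th ε) (deriv f x) * deriv (deriv f) x) * ρ x|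
            + |th ε (deriv f x) * deriv ρ x| := abs_add_le _ _
        _ = X x * |ρ x| + |th ε (deriv f x)| * |deriv ρ x| := by
            rw [abs_mul, abs_mul, abs_mul, hX]
        _ ≤ X x * N + ε⁻¹ * |deriv ρ x| := by
            apply add_le_add
            · exact mul_le_mul_of_nonneg_left (hρN x) (hX0 x)
            · exact mul_le_mul_of_nonneg_right (th_abs_le hε _) (abs_nonneg _)
      calc u x * v' x ≤ |u x * v' x| := le_abs_self _
      _ = |u x| * |v' x| := abs_mul _ _
      _ ≤ supNorm φ * (X x * N + ε⁻¹ * |deriv ρ x|) := by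
          apply mul_le_mul (hsupφ _) h1 (abs_nonneg _) hsupφ0
      _ = E x := rfl
    have hstep1 : - ∫ t in (-L)..L, u t * v' t ≤ ∫ t in (-L)..L, E t := by
      have h2 : ∫ t in (-L)..L, u t * v' t ≥ - ∫ t in (-L)..L, E t := by
        have h3 : ∀ x ∈ Icc (-L) L, -E x ≤ u x * v' x := by
          intro x hx
          have h4 := hptw x hx
          have h5 : |u x * v' x| ≤ E x := by
            calc |u x * v' x| = |u x| * |v' x| := abs_mul _ _
            _ ≤ supNorm φ * (X x * N + ε⁻¹ * |deriv ρ x|) := by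
                apply mul_le_mul (hsupφ _) _ (abs_nonneg _) hsupφ0
                calc |v' x| ≤ |(deriv (th ε) (deriv f x) * deriv (deriv f) x) * ρ x|
                    + |th ε (deriv f x) * deriv ρ x| := abs_add_le _ _
                _ = X x * |ρ x| + |th ε (deriv f x)| * |deriv ρ x| := by
                    rw [abs_mul, abs_mul, abs_mul, hX]
                _ ≤ X x * N + ε⁻¹ * |deriv ρ x| := by
                    apply add_le_add
                    · exact mul_le_mul_of_nonneg_left (hρN x) (hX0 x)
                    · exact mul_le_mul_of_nonneg_right (th_abs_le hε _) (abs_nonneg _)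
            _ = E x := rfl
          linarith [neg_abs_le (u x * v' x)]
        have hEint : IntervalIntegrable (fun t => -E t) volume (-L) L :=
          hEc.neg.intervalIntegrable _ _
        have huvint : IntervalIntegrable (fun t => u t * v' t) volume (-L) L :=
          ((hφd.continuous.comp hfd.continuous).mul hv'c).intervalIntegrable _ _
        have := intervalIntegral.integral_mono_on hcd hEint huvint h3
        rw [intervalIntegral.integral_neg] at this
        linarith
      linarith
    -- bound ∫ E
    obtain ⟨a, ha0, ham, hastep, hap⟩ := hpieces (-L) L hcd
    have hXbound : ∫ t in (-L)..L, X t ≤ (m:ℝ) * (ε⁻¹ * V1) := by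
      rw [← ha0, ← ham]
      exact partition_bound hf1 hε hastep hap
    have hX_intable : IntervalIntegrable X volume (-L) L := hXc.intervalIntegrable _ _
    have hρ'bound : ∫ t in (-L)..L, |deriv ρ t| ≤ N := by
      rw [intervalIntegral.integral_of_le hcd]
      exact setIntegral_le_integral hρ'int (Filter.Eventually.of_forall fun y => abs_nonneg _)
    have hEsplit : ∫ t in (-L)..L, E t
        = supNorm φ * ((∫ t in (-L)..L, X t) * N + ε⁻¹ * ∫ t in (-L)..L, |deriv ρ t|) := by
      rw [hE]
      rw [intervalIntegral.integral_const_mul]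
      congr 1
      rw [intervalIntegral.integral_add (hX_intable.mul_const N)
        ((hρ'c.abs.intervalIntegrable _ _).const_mul _)]
      rw [intervalIntegral.integral_mul_const, intervalIntegral.integral_const_mul]
    have hEbound : ∫ t in (-L)..L, E t ≤ supNorm φ * (((m:ℝ) * (ε⁻¹ * V1)) * N + ε⁻¹ * N) := by
      rw [hEsplit]
      apply mul_le_mul_of_nonneg_left _ hsupφ0
      apply add_le_add
      · exact mul_le_mul_of_nonneg_right hXbound hN0
      · exact mul_le_mul_of_nonneg_left hρ'bound (by positivity)
    have hfinal : supNorm φ * (((m:ℝ) * (ε⁻¹ * V1)) * N + ε⁻¹ * N)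
        ≤ (V1 + 2) * (m : ℝ) * ε⁻¹ * supNorm φ * N := by
      have hm1 : (1:ℝ) ≤ (m:ℝ) := by exact_mod_cast hm
      have h1 : supNorm φ * (((m:ℝ) * (ε⁻¹ * V1)) * N + ε⁻¹ * N)
          = ((m:ℝ) * V1 + 1) * (ε⁻¹ * supNorm φ * N) := by ring
      have h2 : (V1 + 2) * (m : ℝ) * ε⁻¹ * supNorm φ * N
          = ((V1 + 2) * (m:ℝ)) * (ε⁻¹ * supNorm φ * N) := by ring
      rw [h1, h2]
      apply mul_le_mul_of_nonneg_right _ (by positivity)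
      nlinarith [V1_nonneg]
    linarith
  exact add_le_add hA hB
end KeyCor

/-- **Key corollary.**  There is a universal constant `C > 1` such that: if
`ρ ∈ C_0^∞(ℝ)`, `f ∈ C^∞(ℝ)`, and either `k ≥ 3` and `f^{(k)} > 0` everywhere, or
`k = 2` and `f'' ≥ 0` everywhere, then for every `φ ∈ C_b^∞(ℝ)` and every `ε > 0`,
`∫ φ'(f(t)) ρ(t) dt ≤ C (k-1) ε⁻¹ ‖φ‖_∞ ‖ρ'‖_{L¹} + ‖φ'‖_∞ ∫_{|f'| ≤ 2ε} |ρ(t)| dt`. -/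
theorem key_corollary :
    ∃ C : ℝ, 1 < C ∧ ∀ (ρ f : ℝ → ℝ) (k : ℕ),
      ContDiff ℝ (⊤ : ℕ∞) ρ → HasCompactSupport ρ → ContDiff ℝ (⊤ : ℕ∞) f →
      ((3 ≤ k ∧ ∀ t : ℝ, 0 < iteratedDeriv k f t) ∨
        (k = 2 ∧ ∀ t : ℝ, 0 ≤ iteratedDeriv 2 f t)) →
      ∀ φ : ℝ → ℝ, CbSmooth φ → ∀ ε : ℝ, 0 < ε →
        (∫ t : ℝ, deriv φ (f t) * ρ t) ≤
          C * ((k - 1 : ℕ) : ℝ) * ε⁻¹ * supNorm φ * (∫ t : ℝ, |deriv ρ t|) +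
          supNorm (deriv φ) * ∫ t in {t : ℝ | |deriv f t| ≤ 2 * ε}, |ρ t| := by
  refine ⟨KeyCor.V1 + 2, by nlinarith [KeyCor.V1_nonneg], ?_⟩
  intro ρ f k hρ hsupp hf hcase φ hφ ε hε
  have htop : (1:WithTop ℕ∞) ≤ ((⊤:ℕ∞):WithTop ℕ∞) := by exact_mod_cast le_top
  have hρ' : ContDiff ℝ (⊤:ℕ∞) ρ := hρ.of_le (by simp)
  have hf' : ContDiff ℝ (⊤:ℕ∞) f := hf.of_le (by simp)
  rcases hcase with ⟨hk3, hpos⟩ | ⟨hk2, hnn⟩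
  · -- k ≥ 3
    have hmono : Monotone (iteratedDeriv (k - 1) f) := by
      apply StrictMono.monotone
      apply strictMono_of_deriv_pos
      intro x
      have heq : deriv (iteratedDeriv (k - 1) f) x = iteratedDeriv k f x := by
        rw [← iteratedDeriv_succ]
        congr 1
        omega
      rw [heq]; exact hpos x
    have hpieces : KeyCor.MonoPieces (deriv f) (k - 1) := by
      have heq : k - 2 + 1 = k - 1 := by omega
      have h1 := KeyCor.descend (k - 2) f hf' (by rw [heq]; exact hmono)
      rwa [heq] at h1
    exact KeyCor.key_estimate (by omega) hρ' hsupp hf' hpieces hφ hε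
  · -- k = 2
    subst hk2
    have hmono : Monotone (deriv f) := by
      apply monotone_of_deriv_nonneg ((contDiff_infty_iff_deriv.mp hf').2.differentiable (by simp))
      intro x
      have heq : deriv (deriv f) x = iteratedDeriv 2 f x := by
        rw [iteratedDeriv_succ, iteratedDeriv_one]
      rw [heq]; exact hnn x
    have hpieces : KeyCor.MonoPieces (deriv f) 1 := KeyCor.monoPieces_of_monotone hmono
    have h := KeyCor.key_estimate (le_refl 1) hρ' hsupp hf' hpieces hφ hε
    have heq : ((2 - 1 : ℕ) : ℝ) = ((1 : ℕ) : ℝ) := by norm_num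
    rw [heq]
    exact h
end
end

section
/- There exists a universal constant C > 1 such that for every ρ ∈ C_0^∞(ℝ), every d ∈ ℕ with d ≥ 1, every polynomial f ∈ 𝒫_d(ℝ), every φ ∈ C_b^∞(ℝ), and every ε > 0, one has ∫_ℝ φ'(f(t)) ρ(t) dt ≤ C d ε^{−1} ‖φ‖_∞ ‖ρ'‖_{L¹(ℝ)} + ‖φ'‖_∞ ∫_ℝ 1_{{|f'| ≤ 2ε}}(t) |ρ(t)| dt. -/
open MeasureTheory

noncomputable section

section Aux

open Polynomial


def mfun (ε x : ℝ) : ℝ := if x^2 ≤ 4*ε^2 then x*(8*ε^2 - x^2)/(16*ε^4) else x⁻¹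

def mderiv (ε x : ℝ) : ℝ := if x^2 ≤ 4*ε^2 then (8*ε^2 - 3*x^2)/(16*ε^4) else -(x^2)⁻¹

lemma mfun_eq_inv {ε x : ℝ} (hε : 0 < ε) (hx : 4*ε^2 ≤ x^2) : mfun ε x = x⁻¹ := by
  unfold mfun
  split_ifs with h
  · have hx2 : x^2 = 4*ε^2 := le_antisymm h hx
    have hx0 : x ≠ 0 := by intro h0; rw [h0] at hx2; nlinarith
    field_simp
    nlinarith [hx2]
  · rfl

lemma mfun_eq_poly {ε x : ℝ} (hx : x^2 ≤ 4*ε^2) :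
    mfun ε x = x*(8*ε^2 - x^2)/(16*ε^4) := if_pos hx

lemma hasDerivAt_mfun {ε : ℝ} (hε : 0 < ε) (x : ℝ) :
    HasDerivAt (mfun ε) (mderiv ε x) x := by
  have hpoly : ∀ y : ℝ, HasDerivAt (fun x : ℝ => x*(8*ε^2 - x^2)/(16*ε^4))
      ((8*ε^2 - 3*y^2)/(16*ε^4)) y := by
    intro y
    have h1 : HasDerivAt (fun x : ℝ => x*(8*ε^2 - x^2)/(16*ε^4))
        ((1*(8*ε^2 - y^2) + y*(0 - 2*y))/(16*ε^4)) y := by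
      exact (((hasDerivAt_id y).mul ((hasDerivAt_const y (8*ε^2)).sub
        ((hasDerivAt_pow 2 y).congr_deriv (by ring)))).div_const _)
    convert h1 using 1; ring
  rcases lt_trichotomy (x^2) (4*ε^2) with h | h | h
  · have hev : mfun ε =ᶠ[nhds x] fun x => x*(8*ε^2 - x^2)/(16*ε^4) := by
      have : {y : ℝ | y^2 < 4*ε^2} ∈ nhds x :=
        (isOpen_lt (by continuity) continuous_const).mem_nhds h
      filter_upwards [this] with y hy
      exact mfun_eq_poly hy.le
    have hm : mderiv ε x = (8*ε^2 - 3*x^2)/(16*ε^4) := if_pos h.le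
    rw [hm]
    exact (hpoly x).congr_of_eventuallyEq hev
  · -- boundary case x^2 = 4*ε^2
    have hx0 : x ≠ 0 := by intro h0; rw [h0] at h; nlinarith
    have hfac : (x - 2*ε)*(x + 2*ε) = 0 := by nlinarith
    have hm : mderiv ε x = -(x^2)⁻¹ := by
      have h1 : mderiv ε x = (8*ε^2 - 3*x^2)/(16*ε^4) := if_pos h.le
      rw [h1]
      rw [show (8*ε^2 - 3*x^2) = -(4*ε^2) by nlinarith, ← h]
      field_simp
      nlinarith [sq_nonneg x, hε]
    rw [hm]
    rcases mul_eq_zero.mp hfac with h2 | h2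
    · have hx2 : x = 2*ε := by linarith
      have hIci : HasDerivWithinAt (mfun ε) (-(x^2)⁻¹) (Set.Ici x) x := by
        refine HasDerivWithinAt.congr ((hasDerivAt_inv hx0).hasDerivWithinAt) ?_ ?_
        · intro y hy
          exact mfun_eq_inv hε (by simp only [Set.mem_Ici] at hy; nlinarith)
        · exact mfun_eq_inv hε h.ge
      have hIic : HasDerivWithinAt (mfun ε) (-(x^2)⁻¹) (Set.Iic x) x := by
        have hmem : Set.Ioi (-(2*ε)) ∈ nhds x := Ioi_mem_nhds (by rw [hx2]; nlinarith)
        rw [← hasDerivWithinAt_inter hmem]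
        have hval : -(x^2)⁻¹ = (8*ε^2 - 3*x^2)/(16*ε^4) := by
          rw [show (8*ε^2 - 3*x^2) = -(4*ε^2) by nlinarith, ← h]
          field_simp
          nlinarith [sq_nonneg x, hε]
        rw [hval]
        refine HasDerivWithinAt.congr ((hpoly x).hasDerivWithinAt) ?_ ?_
        · intro y hy
          obtain ⟨hy1, hy2⟩ := hy
          simp only [Set.mem_Iic] at hy1
          simp only [Set.mem_Ioi] at hy2
          refine mfun_eq_poly ?_
          rw [hx2] at hy1
          nlinarith
        · exact mfun_eq_poly h.le
      have := hIic.union hIci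
      rw [Set.Iic_union_Ici] at this
      exact hasDerivWithinAt_univ.mp this
    · have hx2 : x = -(2*ε) := by linarith
      have hIic : HasDerivWithinAt (mfun ε) (-(x^2)⁻¹) (Set.Iic x) x := by
        refine HasDerivWithinAt.congr ((hasDerivAt_inv hx0).hasDerivWithinAt) ?_ ?_
        · intro y hy
          exact mfun_eq_inv hε (by simp only [Set.mem_Iic] at hy; nlinarith)
        · exact mfun_eq_inv hε h.ge
      have hIci : HasDerivWithinAt (mfun ε) (-(x^2)⁻¹) (Set.Ici x) x := by
        have hmem : Set.Iio (2*ε) ∈ nhds x := Iio_mem_nhds (by rw [hx2]; nlinarith)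
        rw [← hasDerivWithinAt_inter hmem]
        have hval : -(x^2)⁻¹ = (8*ε^2 - 3*x^2)/(16*ε^4) := by
          rw [show (8*ε^2 - 3*x^2) = -(4*ε^2) by nlinarith, ← h]
          field_simp
          nlinarith [sq_nonneg x, hε]
        rw [hval]
        refine HasDerivWithinAt.congr ((hpoly x).hasDerivWithinAt) ?_ ?_
        · intro y hy
          obtain ⟨hy1, hy2⟩ := hy
          simp only [Set.mem_Ici] at hy1
          simp only [Set.mem_Iio] at hy2
          refine mfun_eq_poly ?_
          rw [hx2] at hy1
          nlinarith
        · exact mfun_eq_poly h.le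
      have := hIic.union hIci
      rw [Set.Iic_union_Ici] at this
      exact hasDerivWithinAt_univ.mp this
  · have hx0 : x ≠ 0 := by intro h0; rw [h0] at h; nlinarith
    have hev : mfun ε =ᶠ[nhds x] fun x => x⁻¹ := by
      have : {y : ℝ | 4*ε^2 < y^2} ∈ nhds x :=
        (isOpen_lt continuous_const (by continuity)).mem_nhds h
      filter_upwards [this] with y hy
      exact mfun_eq_inv hε hy.le
    have hm : mderiv ε x = -(x^2)⁻¹ := if_neg (not_le.mpr h)
    rw [hm]
    exact (hasDerivAt_inv hx0).congr_of_eventuallyEq hev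


lemma abs_mfun_le {ε : ℝ} (hε : 0 < ε) (x : ℝ) : |mfun ε x| ≤ 1/ε := by
  unfold mfun
  split_ifs with h
  · have habs : |x| ≤ 2*ε := by nlinarith [sq_abs x, abs_nonneg x]
    rw [abs_div, abs_of_pos (by positivity : (0:ℝ) < 16*ε^4),
      div_le_div_iff₀ (by positivity) hε, abs_mul,
      abs_of_nonneg (show (0:ℝ) ≤ 8*ε^2 - x^2 by nlinarith)]
    nlinarith [mul_nonneg (sub_nonneg.mpr habs) (show (0:ℝ) ≤ 8*ε^2 - x^2 by nlinarith),
      abs_nonneg x, sq_nonneg x, mul_pos hε hε]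
  · push_neg at h
    have hx0 : x ≠ 0 := by intro h0; rw [h0] at h; nlinarith
    rw [abs_inv, div_eq_mul_inv, one_mul]
    refine inv_anti₀ hε ?_
    nlinarith [sq_abs x, abs_nonneg x]

lemma mul_mfun_nonneg {ε : ℝ} (hε : 0 < ε) (x : ℝ) : 0 ≤ x * mfun ε x := by
  unfold mfun
  split_ifs with h
  · rw [mul_div_assoc']
    have h8 : 0 ≤ 8*ε^2 - x^2 := by nlinarith [sq_nonneg x]
    have : 0 ≤ x * (x * (8*ε^2 - x^2)) := by nlinarith [sq_nonneg x]
    positivity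
  · rcases eq_or_ne x 0 with h0 | h0
    · simp [h0]
    · rw [mul_inv_cancel₀ h0]; norm_num

lemma mul_mfun_le_one {ε : ℝ} (hε : 0 < ε) (x : ℝ) : x * mfun ε x ≤ 1 := by
  unfold mfun
  split_ifs with h
  · rw [mul_div_assoc', div_le_one (by positivity)]
    nlinarith [sq_nonneg (x^2 - 4*ε^2)]
  · rcases eq_or_ne x 0 with h0 | h0
    · simp [h0]
    · rw [mul_inv_cancel₀ h0]

lemma mul_mfun_eq_one {ε x : ℝ} (hε : 0 < ε) (h : 4*ε^2 < x^2) : x * mfun ε x = 1 := by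
  have hx0 : x ≠ 0 := by intro h0; rw [h0] at h; nlinarith
  rw [show mfun ε x = x⁻¹ from if_neg (not_le.mpr h), mul_inv_cancel₀ hx0]

lemma abs_mderiv_le {ε : ℝ} (hε : 0 < ε) (x : ℝ) : |mderiv ε x| ≤ 3/(x^2+ε^2) := by
  unfold mderiv
  have hd : (0:ℝ) < x^2+ε^2 := by positivity
  split_ifs with h
  · rw [abs_div, abs_of_pos (by positivity : (0:ℝ) < 16*ε^4),
      div_le_div_iff₀ (by positivity) hd]
    have habs : |8*ε^2 - 3*x^2| ≤ 8*ε^2 := by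
      rw [abs_le]; constructor <;> nlinarith [sq_nonneg x]
    nlinarith [abs_nonneg (8*ε^2 - 3*x^2), sq_nonneg x]
  · push_neg at h
    have hx0 : (0:ℝ) < x^2 := by nlinarith
    rw [abs_neg, abs_inv, abs_of_nonneg (sq_nonneg x)]
    rw [inv_eq_one_div, div_le_div_iff₀ hx0 hd]
    nlinarith

lemma abs_mderiv_le' {ε : ℝ} (hε : 0 < ε) (x : ℝ) : |mderiv ε x| ≤ 1/(2*ε^2) := by
  unfold mderiv
  split_ifs with h
  · rw [abs_div, abs_of_pos (by positivity : (0:ℝ) < 16*ε^4),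
      div_le_div_iff₀ (by positivity) (by positivity : (0:ℝ) < 2*ε^2)]
    have habs : |8*ε^2 - 3*x^2| ≤ 8*ε^2 := by
      rw [abs_le]; constructor <;> nlinarith [sq_nonneg x]
    nlinarith
  · push_neg at h
    have hx0 : (0:ℝ) < x^2 := by nlinarith
    rw [abs_neg, abs_inv, abs_of_nonneg (sq_nonneg x)]
    rw [inv_eq_one_div, div_le_div_iff₀ hx0 (by positivity : (0:ℝ) < 2*ε^2)]
    nlinarith

lemma sign_const {p : Polynomial ℝ} {a b : ℝ}
    (h : ∀ t ∈ Set.Ioo a b, p.eval t ≠ 0) :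
    (∀ t ∈ Set.Ioo a b, 0 < p.eval t) ∨ (∀ t ∈ Set.Ioo a b, p.eval t < 0) := by
  by_cases hp : ∀ t ∈ Set.Ioo a b, 0 < p.eval t
  · exact Or.inl hp
  · push_neg at hp
    obtain ⟨t₁, ht₁, ht₁'⟩ := hp
    refine Or.inr fun t₂ ht₂ => ?_
    by_contra h2
    push_neg at h2
    have hlt1 : p.eval t₁ < 0 := lt_of_le_of_ne ht₁' (h t₁ ht₁)
    have hlt2 : 0 < p.eval t₂ := lt_of_le_of_ne h2 (Ne.symm (h t₂ ht₂))
    have hsub : Set.uIcc t₁ t₂ ⊆ Set.Ioo a b := Set.ordConnected_Ioo.uIcc_subset ht₁ ht₂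
    obtain ⟨c, hc, hc0⟩ := intermediate_value_uIcc (a := t₁) (b := t₂)
      (Polynomial.continuous p).continuousOn (show (0:ℝ) ∈ Set.uIcc _ _ by
        rw [Set.mem_uIcc]; left; exact ⟨hlt1.le, hlt2.le⟩)
    exact h c (hsub hc) hc0

lemma base_est {ε : ℝ} (hε : 0 < ε) (q : Polynomial ℝ) {a b : ℝ} (hab : a ≤ b)
    (h : ∀ t ∈ Set.Ioo a b, q.derivative.eval t ≠ 0) :
    ∫ t in a..b, 3*|q.derivative.eval t|/((q.eval t)^2+ε^2) ≤ 3*Real.pi/ε := by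
  have hM : 0 < 3*Real.pi/ε := by positivity
  rcases eq_or_lt_of_le hab with rfl | hab'
  · simp [hM.le]
  have hF : ∀ t : ℝ, HasDerivAt (fun t => (3/ε) * Real.arctan (q.eval t / ε))
      (3 * q.derivative.eval t/((q.eval t)^2+ε^2)) t := by
    intro t
    have h1 : HasDerivAt (fun t : ℝ => Real.arctan (q.eval t / ε))
        ((1/(1+(q.eval t/ε)^2)) * (q.derivative.eval t/ε)) t :=
      (Real.hasDerivAt_arctan _).comp t ((q.hasDerivAt t).div_const ε)
    have h2 := h1.const_mul (3/ε)
    refine h2.congr_deriv ?_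
    have : (q.eval t)^2 + ε^2 > 0 := by positivity
    field_simp
    ring
  have hFbd : ∀ x y : ℝ, (3/ε) * Real.arctan x - (3/ε) * Real.arctan y ≤ 3*Real.pi/ε := by
    intro x y
    have h1 := Real.arctan_lt_pi_div_two x
    have h2 := Real.neg_pi_div_two_lt_arctan y
    rw [show 3*Real.pi/ε = (3/ε)*Real.pi by ring, ← mul_sub]
    have h3 : (0:ℝ) ≤ 3/ε := by positivity
    apply mul_le_mul_of_nonneg_left _ h3
    linarith
  have hint : IntervalIntegrable (fun t => 3 * q.derivative.eval t/((q.eval t)^2+ε^2))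
      volume a b :=
    (Continuous.div (continuous_const.mul (Polynomial.continuous _))
      (((Polynomial.continuous q).pow 2).add continuous_const)
      (fun t => (by positivity : (q.eval t)^2+ε^2 ≠ 0))).intervalIntegrable _ _
  rcases sign_const h with hs | hs
  · have hIcc : ∀ t ∈ Set.Icc a b, 0 ≤ q.derivative.eval t := by
      have hcl : Set.Icc a b ⊆ {t : ℝ | 0 ≤ q.derivative.eval t} := by
        rw [← closure_Ioo hab'.ne]
        exact (isClosed_le continuous_const (Polynomial.continuous _)).closure_subset_iff.mpr
          (fun t ht => (hs t ht).le)
      exact fun t ht => hcl ht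
    have heq : ∫ t in a..b, 3*|q.derivative.eval t|/((q.eval t)^2+ε^2)
        = ∫ t in a..b, 3*q.derivative.eval t/((q.eval t)^2+ε^2) := by
      refine intervalIntegral.integral_congr fun t ht => ?_
      rw [Set.uIcc_of_le hab] at ht
      rw [abs_of_nonneg (hIcc t ht)]
    rw [heq, intervalIntegral.integral_eq_sub_of_hasDerivAt (fun t _ => hF t) hint]
    exact hFbd _ _
  · have hIcc : ∀ t ∈ Set.Icc a b, q.derivative.eval t ≤ 0 := by
      have hcl : Set.Icc a b ⊆ {t : ℝ | q.derivative.eval t ≤ 0} := by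
        rw [← closure_Ioo hab'.ne]
        exact (isClosed_le (Polynomial.continuous _) continuous_const).closure_subset_iff.mpr
          (fun t ht => (hs t ht).le)
      exact fun t ht => hcl ht
    have heq : ∫ t in a..b, 3*|q.derivative.eval t|/((q.eval t)^2+ε^2)
        = ∫ t in a..b, -(3*q.derivative.eval t/((q.eval t)^2+ε^2)) := by
      refine intervalIntegral.integral_congr fun t ht => ?_
      rw [Set.uIcc_of_le hab] at ht
      rw [abs_of_nonpos (hIcc t ht)]
      ring
    rw [heq, intervalIntegral.integral_neg,
      intervalIntegral.integral_eq_sub_of_hasDerivAt (fun t _ => hF t) hint]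
    have := hFbd ((q.eval a)/ε) ((q.eval b)/ε)
    linarith [this]
lemma partition_est {ε : ℝ} (hε : 0 < ε) (q : Polynomial ℝ) :
    ∀ (k : ℕ) (a b : ℝ), a ≤ b →
    ((q.derivative.roots.toFinset.filter (fun r => r ∈ Set.Ioo a b)).card ≤ k) →
    ∫ t in a..b, 3*|q.derivative.eval t|/((q.eval t)^2+ε^2) ≤ (k+1)*(3*Real.pi/ε) := by
  have hM : 0 < 3*Real.pi/ε := by positivity
  by_cases hq0 : q.derivative = 0
  · intro k a b hab _
    have : ∀ t, 3*|q.derivative.eval t|/((q.eval t)^2+ε^2) = 0 := by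
      intro t; rw [hq0]; simp
    rw [intervalIntegral.integral_congr (fun t _ => this t)]
    simp only [intervalIntegral.integral_zero]
    positivity
  have hcont : Continuous fun t => 3*|q.derivative.eval t|/((q.eval t)^2+ε^2) :=
    Continuous.div (continuous_const.mul (Polynomial.continuous _).abs)
      (((Polynomial.continuous q).pow 2).add continuous_const)
      (fun t => by positivity)
  intro k
  induction k with
  | zero =>
    intro a b hab hcard
    have hempty : (q.derivative.roots.toFinset.filter (fun r => r ∈ Set.Ioo a b)) = ∅ :=
      Finset.card_eq_zero.mp (Nat.le_zero.mp hcard)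
    have hno : ∀ t ∈ Set.Ioo a b, q.derivative.eval t ≠ 0 := by
      intro t ht hzero
      have : t ∈ q.derivative.roots.toFinset.filter (fun r => r ∈ Set.Ioo a b) :=
        Finset.mem_filter.mpr ⟨Multiset.mem_toFinset.mpr ((mem_roots hq0).mpr hzero), ht⟩
      rw [hempty] at this
      exact absurd this (Finset.notMem_empty t)
    have hb := base_est hε q hab hno
    push_cast
    linarith
  | succ k ih =>
    intro a b hab hcard
    set S := q.derivative.roots.toFinset.filter (fun r => r ∈ Set.Ioo a b) with hS
    by_cases hSe : S = ∅
    · have hno : ∀ t ∈ Set.Ioo a b, q.derivative.eval t ≠ 0 := by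
        intro t ht hzero
        have : t ∈ S :=
          Finset.mem_filter.mpr ⟨Multiset.mem_toFinset.mpr ((mem_roots hq0).mpr hzero), ht⟩
        rw [hSe] at this
        exact absurd this (Finset.notMem_empty t)
      have hb := base_est hε q hab hno
      have hk : (0:ℝ) ≤ (k:ℝ) := Nat.cast_nonneg k
      push_cast
      nlinarith
    · have hne : S.Nonempty := Finset.nonempty_of_ne_empty hSe
      set r := S.min' hne with hr
      have hrS : r ∈ S := S.min'_mem hne
      have hrIoo : r ∈ Set.Ioo a b := (Finset.mem_filter.mp hrS).2
      have har : a ≤ r := hrIoo.1.le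
      have hrb : r ≤ b := hrIoo.2.le
      have hsplit : (∫ t in a..r, 3*|q.derivative.eval t|/((q.eval t)^2+ε^2)) +
          ∫ t in r..b, 3*|q.derivative.eval t|/((q.eval t)^2+ε^2) =
          ∫ t in a..b, 3*|q.derivative.eval t|/((q.eval t)^2+ε^2) :=
        intervalIntegral.integral_add_adjacent_intervals
          (hcont.intervalIntegrable _ _) (hcont.intervalIntegrable _ _)
      have h1 : ∫ t in a..r, 3*|q.derivative.eval t|/((q.eval t)^2+ε^2) ≤ 3*Real.pi/ε := by
        refine base_est hε q har fun t ht hzero => ?_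
        have htS : t ∈ S :=
          Finset.mem_filter.mpr ⟨Multiset.mem_toFinset.mpr ((mem_roots hq0).mpr hzero),
            ht.1, ht.2.trans hrIoo.2⟩
        exact absurd (S.min'_le t htS) (not_le.mpr ht.2)
      have h2 : ∫ t in r..b, 3*|q.derivative.eval t|/((q.eval t)^2+ε^2) ≤
          (↑k+1)*(3*Real.pi/ε) := by
        refine ih r b hrb ?_
        have hsub : (q.derivative.roots.toFinset.filter (fun s => s ∈ Set.Ioo r b)) ⊆
            S.erase r := by
          intro t ht
          simp only [Finset.mem_filter] at ht
          refine Finset.mem_erase.mpr ⟨ne_of_gt ht.2.1, ?_⟩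
          exact Finset.mem_filter.mpr ⟨ht.1, hrIoo.1.trans ht.2.1, ht.2.2⟩
        calc (q.derivative.roots.toFinset.filter (fun s => s ∈ Set.Ioo r b)).card
            ≤ (S.erase r).card := Finset.card_le_card hsub
          _ = S.card - 1 := Finset.card_erase_of_mem hrS
          _ ≤ k := by omega
      rw [← hsplit]
      push_cast
      have hexp : ((k:ℝ)+1+1)*(3*Real.pi/ε) = ((k:ℝ)+1)*(3*Real.pi/ε) + 3*Real.pi/ε := by ring
      linarith

lemma rho_abs_le {ρ : ℝ → ℝ} (hρ : ContDiff ℝ (⊤ : ℕ∞) ρ) (hsupp : HasCompactSupport ρ) (t : ℝ) :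
    |ρ t| ≤ ∫ t : ℝ, |deriv ρ t| := by
  have hρdc : Continuous (deriv ρ) := hρ.continuous_deriv (by simp)
  have hρ'int : Integrable (fun t => |deriv ρ t|) :=
    (hρdc.abs).integrable_of_hasCompactSupport hsupp.deriv.abs
  obtain ⟨r, hr⟩ := hsupp.isBounded.subset_closedBall 0
  set s : ℝ := min t (-(|r|+1)) with hs
  have hst : s ≤ t := min_le_left _ _
  have hsnot : ρ s = 0 := by
    apply image_eq_zero_of_notMem_tsupport
    intro hmem
    have := hr hmem
    rw [Metric.mem_closedBall, Real.dist_eq, sub_zero] at this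
    have h1 : s ≤ -(|r|+1) := min_le_right _ _
    have h2 : |s| ≤ r := this
    have := neg_abs_le s
    have := le_abs_self r
    linarith
  have hftc : ∫ x in s..t, deriv ρ x = ρ t - ρ s := by
    apply intervalIntegral.integral_deriv_eq_sub
    · exact fun x _ => (hρ.differentiable (by simp)).differentiableAt
    · exact hρdc.intervalIntegrable _ _
  have h1 : |ρ t| = |∫ x in s..t, deriv ρ x| := by rw [hftc, hsnot, sub_zero]
  rw [h1]
  calc |∫ x in s..t, deriv ρ x| ≤ ∫ x in s..t, |deriv ρ x| :=
      intervalIntegral.abs_integral_le_integral_abs hst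
    _ = ∫ x in Set.Ioc s t, |deriv ρ x| := intervalIntegral.integral_of_le hst
    _ ≤ ∫ x : ℝ, |deriv ρ x| := setIntegral_le_integral hρ'int
        (Filter.Eventually.of_forall fun x => abs_nonneg _)

lemma supNorm_bound {φ : ℝ → ℝ} (h : ∃ M : ℝ, ∀ t : ℝ, |φ t| ≤ M) (y : ℝ) :
    |φ y| ≤ ⨆ t : ℝ, |φ t| := by
  obtain ⟨M, hM⟩ := h
  exact le_ciSup ⟨M, fun x ⟨t, ht⟩ => ht ▸ hM t⟩ y


/-- **Key estimate for polynomial phases.**  There is a universal constant `C > 1`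
such that for every `ρ ∈ C_0^∞(ℝ)`, every `d ≥ 1`, every polynomial `f` of degree at
most `d`, every `φ ∈ C_b^∞(ℝ)` and every `ε > 0`,
`∫ φ'(f(t)) ρ(t) dt ≤ C d ε⁻¹ ‖φ‖_∞ ‖ρ'‖_{L¹} + ‖φ'‖_∞ ∫_{|f'| ≤ 2ε} |ρ(t)| dt`. -/
theorem key_polynomial :
    ∃ C : ℝ, 1 < C ∧ ∀ ρ : ℝ → ℝ, ContDiff ℝ (⊤ : ℕ∞) ρ → HasCompactSupport ρ →
      ∀ d : ℕ, 1 ≤ d → ∀ f : Polynomial ℝ, f.natDegree ≤ d →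
      ∀ φ : ℝ → ℝ, CbSmooth φ → ∀ ε : ℝ, 0 < ε →
        (∫ t : ℝ, deriv φ (f.eval t) * ρ t) ≤
          C * (d : ℝ) * ε⁻¹ * supNorm φ * (∫ t : ℝ, |deriv ρ t|) +
          supNorm (deriv φ) * ∫ t in {t : ℝ | |f.derivative.eval t| ≤ 2 * ε}, |ρ t| := by
  refine ⟨100, by norm_num, ?_⟩
  intro ρ hρ hsupp d hd f hfd φ hφcb ε hε
  obtain ⟨hφ, hφbd⟩ := hφcb
  set q : Polynomial ℝ := f.derivative with hq
  set p : Polynomial ℝ := q.derivative with hp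
  set D : ℝ := ∫ t : ℝ, |deriv ρ t| with hD
  set P : ℝ := supNorm φ with hP
  set Q : ℝ := supNorm (deriv φ) with hQdef
  set S : Set ℝ := {t : ℝ | |q.eval t| ≤ 2 * ε} with hSdef
  -- basic continuity facts
  have hφd : Differentiable ℝ φ := hφ.differentiable (by simp)
  have hφdc : Continuous (deriv φ) := hφ.continuous_deriv (by simp)
  have hρd : Differentiable ℝ ρ := hρ.differentiable (by simp)
  have hρdc : Continuous (deriv ρ) := hρ.continuous_deriv (by simp)
  have hρc : Continuous ρ := hρ.continuous
  have hmc : Continuous (mfun ε) := by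
    rw [continuous_iff_continuousAt]
    exact fun x => (hasDerivAt_mfun hε x).continuousAt
  -- sup norm bounds
  have hPbd : ∀ y : ℝ, |φ y| ≤ P := by
    obtain ⟨M, hM⟩ := hφbd 0
    simp only [iteratedDeriv_zero] at hM
    exact supNorm_bound ⟨M, hM⟩
  have hQbd : ∀ y : ℝ, |deriv φ y| ≤ Q := by
    obtain ⟨M, hM⟩ := hφbd 1
    simp only [iteratedDeriv_one] at hM
    exact supNorm_bound ⟨M, hM⟩
  have hP0 : 0 ≤ P := (abs_nonneg _).trans (hPbd 0)
  have hQ0 : 0 ≤ Q := (abs_nonneg _).trans (hQbd 0)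
  have hρbd : ∀ t : ℝ, |ρ t| ≤ D := rho_abs_le hρ hsupp
  have hD0 : 0 ≤ D := (abs_nonneg _).trans (hρbd 0)
  have hρ'int : Integrable (fun t => |deriv ρ t|) :=
    (hρdc.abs).integrable_of_hasCompactSupport hsupp.deriv.abs
  -- the functions in the integration by parts
  set u : ℝ → ℝ := fun t => φ (f.eval t) with hu_def
  set u' : ℝ → ℝ := fun t => deriv φ (f.eval t) * q.eval t with hu'_def
  set v : ℝ → ℝ := fun t => mfun ε (q.eval t) * ρ t with hv_def
  set v' : ℝ → ℝ := fun t =>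
    mderiv ε (q.eval t) * q.derivative.eval t * ρ t + mfun ε (q.eval t) * deriv ρ t with hv'_def
  have hu : ∀ t, HasDerivAt u (u' t) t := by
    intro t
    have h1 : HasDerivAt (fun x : ℝ => f.eval x) (q.eval t) t := f.hasDerivAt t
    exact ((hφd (f.eval t)).hasDerivAt).comp t h1
  have hv : ∀ t, HasDerivAt v (v' t) t := by
    intro t
    have h1 : HasDerivAt (fun x : ℝ => mfun ε (q.eval x))
        (mderiv ε (q.eval t) * q.derivative.eval t) t :=
      HasDerivAt.comp (h := fun x => q.eval x) t (hasDerivAt_mfun hε (q.eval t)) (q.hasDerivAt t)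
    exact h1.mul ((hρd t).hasDerivAt)
  -- continuity of the pieces
  have huc : Continuous u := hφd.continuous.comp f.continuous
  have hu'c : Continuous u' := (hφdc.comp f.continuous).mul q.continuous
  have hvc : Continuous v := (hmc.comp q.continuous).mul hρc
  have hv_supp : HasCompactSupport v := hsupp.mul_left
  -- integrability
  have huv : Integrable (u * v) :=
    (huc.mul hvc).integrable_of_hasCompactSupport hv_supp.mul_left
  have hu'v : Integrable (u' * v) :=
    (hu'c.mul hvc).integrable_of_hasCompactSupport hv_supp.mul_left
  have hmder_meas : Measurable (mderiv ε) := by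
    unfold mderiv
    exact Measurable.ite (measurableSet_le (by fun_prop) measurable_const)
      (by fun_prop) (by fun_prop)
  have hw1_meas : AEStronglyMeasurable
      (fun t => mderiv ε (q.eval t) * p.eval t * ρ t) volume := by
    refine Measurable.aestronglyMeasurable ?_
    exact ((hmder_meas.comp q.continuous.measurable).mul p.continuous.measurable).mul
      hρc.measurable
  have hw1dom : Integrable (fun t => (1/(2*ε^2)) * |p.eval t * ρ t|) := by
    refine Integrable.const_mul ?_ _
    exact ((p.continuous.mul hρc).abs).integrable_of_hasCompactSupport hsupp.mul_left.abs
  have hw1 : Integrable (fun t => mderiv ε (q.eval t) * p.eval t * ρ t) := by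
    refine hw1dom.mono' hw1_meas (Filter.Eventually.of_forall fun t => ?_)
    have h1 := abs_mderiv_le' hε (q.eval t)
    have h2 : |mderiv ε (q.eval t) * p.eval t * ρ t|
        = |mderiv ε (q.eval t)| * |p.eval t * ρ t| := by
      rw [mul_assoc, abs_mul]
    rw [Real.norm_eq_abs, h2]
    exact mul_le_mul_of_nonneg_right h1 (abs_nonneg _)
  have hw2 : Integrable (fun t => mfun ε (q.eval t) * deriv ρ t) :=
    ((hmc.comp q.continuous).mul hρdc).integrable_of_hasCompactSupport hsupp.deriv.mul_left
  have huv' : Integrable (u * v') := by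
    have : u * v' = (fun t => u t * (mderiv ε (q.eval t) * p.eval t * ρ t))
        + (fun t => u t * (mfun ε (q.eval t) * deriv ρ t)) := by
      funext t; simp only [Pi.mul_apply, Pi.add_apply, hv'_def]; ring
    rw [this]
    refine Integrable.add ?_ ?_
    · exact (hw1.bdd_mul huc.aestronglyMeasurable (Filter.Eventually.of_forall fun t => by
        rw [Real.norm_eq_abs]; exact hPbd _)).congr (Filter.Eventually.of_forall fun t => by ring)
    · exact (hw2.bdd_mul huc.aestronglyMeasurable (Filter.Eventually.of_forall fun t => by
        rw [Real.norm_eq_abs]; exact hPbd _)).congr (Filter.Eventually.of_forall fun t => by ring)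
  -- integration by parts
  have hibp : ∫ t : ℝ, u t * v' t = - ∫ t : ℝ, u' t * v t :=
    integral_mul_deriv_eq_deriv_mul_of_integrable (fun t _ => hu t) (fun t _ => hv t) huv' hu'v huv
  -- the B term
  set B : ℝ → ℝ := fun t =>
    deriv φ (f.eval t) * ((1 - q.eval t * mfun ε (q.eval t)) * ρ t) with hB_def
  have hBc : Continuous B :=
    (hφdc.comp f.continuous).mul (((continuous_const.sub
      (q.continuous.mul (hmc.comp q.continuous))).mul hρc))
  have hB_int : Integrable B :=
    hBc.integrable_of_hasCompactSupport hsupp.mul_left.mul_left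
  -- splitting the integral
  have hsplit : (∫ t : ℝ, deriv φ (f.eval t) * ρ t) =
      (∫ t : ℝ, u' t * v t) + ∫ t : ℝ, B t := by
    have h1 : Integrable (fun t => u' t * v t) := hu'v
    rw [← integral_add h1 hB_int]
    refine integral_congr_ae (Filter.Eventually.of_forall fun t => ?_)
    simp only [Pi.mul_apply, hu'_def, hv_def, hB_def]
    ring
  -- bound on S-membership
  have hSmeas : MeasurableSet S :=
    measurableSet_le (continuous_abs.comp q.continuous).measurable measurable_const
  -- bound for B
  have hB_bound : (∫ t : ℝ, B t) ≤ Q * ∫ t in S, |ρ t| := by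
    have hind : Integrable (S.indicator fun t => Q * |ρ t|) := by
      refine Integrable.indicator ?_ hSmeas
      exact (hρc.abs.integrable_of_hasCompactSupport hsupp.abs).const_mul Q
    have hptwise : ∀ t, B t ≤ S.indicator (fun t => Q * |ρ t|) t := by
      intro t
      by_cases htS : t ∈ S
      · rw [Set.indicator_of_mem htS]
        have h1 : 0 ≤ q.eval t * mfun ε (q.eval t) := mul_mfun_nonneg hε _
        have h2 : q.eval t * mfun ε (q.eval t) ≤ 1 := mul_mfun_le_one hε _
        calc B t ≤ |B t| := le_abs_self _
          _ = |deriv φ (f.eval t)| * (|1 - q.eval t * mfun ε (q.eval t)| * |ρ t|) := by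
              rw [hB_def]; simp [abs_mul]
          _ ≤ Q * (1 * |ρ t|) := by
              refine mul_le_mul (hQbd _) ?_ (by positivity) hQ0
              refine mul_le_mul ?_ le_rfl (abs_nonneg _) zero_le_one
              rw [abs_of_nonneg (by linarith)]; linarith
          _ = Q * |ρ t| := by ring
      · rw [Set.indicator_of_notMem htS]
        have h4 : 4*ε^2 < (q.eval t)^2 := by
          simp only [hSdef, Set.mem_setOf_eq, not_le] at htS
          nlinarith [sq_abs (q.eval t), abs_nonneg (q.eval t)]
        have : B t = 0 := by
          rw [hB_def]
          simp only [mul_mfun_eq_one hε h4]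
          ring
        rw [this]
    calc (∫ t : ℝ, B t) ≤ ∫ t : ℝ, S.indicator (fun t => Q * |ρ t|) t :=
        integral_mono hB_int hind hptwise
      _ = ∫ t in S, Q * |ρ t| := integral_indicator hSmeas
      _ = Q * ∫ t in S, |ρ t| := integral_const_mul Q _
  -- bound for the main term via IBP
  have hw2_bound : (∫ t : ℝ, |u t * (mfun ε (q.eval t) * deriv ρ t)|) ≤ P * ((1/ε) * D) := by
    have hint2 : Integrable (fun t => |u t * (mfun ε (q.eval t) * deriv ρ t)|) := by
      refine Integrable.abs ?_
      exact (hw2.bdd_mul huc.aestronglyMeasurable (Filter.Eventually.of_forall fun t => by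
        rw [Real.norm_eq_abs]; exact hPbd _)).congr (Filter.Eventually.of_forall fun t => by ring)
    have hint3 : Integrable (fun t => P * ((1/ε) * |deriv ρ t|)) := by
      exact (hρ'int.const_mul _).const_mul _
    calc (∫ t : ℝ, |u t * (mfun ε (q.eval t) * deriv ρ t)|)
        ≤ ∫ t : ℝ, P * ((1/ε) * |deriv ρ t|) := by
          refine integral_mono hint2 hint3 fun t => ?_
          rw [abs_mul, abs_mul]
          have h1 : |u t| ≤ P := hPbd _
          have h2 : |mfun ε (q.eval t)| ≤ 1/ε := abs_mfun_le hε _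
          have h3 : |mfun ε (q.eval t)| * |deriv ρ t| ≤ (1/ε) * |deriv ρ t| :=
            mul_le_mul_of_nonneg_right h2 (abs_nonneg _)
          exact mul_le_mul h1 h3 (by positivity) hP0
      _ = P * ((1/ε) * D) := by
          rw [integral_const_mul, integral_const_mul]
  -- bound for the w1 part
  obtain ⟨r, hr⟩ := hsupp.isBounded.subset_closedBall 0
  set N : ℝ := |r| with hN_def
  have hN0 : 0 ≤ N := abs_nonneg r
  have hsuppN : tsupport ρ ⊆ Set.Icc (-N) N := by
    intro x hx
    have := hr hx
    rw [Metric.mem_closedBall, Real.dist_eq, sub_zero] at this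
    have h1 : |x| ≤ N := this.trans (le_abs_self r)
    exact ⟨neg_le_of_abs_le h1, le_of_abs_le h1⟩
  have hcard : ((q.derivative.roots.toFinset.filter
      (fun s => s ∈ Set.Ioo (-N) N)).card ≤ d) := by
    have h1 : (q.derivative.roots.toFinset.filter
        (fun s => s ∈ Set.Ioo (-N) N)).card ≤ q.derivative.roots.toFinset.card :=
      Finset.card_filter_le _ _
    have h2 : q.derivative.roots.toFinset.card ≤ Multiset.card q.derivative.roots :=
      q.derivative.roots.toFinset_card_le
    have h3 : Multiset.card q.derivative.roots ≤ q.derivative.natDegree :=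
      q.derivative.card_roots'
    have h4 : q.derivative.natDegree ≤ d := by
      have h5 := Polynomial.natDegree_derivative_le q
      have h6 := Polynomial.natDegree_derivative_le f
      rw [← hq] at h6
      omega
    omega
  have hpart := partition_est hε q d (-N) N (by linarith) hcard
  have hgc : Continuous fun t => 3*|q.derivative.eval t|/((q.eval t)^2+ε^2) :=
    Continuous.div (continuous_const.mul (Polynomial.continuous _).abs)
      (((Polynomial.continuous q).pow 2).add continuous_const)
      (fun t => by positivity)
  have hw1_bound : (∫ t : ℝ, |u t * (mderiv ε (q.eval t) * p.eval t * ρ t)|)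
      ≤ P * (D * ((d+1)*(3*Real.pi/ε))) := by
    have hint1 : Integrable (fun t => |u t * (mderiv ε (q.eval t) * p.eval t * ρ t)|) := by
      refine Integrable.abs ?_
      exact (hw1.bdd_mul huc.aestronglyMeasurable (Filter.Eventually.of_forall fun t => by
        rw [Real.norm_eq_abs]; exact hPbd _)).congr (Filter.Eventually.of_forall fun t => by ring)
    have hindint : Integrable ((Set.Icc (-N) N).indicator
        (fun t => P * (D * (3*|p.eval t|/((q.eval t)^2+ε^2))))) := by
      have hcc : Continuous (fun t => P * (D * (3*|p.eval t|/((q.eval t)^2+ε^2)))) :=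
        continuous_const.mul (continuous_const.mul (by rw [hp]; exact hgc))
      exact (hcc.continuousOn.integrableOn_compact isCompact_Icc).integrable_indicator
        measurableSet_Icc
    have hptw : ∀ t, |u t * (mderiv ε (q.eval t) * p.eval t * ρ t)| ≤
        (Set.Icc (-N) N).indicator
        (fun t => P * (D * (3*|p.eval t|/((q.eval t)^2+ε^2)))) t := by
      intro t
      by_cases ht : t ∈ Set.Icc (-N) N
      · rw [Set.indicator_of_mem ht]
        have h1 : |u t| ≤ P := hPbd _
        have h2 : |mderiv ε (q.eval t)| ≤ 3/((q.eval t)^2+ε^2) := abs_mderiv_le hε _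
        have h3 : |ρ t| ≤ D := hρbd t
        have heq : |u t * (mderiv ε (q.eval t) * p.eval t * ρ t)| =
            |u t| * (|mderiv ε (q.eval t)| * |p.eval t| * |ρ t|) := by
          rw [abs_mul, abs_mul, abs_mul]
        rw [heq]
        have h5 : |mderiv ε (q.eval t)| * |p.eval t| * |ρ t|
            ≤ (3/((q.eval t)^2+ε^2)) * |p.eval t| * D := by
          have := abs_nonneg (p.eval t)
          have := abs_nonneg (ρ t)
          have := abs_nonneg (mderiv ε (q.eval t))
          have h7 : (0:ℝ) ≤ 3/((q.eval t)^2+ε^2) := by positivity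
          exact mul_le_mul (mul_le_mul h2 le_rfl (by linarith) h7) h3 (by linarith)
            (by positivity)
        calc |u t| * (|mderiv ε (q.eval t)| * |p.eval t| * |ρ t|)
            ≤ P * ((3/((q.eval t)^2+ε^2)) * |p.eval t| * D) :=
              mul_le_mul h1 (h5.trans le_rfl) (by positivity) hP0
          _ = P * (D * (3*|p.eval t|/((q.eval t)^2+ε^2))) := by ring
      · rw [Set.indicator_of_notMem ht]
        have hz : ρ t = 0 := image_eq_zero_of_notMem_tsupport (fun hc => ht (hsuppN hc))
        rw [hz]
        simp
    calc (∫ t : ℝ, |u t * (mderiv ε (q.eval t) * p.eval t * ρ t)|)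
        ≤ ∫ t : ℝ, (Set.Icc (-N) N).indicator
            (fun t => P * (D * (3*|p.eval t|/((q.eval t)^2+ε^2)))) t :=
          integral_mono hint1 hindint hptw
      _ = ∫ t in Set.Icc (-N) N, P * (D * (3*|p.eval t|/((q.eval t)^2+ε^2))) :=
          integral_indicator measurableSet_Icc
      _ = P * (D * (∫ t in Set.Icc (-N) N, 3*|p.eval t|/((q.eval t)^2+ε^2))) := by
          rw [integral_const_mul, integral_const_mul]
      _ ≤ P * (D * ((d+1)*(3*Real.pi/ε))) := by
          have he : (∫ t in Set.Icc (-N) N, 3*|p.eval t|/((q.eval t)^2+ε^2))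
              = ∫ t in (-N)..N, 3*|q.derivative.eval t|/((q.eval t)^2+ε^2) := by
            rw [intervalIntegral.integral_of_le (by linarith : -N ≤ N)]
            rw [integral_Icc_eq_integral_Ioc]
          rw [he]
          refine mul_le_mul_of_nonneg_left ?_ hP0
          exact mul_le_mul_of_nonneg_left hpart hD0
  -- combine the IBP bounds
  have huv'_int : Integrable (fun t => u t * v' t) := huv'
  have hu'v_bound : (∫ t : ℝ, u' t * v t)
      ≤ P * (D * ((d+1)*(3*Real.pi/ε))) + P * ((1/ε) * D) := by
    have h0 : (∫ t : ℝ, u' t * v t) = - ∫ t : ℝ, u t * v' t := by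
      rw [hibp]; ring
    rw [h0]
    have h1 : - (∫ t : ℝ, u t * v' t) ≤ |∫ t : ℝ, u t * v' t| := neg_le_abs _
    have h2 : |∫ t : ℝ, u t * v' t| ≤ ∫ t : ℝ, |u t * v' t| := by
      have := norm_integral_le_integral_norm (μ := volume) (fun t => u t * v' t)
      simp only [Real.norm_eq_abs] at this
      exact this
    have hint1 : Integrable (fun t => |u t * (mderiv ε (q.eval t) * p.eval t * ρ t)|) := by
      refine Integrable.abs ?_
      exact (hw1.bdd_mul huc.aestronglyMeasurable (Filter.Eventually.of_forall fun t => by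
        rw [Real.norm_eq_abs]; exact hPbd _)).congr (Filter.Eventually.of_forall fun t => by ring)
    have hint2 : Integrable (fun t => |u t * (mfun ε (q.eval t) * deriv ρ t)|) := by
      refine Integrable.abs ?_
      exact (hw2.bdd_mul huc.aestronglyMeasurable (Filter.Eventually.of_forall fun t => by
        rw [Real.norm_eq_abs]; exact hPbd _)).congr (Filter.Eventually.of_forall fun t => by ring)
    have h3 : (∫ t : ℝ, |u t * v' t|)
        ≤ ∫ t : ℝ, (|u t * (mderiv ε (q.eval t) * p.eval t * ρ t)|
            + |u t * (mfun ε (q.eval t) * deriv ρ t)|) := by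
      refine integral_mono (huv'_int.abs) (hint1.add hint2) fun t => ?_
      have : u t * v' t = u t * (mderiv ε (q.eval t) * p.eval t * ρ t)
          + u t * (mfun ε (q.eval t) * deriv ρ t) := by
        simp only [hv'_def]; ring
      rw [this]
      exact abs_add_le _ _
    have h4 : (∫ t : ℝ, (|u t * (mderiv ε (q.eval t) * p.eval t * ρ t)|
            + |u t * (mfun ε (q.eval t) * deriv ρ t)|))
        = (∫ t : ℝ, |u t * (mderiv ε (q.eval t) * p.eval t * ρ t)|)
          + ∫ t : ℝ, |u t * (mfun ε (q.eval t) * deriv ρ t)| :=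
      integral_add hint1 hint2
    linarith [hw1_bound, hw2_bound]
  -- final arithmetic
  rw [hsplit]
  have harith : P * (D * ((d+1)*(3*Real.pi/ε))) + P * ((1/ε) * D)
      ≤ 100 * (d:ℝ) * ε⁻¹ * P * D := by
    have hd1 : (1:ℝ) ≤ (d:ℝ) := by exact_mod_cast hd
    have hpi := Real.pi_le_four
    have hpi0 := Real.pi_pos
    have hco : ((d:ℝ)+1)*(3*Real.pi) + 1 ≤ 100*(d:ℝ) := by nlinarith
    calc P * (D * ((d+1)*(3*Real.pi/ε))) + P * ((1/ε) * D)
        = P * D * (((d:ℝ)+1)*(3*Real.pi) + 1) / ε := by ring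
      _ ≤ P * D * (100*(d:ℝ)) / ε := by
          have h8 : (0:ℝ) ≤ P * D := mul_nonneg hP0 hD0
          gcongr
      _ = 100 * (d:ℝ) * ε⁻¹ * P * D := by
          ring
  linarith [hB_bound, hu'v_bound, harith]

end Aux
end
end

section
/- Let μ be an absolutely continuous finite positive Borel measure on ℝ with a bounded density ρ, let k ∈ ℕ, and let E ⊂ ℝ be a measurable set with μ(E) > 0. Then there exist points a₀, …, a_k ∈ E such that for every m ∈ {0, …, k}, ‖ρ‖_∞^k · ∏_{j=0, j≠m}^{k} |a_j − a_m| ≥ (μ(E)/(4e))^k. -/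
/-!
Put `L = ‖ρ‖_∞`, so that `μ ≤ L • volume`. Then `F x = μ (E ∩ Iic x)` is `L`-Lipschitz and
increases continuously from `0` to `μ E`, so with `c = μ E / (2(k+1))` one can pick `a_i ∈ E` with
`F a_i ∈ [(2i + 1/2) c, (2i + 3/2) c]`. These windows are `c` apart, hence
`L |a_j - a_i| ≥ |F a_j - F a_i| ≥ |j - i| c` and `L^k ∏_{j ≠ m} |a_j - a_m| ≥ c^k m! (k-m)!`.
Finally `m! (k-m)! ≥ k! / 2^k ≥ ((k+1) / (2e))^k`.
-/

open MeasureTheory Set Filter Topology Real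
open scoped ENNReal NNReal Nat

section MeasureIic

variable {ν : Measure ℝ} [IsFiniteMeasure ν]

lemma monotone_measureReal_Iic : Monotone fun x => ν.real (Iic x) :=
  fun _ _ h => measureReal_mono (Iic_subset_Iic.2 h)

lemma measureReal_Iic_sub_measureReal_Iic {x y : ℝ} (h : x ≤ y) :
    ν.real (Iic y) - ν.real (Iic x) = ν.real (Ioc x y) := by
  rw [← Iic_union_Ioc_eq_Iic h, measureReal_union (Iic_disjoint_Ioc le_rfl) measurableSet_Ioc]
  ring

lemma lipschitzWith_measureReal_Iic {L : ℝ≥0} (hν : ν ≤ (L : ℝ≥0∞) • volume) :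
    LipschitzWith L fun x => ν.real (Iic x) := by
  refine LipschitzWith.of_dist_le_mul fun x y => ?_
  wlog h : y ≤ x generalizing x y
  · rw [dist_comm, dist_comm x]
    exact this y x (le_of_not_ge h)
  have hIoc : ν (Ioc y x) ≤ ENNReal.ofReal (L * (x - y)) :=
    calc ν (Ioc y x) ≤ ((L : ℝ≥0∞) • volume) (Ioc y x) := hν _
      _ = ENNReal.ofReal (L * (x - y)) := by
        rw [Measure.smul_apply, Real.volume_Ioc, smul_eq_mul, ENNReal.ofReal_mul L.coe_nonneg,
          ENNReal.ofReal_coe_nnreal]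
  rw [Real.dist_eq, Real.dist_eq, abs_of_nonneg (sub_nonneg.2 (monotone_measureReal_Iic h)),
    abs_of_nonneg (sub_nonneg.2 h), measureReal_Iic_sub_measureReal_Iic h]
  exact ENNReal.toReal_le_of_le_ofReal (mul_nonneg L.coe_nonneg (sub_nonneg.2 h)) hIoc

lemma tendsto_measureReal_Iic_atBot : Tendsto (fun x => ν.real (Iic x)) atBot (𝓝 0) := by
  have h := tendsto_measure_iInter_atBot (μ := ν)
    (fun _ => measurableSet_Iic.nullMeasurableSet) monotone_Iic ⟨0, measure_ne_top ν _⟩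
  rw [iInter_Iic_eq_empty_iff.2 (by simp [not_bddBelow_univ]), measure_empty] at h
  exact (ENNReal.tendsto_toReal ENNReal.zero_ne_top).comp h

lemma tendsto_measureReal_Iic_atTop :
    Tendsto (fun x => ν.real (Iic x)) atTop (𝓝 (ν.real univ)) :=
  (ENNReal.tendsto_toReal (measure_ne_top ν _)).comp (tendsto_measure_Iic_atTop ν)

lemma exists_measureReal_Iic_eq (hν : Continuous fun x => ν.real (Iic x)) {t : ℝ}
    (ht₀ : 0 < t) (ht : t < ν.real univ) : ∃ x, ν.real (Iic x) = t :=
  mem_range_of_exists_le_of_exists_ge hν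
    ((tendsto_measureReal_Iic_atBot.eventually (gt_mem_nhds ht₀)).exists.imp fun _ => le_of_lt)
    ((tendsto_measureReal_Iic_atTop.eventually (lt_mem_nhds ht)).exists.imp fun _ => le_of_lt)

end MeasureIic

lemma exists_mem_measureReal_restrict_Iic_mem_Icc {μ : Measure ℝ} {E : Set ℝ}
    [IsFiniteMeasure (μ.restrict E)] (hμE : Continuous fun x => (μ.restrict E).real (Iic x))
    {u v : ℝ} (hu : 0 < u) (huv : u < v) (hv : v < μ.real E) :
    ∃ a ∈ E, (μ.restrict E).real (Iic a) ∈ Icc u v := by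
  rw [← measureReal_restrict_apply_univ] at hv
  obtain ⟨x, hx⟩ := exists_measureReal_Iic_eq hμE hu (huv.trans hv)
  obtain ⟨y, hy⟩ := exists_measureReal_Iic_eq hμE (hu.trans huv) hv
  have hxy : x < y := monotone_measureReal_Iic.reflect_lt (by rwa [hx, hy])
  have hpos : 0 < (μ.restrict E).real (Ioc x y) := by
    rw [← measureReal_Iic_sub_measureReal_Iic hxy.le, hx, hy]
    linarith
  obtain ⟨a, haI, haE⟩ : (Ioc x y ∩ E).Nonempty := by
    refine nonempty_of_measure_ne_zero (μ := μ) ?_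
    rw [← Measure.restrict_apply measurableSet_Ioc]
    exact (ENNReal.toReal_pos_iff.1 hpos).1.ne'
  exact ⟨a, haE, hx ▸ monotone_measureReal_Iic haI.1.le, hy ▸ monotone_measureReal_Iic haI.2⟩

lemma abs_natCast_sub_mul_le_abs_sub {c x y : ℝ} {i j : ℕ}
    (hx : x ∈ Icc ((2 * i + 1 / 2) * c) ((2 * i + 3 / 2) * c))
    (hy : y ∈ Icc ((2 * j + 1 / 2) * c) ((2 * j + 3 / 2) * c)) :
    |(j : ℝ) - i| * c ≤ |y - x| := by
  obtain ⟨hx₁, hx₂⟩ := hx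
  obtain ⟨hy₁, hy₂⟩ := hy
  have hc : 0 ≤ c := by nlinarith
  rcases lt_trichotomy i j with hij | rfl | hij
  · have : (i : ℝ) + 1 ≤ j := by exact_mod_cast hij
    rw [abs_of_nonneg (by linarith), abs_of_nonneg (by nlinarith)]
    nlinarith
  · simp
  · have : (j : ℝ) + 1 ≤ i := by exact_mod_cast hij
    rw [abs_of_nonpos (by linarith), abs_of_nonpos (by nlinarith)]
    nlinarith

theorem exists_separated_points_of_le_smul_volume {μ : Measure ℝ} {E : Set ℝ} {L : ℝ}
    (hμL : μ ≤ ENNReal.ofReal L • volume) (hE : μ E ≠ ∞) (hμE : 0 < μ E) (k : ℕ) :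
    ∃ a : Fin (k + 1) → ℝ, (∀ i, a i ∈ E) ∧ ∀ i j : Fin (k + 1),
      |((j : ℕ) : ℝ) - i| * (μ.real E / (2 * (k + 1))) ≤ L * |a j - a i| := by
  have : IsFiniteMeasure (μ.restrict E) := isFiniteMeasure_restrict.2 hE
  have hL : 0 ≤ L := by
    by_contra! h
    exact hμE.not_ge (by simpa [ENNReal.ofReal_of_nonpos h.le] using hμL E)
  have hF : LipschitzWith L.toNNReal fun x => (μ.restrict E).real (Iic x) :=
    lipschitzWith_measureReal_Iic (Measure.restrict_le_self.trans hμL)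
  set c := μ.real E / (2 * (k + 1)) with hc_def
  have hc : 0 < c := div_pos (ENNReal.toReal_pos hμE.ne' hE) (by positivity)
  have hwindow (i : Fin (k + 1)) : ∃ a ∈ E, (μ.restrict E).real (Iic a) ∈
      Icc ((2 * (i : ℕ) + 1 / 2) * c) ((2 * (i : ℕ) + 3 / 2) * c) := by
    have hik : ((i : ℕ) : ℝ) + 1 ≤ k + 1 := by exact_mod_cast i.isLt
    have hmass : μ.real E = 2 * (k + 1) * c := by rw [hc_def]; field_simp
    exact exists_mem_measureReal_restrict_Iic_mem_Icc hF.continuous (by positivity)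
      (by nlinarith) (by nlinarith)
  choose a haE haF using hwindow
  refine ⟨a, haE, fun i j => ?_⟩
  calc |((j : ℕ) : ℝ) - i| * c
      ≤ |(μ.restrict E).real (Iic (a j)) - (μ.restrict E).real (Iic (a i))| :=
        abs_natCast_sub_mul_le_abs_sub (haF i) (haF j)
    _ ≤ L * |a j - a i| := by
        simpa [Real.dist_eq, Real.coe_toNNReal _ hL] using hF.dist_le_mul (a j) (a i)

lemma withDensity_ofReal_le_smul {α : Type*} [MeasurableSpace α] {ν : Measure α} {ρ : α → ℝ}
    {L : ℝ} (h : ∀ᵐ x ∂ν, ρ x ≤ L) :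
    ν.withDensity (fun x => ENNReal.ofReal (ρ x)) ≤ ENNReal.ofReal L • ν := by
  rw [← withDensity_const]
  exact withDensity_mono (h.mono fun x hx => ENNReal.ofReal_le_ofReal hx)

lemma add_one_pow_le_exp_one_pow_mul_factorial (n : ℕ) :
    ((n : ℝ) + 1) ^ n ≤ exp 1 ^ n * n ! := by
  induction n with
  | zero => simp
  | succ n ih =>
    have hstep : ((n : ℝ) + 1 + 1) ^ (n + 1) ≤ ((n : ℝ) + 1) ^ (n + 1) * exp 1 :=
      calc ((n : ℝ) + 1 + 1) ^ (n + 1)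
          = ((n : ℝ) + 1) ^ (n + 1) * (1 + ((n + 1 : ℕ) : ℝ)⁻¹) ^ (n + 1) := by
            rw [← mul_pow]; push_cast; field_simp
        _ ≤ ((n : ℝ) + 1) ^ (n + 1) * exp 1 := by gcongr; exact one_add_inv_pow_le_exp
    calc (((n + 1 : ℕ) : ℝ) + 1) ^ (n + 1) ≤ ((n : ℝ) + 1) * ((n : ℝ) + 1) ^ n * exp 1 := by
          push_cast; rw [← pow_succ']; exact hstep
      _ ≤ ((n : ℝ) + 1) * (exp 1 ^ n * n !) * exp 1 := by gcongr
      _ = exp 1 ^ (n + 1) * (n + 1)! := by push_cast [Nat.factorial_succ]; ring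

lemma add_one_div_two_mul_exp_one_pow_le_factorial_mul_factorial {k m : ℕ} (hm : m ≤ k) :
    (((k : ℝ) + 1) / (2 * exp 1)) ^ k ≤ (m ! * (k - m)! : ℕ) := by
  have hchoose : (k ! : ℝ) ≤ 2 ^ k * (m ! * (k - m)! : ℕ) := by
    rw [← Nat.choose_mul_factorial_mul_factorial hm, mul_assoc]
    push_cast
    gcongr
    exact_mod_cast Nat.choose_le_two_pow k m
  rw [div_pow, div_le_iff₀ (by positivity)]
  calc ((k : ℝ) + 1) ^ k ≤ exp 1 ^ k * k ! := add_one_pow_le_exp_one_pow_mul_factorial k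
    _ ≤ exp 1 ^ k * (2 ^ k * (m ! * (k - m)! : ℕ)) := by gcongr
    _ = (m ! * (k - m)! : ℕ) * (2 * exp 1) ^ k := by ring

lemma prod_erase_abs_natCast_sub (k : ℕ) (m : Fin (k + 1)) :
    ∏ j ∈ Finset.univ.erase m, |((j : ℕ) : ℝ) - m| = (m ! * (k - m)! : ℕ) := by
  have hsplit : Finset.univ.erase m = Finset.Iio m ∪ Finset.Ioi m := by
    ext j
    simp only [Finset.mem_erase, Finset.mem_univ, and_true, Finset.mem_union, Finset.mem_Iio,
      Finset.mem_Ioi]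
    omega
  rw [hsplit, Finset.prod_union (Finset.disjoint_left.2 fun j h₁ h₂ => by
    simp only [Finset.mem_Iio, Finset.mem_Ioi] at h₁ h₂; exact lt_asymm h₁ h₂)]
  have hlow : ∏ j ∈ Finset.Iio m, |((j : ℕ) : ℝ) - m| = (m ! : ℕ) :=
    calc ∏ j ∈ Finset.Iio m, |((j : ℕ) : ℝ) - m|
        = ∏ n ∈ (Finset.Iio m).map Fin.valEmbedding, |(n : ℝ) - m| := by
          rw [Finset.prod_map]; rfl
      _ = ∏ n ∈ Finset.range m, ((m - n : ℕ) : ℝ) := by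
          rw [Fin.map_valEmbedding_Iio, Nat.Iio_eq_range]
          refine Finset.prod_congr rfl fun n hn => ?_
          rw [Finset.mem_range] at hn
          rw [abs_sub_comm, abs_of_nonneg (by simp; omega), Nat.cast_sub hn.le]
      _ = (m ! : ℕ) := by
          rw [← Nat.cast_prod, ← Nat.descFactorial_eq_prod_range, Nat.descFactorial_self]
  have hhigh : ∏ j ∈ Finset.Ioi m, |((j : ℕ) : ℝ) - m| = ((k - m)! : ℕ) :=
    calc ∏ j ∈ Finset.Ioi m, |((j : ℕ) : ℝ) - m|
        = ∏ n ∈ (Finset.Ioi m).map Fin.valEmbedding, |(n : ℝ) - m| := by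
          rw [Finset.prod_map]; rfl
      _ = ∏ i ∈ Finset.range (k - m), ((i + 1 : ℕ) : ℝ) := by
          rw [Fin.map_valEmbedding_Ioi, ← Finset.Ico_add_one_left_eq_Ioo,
            Finset.prod_Ico_eq_prod_range]
          refine Finset.prod_congr (by congr 1; omega) fun i _ => ?_
          push_cast
          rw [show (m : ℝ) + 1 + i - m = i + 1 by ring, abs_of_nonneg (by positivity)]
      _ = ((k - m)! : ℕ) := by rw [← Nat.cast_prod, Finset.prod_range_add_one_eq_factorial]
  rw [hlow, hhigh]
  push_cast
  ring

theorem points_selection_general (μ : Measure ℝ) (hfin : IsFiniteMeasure μ) (ρ : ℝ → ℝ)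
    (hρ0 : ∀ x, 0 ≤ ρ x)
    (hd : μ = volume.withDensity fun x => ENNReal.ofReal (ρ x))
    (hbdd : ∃ M : ℝ, ∀ᵐ x ∂(volume : Measure ℝ), ρ x ≤ M)
    (k : ℕ) (E : Set ℝ) (hμE : 0 < μ E) :
    ∃ a : Fin (k + 1) → ℝ, (∀ i, a i ∈ E) ∧
      ∀ m : Fin (k + 1),
        ((μ E).toReal / (4 * Real.exp 1)) ^ k ≤
          (essSup (fun x => |ρ x|) (volume : Measure ℝ)) ^ k *
            ∏ j ∈ Finset.univ.erase m, |a j - a m| := by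
  obtain ⟨M, hM⟩ := hbdd
  set L := essSup (fun x => |ρ x|) volume
  have hρL : ∀ᵐ x ∂volume, ρ x ≤ L := by
    have hρM : IsBoundedUnder (· ≤ ·) (ae volume) fun x => |ρ x| :=
      ⟨M, eventually_map.2 (hM.mono fun x hx => (abs_of_nonneg (hρ0 x)).trans_le hx)⟩
    filter_upwards [ae_le_essSup hρM] with x hx using (le_abs_self _).trans hx
  obtain ⟨a, haE, hsep⟩ := exists_separated_points_of_le_smul_volume
    (hd ▸ withDensity_ofReal_le_smul hρL) (measure_ne_top μ E) hμE k
  refine ⟨a, haE, fun m => ?_⟩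
  set c := μ.real E / (2 * (k + 1)) with hc_def
  have hcard : (Finset.univ.erase m).card = k := by simp
  calc ((μ E).toReal / (4 * exp 1)) ^ k = c ^ k * (((k : ℝ) + 1) / (2 * exp 1)) ^ k := by
        rw [← mul_pow, hc_def, measureReal_def]
        field_simp
        ring
    _ ≤ c ^ k * (m ! * (k - m)! : ℕ) := by
        gcongr
        exact add_one_div_two_mul_exp_one_pow_le_factorial_mul_factorial (Nat.lt_succ_iff.1 m.isLt)
    _ = ∏ j ∈ Finset.univ.erase m, |((j : ℕ) : ℝ) - m| * c := by
        rw [Finset.prod_mul_distrib, Finset.prod_const, hcard, prod_erase_abs_natCast_sub, mul_comm]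
    _ ≤ ∏ j ∈ Finset.univ.erase m, L * |a j - a m| :=
        Finset.prod_le_prod (fun _ _ => by positivity) fun j _ => hsep m j
    _ = L ^ k * ∏ j ∈ Finset.univ.erase m, |a j - a m| := by
        rw [Finset.prod_mul_distrib, Finset.prod_const, hcard]

/-- **Selection of well-separated points in a set of positive measure.**
Let `μ` be an absolutely continuous finite positive Borel measure on `ℝ` with a bounded
density `ρ`, and let `E` be a measurable set of positive `μ`-measure.  Then there exist
points `a₀, …, a_k ∈ E` such that for every `m ∈ {0, …, k}`,
`‖ρ‖_∞^k · ∏_{j ≠ m} |a_j - a_m| ≥ (μ(E)/(4e))^k`. -/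
theorem points_selection (μ : Measure ℝ) (hfin : IsFiniteMeasure μ) (ρ : ℝ → ℝ)
    (hρ0 : ∀ x, 0 ≤ ρ x)
    (hd : μ = volume.withDensity fun x => ENNReal.ofReal (ρ x))
    (hbdd : ∃ M : ℝ, ∀ᵐ x ∂(volume : Measure ℝ), ρ x ≤ M)
    (k : ℕ) (E : Set ℝ) (hE : MeasurableSet E) (hμE : 0 < μ E) :
    ∃ a : Fin (k + 1) → ℝ, (∀ i, a i ∈ E) ∧
      ∀ m : Fin (k + 1),
        ((μ E).toReal / (4 * Real.exp 1)) ^ k ≤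
          (essSup (fun x => |ρ x|) (volume : Measure ℝ)) ^ k *
            ∏ j ∈ Finset.univ.erase m, |a j - a m| :=
  points_selection_general μ hfin ρ hρ0 hd hbdd k E hμE
end

section
/- Let μ be an absolutely continuous finite positive Borel measure on ℝ with a bounded density ρ. Let k ∈ ℕ and let f ∈ C^∞(ℝ) be such that f^{(k)}(t) ≥ 1 for all t ∈ ℝ. Then μ({t ∈ ℝ : |f(t)| ≤ ε}) ≤ 8 e k ‖ρ‖_∞ · ε^{1/k} for every ε > 0. -/
open MeasureTheory Finset Polynomial
open scoped ENNReal

noncomputable section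

lemma contDiff_polyEval (P : ℝ[X]) : ContDiff ℝ (⊤ : ℕ∞) (fun x => P.eval x) := by
  induction P using Polynomial.induction_on' with
  | add p q hp hq => simpa [Polynomial.eval_add] using hp.add hq
  | monomial n a =>
    simpa [Polynomial.eval_monomial] using (contDiff_const (c := a)).mul (contDiff_id.pow n)

lemma iteratedDeriv_sub' (n : ℕ) (f h : ℝ → ℝ) (hf : ContDiff ℝ (⊤ : ℕ∞) f)
    (hh : ContDiff ℝ (⊤ : ℕ∞) h) :
    iteratedDeriv n (fun x => f x - h x) = fun x => iteratedDeriv n f x - iteratedDeriv n h x := by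
  induction n generalizing f h with
  | zero => simp
  | succ n ih =>
    have hf' : ContDiff ℝ (⊤ : ℕ∞) (deriv f) := (contDiff_infty_iff_deriv.mp hf).2
    have hh' : ContDiff ℝ (⊤ : ℕ∞) (deriv h) := (contDiff_infty_iff_deriv.mp hh).2
    rw [iteratedDeriv_succ', iteratedDeriv_succ', iteratedDeriv_succ']
    have : deriv (fun x => f x - h x) = fun x => deriv f x - deriv h x := by
      funext x
      exact deriv_sub ((contDiff_infty_iff_deriv.mp hf).1 x) ((contDiff_infty_iff_deriv.mp hh).1 x)
    rw [this, ih _ _ hf' hh']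

lemma genRolle : ∀ (n : ℕ) (g : ℝ → ℝ), ContDiff ℝ (⊤ : ℕ∞) g → ∀ t : ℕ → ℝ,
    (∀ i < n, t i < t (i+1)) → (∀ i ≤ n, g (t i) = 0) →
    ∃ ξ ∈ Set.Icc (t 0) (t n), iteratedDeriv n g ξ = 0 := by
  intro n
  induction n with
  | zero =>
    intro g _ t _ hz
    exact ⟨t 0, ⟨le_refl _, le_refl _⟩, by simpa using hz 0 le_rfl⟩
  | succ n ih =>
    intro g hg t ht hz
    have hc : ∀ i, ∃ c, i ≤ n → (c ∈ Set.Ioo (t i) (t (i+1)) ∧ deriv g c = 0) := by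
      intro i
      by_cases hi : i ≤ n
      · obtain ⟨c, hc1, hc2⟩ := exists_deriv_eq_zero (ht i (Nat.lt_succ_of_le hi))
          (hg.continuous.continuousOn)
          (by rw [hz i (hi.trans n.le_succ), hz (i+1) (Nat.succ_le_succ hi)])
        exact ⟨c, fun _ => ⟨hc1, hc2⟩⟩
      · exact ⟨0, fun h => absurd h hi⟩
    choose s hs using hc
    have hg' : ContDiff ℝ (⊤ : ℕ∞) (deriv g) := (contDiff_infty_iff_deriv.mp hg).2
    obtain ⟨ξ, hξ1, hξ2⟩ := ih (deriv g) hg' s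
      (fun i hi => lt_trans ((hs i (le_of_lt hi)).1.2) ((hs (i+1) hi).1.1))
      (fun i hi => (hs i hi).2)
    refine ⟨ξ, ⟨le_trans (le_of_lt (hs 0 n.zero_le).1.1) hξ1.1,
      le_trans hξ1.2 (le_of_lt (hs n le_rfl).1.2)⟩, ?_⟩
    rw [iteratedDeriv_succ']
    exact hξ2

lemma polyIter (P : ℝ[X]) (k : ℕ) :
    iteratedDeriv k (fun x => P.eval x) = fun x => (derivative^[k] P).eval x := by
  induction k with
  | zero => simp
  | succ k ih =>
    rw [iteratedDeriv_succ, ih, Function.iterate_succ_apply']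
    funext x
    exact Polynomial.deriv _

lemma divdiff (k : ℕ) (f : ℝ → ℝ) (hf : ContDiff ℝ (⊤ : ℕ∞) f) (t : ℕ → ℝ)
    (ht : ∀ i j, i < j → j ≤ k → t i < t j) :
    ∃ ξ, iteratedDeriv k f ξ =
      (Nat.factorial k) * ∑ i ∈ Finset.range (k+1), f (t i) *
        ∏ j ∈ (Finset.range (k+1)).erase i, (t i - t j)⁻¹ := by
  have hinj : Set.InjOn t (Finset.range (k+1) : Set ℕ) := by
    intro a ha b hb hab
    simp only [Finset.coe_range, Set.mem_Iio] at ha hb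
    rcases lt_trichotomy a b with h | h | h
    · exact absurd hab (ne_of_lt (ht a b h (Nat.lt_succ_iff.mp hb)))
    · exact h
    · exact absurd hab.symm (ne_of_lt (ht b a h (Nat.lt_succ_iff.mp ha)))
  set P : ℝ[X] := Lagrange.interpolate (Finset.range (k+1)) t (fun i => f (t i)) with hP
  have hcoeff : P.coeff k = ∑ i ∈ Finset.range (k+1), f (t i) *
      ∏ j ∈ (Finset.range (k+1)).erase i, (t i - t j)⁻¹ := by
    rw [hP, Lagrange.interpolate_apply, Polynomial.finset_sum_coeff]
    refine Finset.sum_congr rfl fun i hi => ?_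
    rw [Polynomial.coeff_C_mul]
    congr 1
    have hdeg : (Lagrange.basis (Finset.range (k+1)) t i).natDegree = k := by
      rw [Lagrange.natDegree_basis hinj hi]; simp
    have hlc : (Lagrange.basis (Finset.range (k+1)) t i).coeff k =
        (Lagrange.basis (Finset.range (k+1)) t i).leadingCoeff := by
      rw [Polynomial.leadingCoeff, hdeg]
    rw [hlc, Lagrange.basis, Polynomial.leadingCoeff_prod]
    refine Finset.prod_congr rfl fun j hj => ?_
    rw [Lagrange.basisDivisor, Polynomial.leadingCoeff_mul, Polynomial.leadingCoeff_C,
      (Polynomial.monic_X_sub_C (t j)).leadingCoeff, mul_one]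
  have hdegP : P.natDegree ≤ k := by
    have h1 := Lagrange.degree_interpolate_lt (r := fun i => f (t i)) hinj
    rw [Finset.card_range] at h1
    by_cases hz : P = 0
    · simp [hz]
    · have := Polynomial.degree_eq_natDegree hz ▸ h1
      exact_mod_cast Nat.lt_succ_iff.mp (by exact_mod_cast this)
  have hiterP : derivative^[k] P = C ((Nat.factorial k) * P.coeff k) := by
    have h0 : (derivative^[k] P).natDegree = 0 := by
      have := Polynomial.natDegree_iterate_derivative P k
      omega
    have h2 := Polynomial.eq_C_of_natDegree_eq_zero h0
    rw [h2, Polynomial.coeff_iterate_derivative]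
    simp [Nat.descFactorial_self, mul_comm]
  set g : ℝ → ℝ := fun x => f x - P.eval x with hg
  have hgC : ContDiff ℝ (⊤ : ℕ∞) g := hf.sub (contDiff_polyEval P)
  have hgz : ∀ i ≤ k, g (t i) = 0 := by
    intro i hi
    have := Lagrange.eval_interpolate_at_node (fun i => f (t i)) hinj
      (Finset.mem_range.mpr (Nat.lt_succ_of_le hi))
    simp only [hg, hP, this, sub_self]
  obtain ⟨ξ, _, hξ2⟩ := genRolle k g hgC t (fun i hi => ht i (i+1) i.lt_succ_self hi) hgz
  refine ⟨ξ, ?_⟩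
  have hsub := iteratedDeriv_sub' k f (fun x => P.eval x) hf (contDiff_polyEval P)
  have : iteratedDeriv k f ξ = iteratedDeriv k (fun x => P.eval x) ξ := by
    have := congrFun hsub ξ
    rw [show iteratedDeriv k g = iteratedDeriv k (fun x => f x - P.eval x) from rfl] at hξ2
    rw [this] at hξ2
    linarith [hξ2]
  rw [this, polyIter, hiterP, ← hcoeff]
  simp


lemma prod_range_sub_eq_factorial (i : ℕ) : ∏ j ∈ range i, (i - j) = Nat.factorial i := by
  rw [← Finset.prod_range_reflect (fun j => i - j) i]
  rw [← Finset.prod_range_add_one_eq_factorial i]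
  refine Finset.prod_congr rfl fun j hj => ?_
  have := Finset.mem_range.mp hj
  omega

lemma prodAbs (k i : ℕ) (hik : i ≤ k) :
    ∏ j ∈ (Finset.range (k+1)).erase i, |(i:ℝ) - (j:ℝ)| =
      (Nat.factorial i) * (Nat.factorial (k-i)) := by
  have hsplit : (Finset.range (k+1)).erase i = Finset.range i ∪ Finset.Ico (i+1) (k+1) := by
    ext j
    simp only [Finset.mem_erase, Finset.mem_range, Finset.mem_union, Finset.mem_Ico]
    omega
  have hdisj : Disjoint (Finset.range i) (Finset.Ico (i+1) (k+1)) := by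
    rw [Finset.disjoint_left]
    intro j hj hj'
    simp only [Finset.mem_range] at hj
    simp only [Finset.mem_Ico] at hj'
    omega
  rw [hsplit, Finset.prod_union hdisj]
  have h1 : ∏ j ∈ Finset.range i, |(i:ℝ) - (j:ℝ)| = Nat.factorial i := by
    rw [← prod_range_sub_eq_factorial i, Nat.cast_prod]
    refine Finset.prod_congr rfl fun j hj => ?_
    have hj' := Finset.mem_range.mp hj
    have hji : (j:ℝ) ≤ (i:ℝ) := by exact_mod_cast hj'.le
    rw [abs_of_nonneg (by linarith)]
    push_cast [Nat.cast_sub hj'.le]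
    ring
  have h2 : ∏ j ∈ Finset.Ico (i+1) (k+1), |(i:ℝ) - (j:ℝ)| = Nat.factorial (k-i) := by
    rw [Finset.prod_Ico_eq_prod_range]
    have : k + 1 - (i + 1) = k - i := by omega
    rw [this, ← Finset.prod_range_add_one_eq_factorial (k-i), Nat.cast_prod]
    refine Finset.prod_congr rfl fun j hj => ?_
    have : |(i:ℝ) - ((i + 1 + j : ℕ):ℝ)| = ((j+1 : ℕ):ℝ) := by
      push_cast
      rw [abs_of_nonpos (by linarith)]
      ring
    rw [this]
  rw [h1, h2]

noncomputable def Tseq (E' : Set ℝ) (d : ℝ) : ℕ → ℝ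
  | 0 => sInf E'
  | (i+1) => sInf (E' ∩ Set.Ici (Tseq E' d i + d))

set_option maxHeartbeats 2000000 in
lemma vol_sublevel (k : ℕ) (hk : 0 < k) (f : ℝ → ℝ) (hf : ContDiff ℝ (⊤ : ℕ∞) f)
    (hfk : ∀ t : ℝ, 1 ≤ iteratedDeriv k f t) (ε : ℝ) (hε : 0 < ε) :
    volume {t : ℝ | |f t| ≤ ε} ≤ ENNReal.ofReal (2 * k * ε ^ (1 / (k:ℝ))) := by
  set E := {t : ℝ | |f t| ≤ ε} with hE
  set B := 2 * (k:ℝ) * ε ^ (1 / (k:ℝ)) with hBdef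
  have hk' : (0:ℝ) < k := by exact_mod_cast hk
  have hrpos : (0:ℝ) < ε ^ (1 / (k:ℝ)) := Real.rpow_pos_of_pos hε _
  have hB0 : 0 < B := by positivity
  by_contra hcon
  push_neg at hcon
  have hEc : IsClosed E := isClosed_le (continuous_abs.comp hf.continuous) continuous_const
  -- find a bounded piece of large measure
  have hUn : ⋃ n : ℕ, (E ∩ Set.Icc (-(n:ℝ)) n) = E := by
    ext x
    simp only [Set.mem_iUnion, Set.mem_inter_iff, Set.mem_Icc]
    constructor
    · rintro ⟨n, hx, _⟩; exact hx
    · intro hx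
      refine ⟨⌈|x|⌉₊, hx, ?_, ?_⟩
      · have := Nat.le_ceil |x|
        have := neg_abs_le x
        linarith
      · have := Nat.le_ceil |x|
        have := le_abs_self x
        linarith
  have hmono : Monotone (fun n : ℕ => E ∩ Set.Icc (-(n:ℝ)) n) := by
    intro a b hab
    apply Set.inter_subset_inter_right
    apply Set.Icc_subset_Icc <;> · simp only [neg_le_neg_iff, Nat.cast_le]; exact_mod_cast hab
  have hsup : volume E = ⨆ n : ℕ, volume (E ∩ Set.Icc (-(n:ℝ)) n) := by
    conv_lhs => rw [← hUn]
    exact hmono.directed_le.measure_iUnion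
  rw [hsup] at hcon
  obtain ⟨n, hn⟩ := lt_iSup_iff.mp hcon
  set E' := E ∩ Set.Icc (-(n:ℝ)) n with hE'def
  have hE'c : IsClosed E' := hEc.inter isClosed_Icc
  have hE'bdd : BddBelow E' := (bddBelow_Icc).mono Set.inter_subset_right
  have hE'fin : volume E' < ⊤ :=
    lt_of_le_of_lt (measure_mono Set.inter_subset_right)
      (by rw [Real.volume_Icc]; exact ENNReal.ofReal_lt_top)
  set m := (volume E').toReal with hmdef
  have hvol : volume E' = ENNReal.ofReal m := (ENNReal.ofReal_toReal hE'fin.ne).symm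
  have hBm : B < m := by
    rw [hvol] at hn
    exact (ENNReal.ofReal_lt_ofReal_iff_of_nonneg hB0.le).mp hn
  have hm0 : 0 < m := hB0.trans hBm
  set d := (B + m) / (2 * k) with hddef
  have hd0 : 0 < d := by positivity
  have hdB : 2 * ε ^ (1 / (k:ℝ)) < d := by
    rw [hddef, lt_div_iff₀ (by positivity)]
    rw [hBdef] at hBm ⊢
    nlinarith
  have hkd : (k:ℝ) * d < m := by
    have h : (k:ℝ) * d = (B + m) / 2 := by rw [hddef]; field_simp
    rw [h]; linarith
  have hE'ne : E'.Nonempty := by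
    rw [Set.nonempty_iff_ne_empty]
    intro h
    rw [h] at hn
    simp at hn
  -- the sequence of points
  set T : ℕ → ℝ := Tseq E' d with hTdef
  have hT0 : T 0 = sInf E' := rfl
  have hTs : ∀ i, T (i+1) = sInf (E' ∩ Set.Ici (T i + d)) := fun i => rfl
  have key : ∀ i, i ≤ k → (T i ∈ E' ∧
      volume (E' ∩ Set.Iio (T i)) ≤ (i : ℝ≥0∞) * ENNReal.ofReal d ∧
      (∀ j, j < i → T j + d ≤ T (j+1))) := by
    intro i
    induction i with
    | zero =>
      intro _
      refine ⟨hEc.inter isClosed_Icc |>.csInf_mem hE'ne hE'bdd, ?_, by omega⟩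
      have : E' ∩ Set.Iio (T 0) = ∅ := by
        ext x
        simp only [Set.mem_inter_iff, Set.mem_Iio, Set.mem_empty_iff_false, iff_false, not_and]
        intro hx
        rw [hT0]
        exact not_lt.mpr (csInf_le hE'bdd hx)
      rw [this]
      simp
    | succ i ih =>
      intro hik
      obtain ⟨h1, h2, h3⟩ := ih (Nat.le_of_succ_le hik)
      set A := E' ∩ Set.Ici (T i + d) with hAdef
      have hmeas : volume (E' ∩ Set.Iio (T i + d)) ≤ ((i:ℝ≥0∞) + 1) * ENNReal.ofReal d := by
        have hsub : E' ∩ Set.Iio (T i + d) ⊆ (E' ∩ Set.Iio (T i)) ∪ Set.Ico (T i) (T i + d) := by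
          rintro x ⟨hx1, hx2⟩
          by_cases hx3 : x < T i
          · exact Or.inl ⟨hx1, hx3⟩
          · exact Or.inr ⟨not_lt.mp hx3, hx2⟩
        refine le_trans (measure_mono hsub) (le_trans (measure_union_le _ _) ?_)
        rw [Real.volume_Ico, add_one_mul]
        exact add_le_add h2 (by rw [add_sub_cancel_left])
      have hlt : ((i:ℝ≥0∞) + 1) * ENNReal.ofReal d < volume E' := by
        rw [hvol]
        calc ((i:ℝ≥0∞) + 1) * ENNReal.ofReal d ≤ (k:ℝ≥0∞) * ENNReal.ofReal d := by
              apply mul_le_mul_left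
              have : ((i:ℝ≥0∞) + 1) = ((i+1 : ℕ) : ℝ≥0∞) := by push_cast; ring
              rw [this]
              exact_mod_cast Nat.cast_le.mpr hik
          _ = ENNReal.ofReal ((k:ℝ) * d) := by
              rw [ENNReal.ofReal_mul (by positivity), ENNReal.ofReal_natCast]
          _ < ENNReal.ofReal m := ENNReal.ofReal_lt_ofReal_iff hm0 |>.mpr hkd
      have hAne : A.Nonempty := by
        rw [Set.nonempty_iff_ne_empty]
        intro hA
        have : E' ⊆ E' ∩ Set.Iio (T i + d) := by
          intro x hx
          refine ⟨hx, ?_⟩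
          by_contra hge
          have : x ∈ A := ⟨hx, Set.mem_Ici.mpr (not_lt.mp hge)⟩
          rw [hA] at this
          exact this
        exact absurd (lt_of_le_of_lt (le_trans (measure_mono this) hmeas) hlt) (lt_irrefl _)
      have hAc : IsClosed A := hE'c.inter isClosed_Ici
      have hAbdd : BddBelow A := bddBelow_Ici.mono Set.inter_subset_right
      have hmem : T (i+1) ∈ A := by
        rw [hTs i]
        exact hAc.csInf_mem hAne hAbdd
      refine ⟨hmem.1, ?_, ?_⟩
      · have hsub2 : E' ∩ Set.Iio (T (i+1)) ⊆ E' ∩ Set.Iio (T i + d) := by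
          rintro x ⟨hx1, hx2⟩
          refine ⟨hx1, ?_⟩
          by_contra hge
          have hxA : x ∈ A := ⟨hx1, Set.mem_Ici.mpr (not_lt.mp hge)⟩
          have : T (i+1) ≤ x := by rw [hTs i]; exact csInf_le hAbdd hxA
          exact absurd hx2 (not_lt.mpr this)
        push_cast
        exact le_trans (measure_mono hsub2) hmeas
      · intro j hj
        rcases Nat.lt_succ_iff_lt_or_eq.mp hj with h | h
        · exact h3 j h
        · subst h
          exact hmem.2
  -- gaps
  have hgap : ∀ q, q ≤ k → ∀ p, p < q → T p + ((q - p : ℕ):ℝ) * d ≤ T q := by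
    intro q
    induction q with
    | zero => omega
    | succ q ih =>
      intro hq p hp
      have hstep : T q + d ≤ T (q+1) := (key (q+1) hq).2.2 q (Nat.lt_succ_self q)
      rcases Nat.lt_succ_iff_lt_or_eq.mp hp with h | h
      · have := ih (Nat.le_of_succ_le hq) p h
        have hcast : ((q + 1 - p : ℕ):ℝ) = ((q - p : ℕ):ℝ) + 1 := by
          have : q + 1 - p = (q - p) + 1 := by omega
          rw [this]; push_cast; ring
        rw [hcast]
        linarith
      · subst h
        simpa using hstep
  have hTlt : ∀ i j, i < j → j ≤ k → T i < T j := by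
    intro i j hij hjk
    have := hgap j hjk i hij
    have hpos : (0:ℝ) < ((j - i : ℕ):ℝ) * d := by
      apply mul_pos _ hd0
      have : 0 < j - i := by omega
      exact_mod_cast this
    linarith
  -- divided differences
  obtain ⟨ξ, hξ⟩ := divdiff k f hf T hTlt
  have h1 : 1 ≤ (Nat.factorial k : ℝ) * ∑ i ∈ Finset.range (k+1), f (T i) *
      ∏ j ∈ (Finset.range (k+1)).erase i, (T i - T j)⁻¹ := hξ ▸ hfk ξ
  -- bound each term
  have hprod : ∀ i ∈ Finset.range (k+1),
      ((Nat.factorial i : ℝ) * (Nat.factorial (k-i))) * d^k ≤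
        ∏ j ∈ (Finset.range (k+1)).erase i, |T i - T j| := by
    intro i hi
    have hik : i ≤ k := Nat.lt_succ_iff.mp (Finset.mem_range.mp hi)
    have step : ∏ j ∈ (Finset.range (k+1)).erase i, (|(i:ℝ) - (j:ℝ)| * d) ≤
        ∏ j ∈ (Finset.range (k+1)).erase i, |T i - T j| := by
      apply Finset.prod_le_prod
      · intro j _; positivity
      · intro j hj
        have hjk : j ≤ k := Nat.lt_succ_iff.mp (Finset.mem_range.mp (Finset.mem_of_mem_erase hj))
        have hji : j ≠ i := Finset.ne_of_mem_erase hj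
        rcases lt_or_gt_of_ne hji with h | h
        · -- j < i
          have := hgap i hik j h
          have hc : |(i:ℝ) - (j:ℝ)| = ((i - j : ℕ):ℝ) := by
            rw [abs_of_nonneg]
            · rw [Nat.cast_sub h.le]
            · have : (j:ℝ) ≤ i := by exact_mod_cast h.le
              linarith
          rw [hc, abs_of_nonneg (by nlinarith [mul_pos (show (0:ℝ) < ((i-j:ℕ):ℝ) by exact_mod_cast Nat.sub_pos_of_lt h) hd0])]
          nlinarith [hgap i hik j h]
        · -- i < j
          have := hgap j hjk i h
          have hc : |(i:ℝ) - (j:ℝ)| = ((j - i : ℕ):ℝ) := by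
            rw [abs_of_nonpos]
            · rw [Nat.cast_sub h.le]; ring
            · have : (i:ℝ) ≤ j := by exact_mod_cast h.le
              linarith
          have habs : |T i - T j| = T j - T i := by
            rw [abs_of_nonpos]
            · ring
            · have := hTlt i j h hjk; linarith
          rw [hc, habs]
          nlinarith [hgap j hjk i h]
    calc ((Nat.factorial i : ℝ) * (Nat.factorial (k-i))) * d^k
        = (∏ j ∈ (Finset.range (k+1)).erase i, |(i:ℝ) - (j:ℝ)|) * d^k := by
          rw [prodAbs k i hik]
      _ = ∏ j ∈ (Finset.range (k+1)).erase i, (|(i:ℝ) - (j:ℝ)| * d) := by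
          rw [Finset.prod_mul_distrib, Finset.prod_const,
            Finset.card_erase_of_mem hi, Finset.card_range, Nat.add_sub_cancel]
      _ ≤ _ := step
  -- sum bound
  have hsum : (Nat.factorial k : ℝ) * ∑ i ∈ Finset.range (k+1), f (T i) *
      ∏ j ∈ (Finset.range (k+1)).erase i, (T i - T j)⁻¹ ≤ 2^k * ε / d^k := by
    have habs : (Nat.factorial k : ℝ) * ∑ i ∈ Finset.range (k+1), f (T i) *
        ∏ j ∈ (Finset.range (k+1)).erase i, (T i - T j)⁻¹ ≤
        ∑ i ∈ Finset.range (k+1), (Nat.factorial k : ℝ) *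
          (|f (T i)| * (∏ j ∈ (Finset.range (k+1)).erase i, |T i - T j|)⁻¹) := by
      rw [Finset.mul_sum]
      apply Finset.sum_le_sum
      intro i hi
      apply mul_le_mul_of_nonneg_left _ (by positivity)
      calc f (T i) * ∏ j ∈ (Finset.range (k+1)).erase i, (T i - T j)⁻¹
          ≤ |f (T i) * ∏ j ∈ (Finset.range (k+1)).erase i, (T i - T j)⁻¹| := le_abs_self _
        _ = |f (T i)| * (∏ j ∈ (Finset.range (k+1)).erase i, |T i - T j|)⁻¹ := by
            rw [abs_mul, Finset.abs_prod]
            congr 1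
            rw [← Finset.prod_inv_distrib]
            exact Finset.prod_congr rfl fun j _ => abs_inv _
    refine le_trans habs ?_
    have hterm : ∀ i ∈ Finset.range (k+1), (Nat.factorial k : ℝ) *
        (|f (T i)| * (∏ j ∈ (Finset.range (k+1)).erase i, |T i - T j|)⁻¹) ≤
        (k.choose i : ℝ) * ε / d^k := by
      intro i hi
      have hik : i ≤ k := Nat.lt_succ_iff.mp (Finset.mem_range.mp hi)
      have hfi : |f (T i)| ≤ ε := (key i hik).1.1
      have hppos : (0:ℝ) < ((Nat.factorial i : ℝ) * (Nat.factorial (k-i))) * d^k := by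
        positivity
      have hinv : (∏ j ∈ (Finset.range (k+1)).erase i, |T i - T j|)⁻¹ ≤
          (((Nat.factorial i : ℝ) * (Nat.factorial (k-i))) * d^k)⁻¹ :=
        inv_anti₀ hppos (hprod i hi)
      have hchoose : (k.choose i : ℝ) * ((Nat.factorial i : ℝ) * (Nat.factorial (k-i))) =
          (Nat.factorial k : ℝ) := by
        exact_mod_cast congrArg (Nat.cast (R := ℝ))
          (by rw [← Nat.choose_mul_factorial_mul_factorial hik]; ring)
      calc (Nat.factorial k : ℝ) *
          (|f (T i)| * (∏ j ∈ (Finset.range (k+1)).erase i, |T i - T j|)⁻¹)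
          ≤ (Nat.factorial k : ℝ) *
            (ε * (((Nat.factorial i : ℝ) * (Nat.factorial (k-i))) * d^k)⁻¹) := by
            apply mul_le_mul_of_nonneg_left _ (by positivity)
            apply mul_le_mul hfi hinv (by positivity) hε.le
        _ = (k.choose i : ℝ) * ε / d^k := by
            rw [← hchoose]
            field_simp
    refine le_trans (Finset.sum_le_sum hterm) ?_
    have : ∑ i ∈ Finset.range (k+1), (k.choose i : ℝ) * ε / d^k =
        (∑ i ∈ Finset.range (k+1), (k.choose i : ℝ)) * ε / d^k := by
      rw [Finset.sum_mul, Finset.sum_div]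
    rw [this]
    have hch : ∑ i ∈ Finset.range (k+1), (k.choose i : ℝ) = 2^k := by
      rw [← Nat.cast_sum]
      rw [Nat.sum_range_choose]
      push_cast; ring
    rw [hch]
  -- conclude
  have hdk : d^k ≤ 2^k * ε := by
    have h2 : 1 ≤ 2^k * ε / d^k := le_trans h1 hsum
    have hdkpos : (0:ℝ) < d^k := by positivity
    rw [le_div_iff₀ hdkpos] at h2
    linarith
  have hd2 : d / 2 ≤ ε ^ (1 / (k:ℝ)) := by
    have hbase : (d/2)^k ≤ ε := by
      rw [div_pow]
      rw [div_le_iff₀ (by positivity)]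
      linarith
    have : d/2 = ((d/2)^k) ^ (1 / (k:ℝ)) := by
      rw [← Real.rpow_natCast (d/2) k, ← Real.rpow_mul (by positivity), mul_one_div,
        div_self (by exact_mod_cast hk.ne' : (k:ℝ) ≠ 0), Real.rpow_one]
    rw [this]
    exact Real.rpow_le_rpow (by positivity) hbase (by positivity)
  linarith



/-- **Sublevel set estimate (van der Corput type).**  Let `μ` be an absolutely
continuous finite positive Borel measure on `ℝ` with a bounded density `ρ`, let
`k ∈ ℕ` and let `f ∈ C^∞(ℝ)` satisfy `f^{(k)}(t) ≥ 1` for all `t`.  Then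
`μ({t : |f(t)| ≤ ε}) ≤ 8 e k ‖ρ‖_∞ ε^{1/k}` for every `ε > 0`. -/
theorem sublevel_bound (μ : Measure ℝ) (hfin : IsFiniteMeasure μ) (ρ : ℝ → ℝ)
    (hρ0 : ∀ x, 0 ≤ ρ x)
    (hd : μ = volume.withDensity fun x => ENNReal.ofReal (ρ x))
    (hbdd : ∃ M : ℝ, ∀ᵐ x ∂(volume : Measure ℝ), ρ x ≤ M)
    (k : ℕ) (hk : 0 < k) (f : ℝ → ℝ) (hf : ContDiff ℝ (⊤ : ℕ∞) f)
    (hfk : ∀ t : ℝ, 1 ≤ iteratedDeriv k f t) (ε : ℝ) (hε : 0 < ε) :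
    (μ {t : ℝ | |f t| ≤ ε}).toReal ≤
      8 * Real.exp 1 * k * essSup (fun x => |ρ x|) (volume : Measure ℝ) *
        ε ^ (1 / (k : ℝ)) := by
  set E := {t : ℝ | |f t| ≤ ε} with hE
  have hf' : ContDiff ℝ (⊤ : ℕ∞) f := hf.of_le (by simp)
  have hvol := vol_sublevel k hk f hf' hfk ε hε
  have hEc : IsClosed E := isClosed_le (continuous_abs.comp hf'.continuous) continuous_const
  have hEm : MeasurableSet E := hEc.measurableSet
  set M := essSup (fun x => |ρ x|) (volume : Measure ℝ) with hM
  obtain ⟨M₀, hM₀⟩ := hbdd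
  have hMb : Filter.IsBoundedUnder (· ≤ ·) (ae (volume : Measure ℝ)) (fun x => |ρ x|) := by
    refine ⟨M₀, ?_⟩
    rw [Filter.eventually_map]
    filter_upwards [hM₀] with x hx
    rwa [abs_of_nonneg (hρ0 x)]
  have hae : ∀ᵐ x ∂(volume : Measure ℝ), |ρ x| ≤ M := ae_le_essSup hMb
  have hvol_ne : (volume : Measure ℝ) ≠ 0 := by
    intro h
    have h1 : volume (Set.Icc (0:ℝ) 1) = ENNReal.ofReal 1 := by
      rw [Real.volume_Icc]; norm_num
    rw [h] at h1
    simp at h1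
  haveI : (ae (volume : Measure ℝ)).NeBot := ae_neBot.mpr hvol_ne
  have hM0 : 0 ≤ M := by
    obtain ⟨x, hx⟩ := hae.exists
    exact le_trans (abs_nonneg _) hx
  have hrpos : (0:ℝ) < ε ^ (1 / (k:ℝ)) := Real.rpow_pos_of_pos hε _
  have hmain : μ E ≤ ENNReal.ofReal (M * (2 * k * ε ^ (1 / (k:ℝ)))) := by
    rw [hd, withDensity_apply _ hEm]
    calc ∫⁻ x in E, ENNReal.ofReal (ρ x) ∂volume
        ≤ ∫⁻ _ in E, ENNReal.ofReal M ∂volume := by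
          apply lintegral_mono_ae
          filter_upwards [ae_restrict_of_ae hae] with x hx
          exact ENNReal.ofReal_le_ofReal (le_trans (le_abs_self _) hx)
      _ = ENNReal.ofReal M * volume E := setLIntegral_const E _
      _ ≤ ENNReal.ofReal M * ENNReal.ofReal (2 * k * ε ^ (1 / (k:ℝ))) :=
          mul_le_mul_right hvol _
      _ = ENNReal.ofReal (M * (2 * k * ε ^ (1 / (k:ℝ)))) := by
          rw [ENNReal.ofReal_mul hM0]
  have h1 : (μ E).toReal ≤ M * (2 * k * ε ^ (1 / (k:ℝ))) := by
    have := ENNReal.toReal_mono ENNReal.ofReal_ne_top hmain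
    rwa [ENNReal.toReal_ofReal (by positivity)] at this
  have h2e : (2:ℝ) ≤ Real.exp 1 := by
    have := Real.add_one_le_exp 1
    linarith
  have hk' : (0:ℝ) < k := by exact_mod_cast hk
  refine le_trans h1 ?_
  nlinarith [mul_nonneg (mul_nonneg hM0 hk'.le) hrpos.le,
    mul_nonneg (mul_nonneg (mul_nonneg hM0 hk'.le) hrpos.le) (le_trans (by norm_num) h2e)]
end
end
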